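/- arXiv:math/0602575 — 5 statements merged into one kernel-verified Lean document; each statement's English description precedes it below -/
import Mathlib

section
/- Counting rooted forests of a simple graph (cofactor form). For any finite simple graph G on n vertices and any vertices i, j, the cofactor of the (i,j) entry of the matrix W = I + L(G) equals the number of spanning rooted forests of G in which the vertices i and j belong to the same tree and that tree is rooted at i. -/
open scoped Classical

/-- The Laplacian (Kirchhoff) matrix of a weighted graph on vertex set `α` with
symmetric edge weights `ε`: `ℓ i j = -ε i j` for `j ≠ i`, and `ℓ i i = ∑_{k ≠ i} ε i k`. -/
noncomputable def lap {α : Type*} [Fintype α] [DecidableEq α]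
    (ε : α → α → ℝ) : Matrix α α ℝ :=
  Matrix.of fun i j =>
    if i = j then ∑ k ∈ Finset.univ.erase i, ε i k else - ε i j

/-- The weight of a set of (undirected) edges: the product of the edge weights. -/
noncomputable def edgeWt {α : Type*} (ε : α → α → ℝ) (hsym : ∀ a b, ε a b = ε b a)
    (F : Finset (Sym2 α)) : ℝ :=
  ∏ e ∈ F, Sym2.lift ⟨ε, hsym⟩ e

/-- `(F, R)` is a spanning rooted forest: the edges of `F` join distinct vertices, the
spanning subgraph with edge set `F` contains no cycles, and `R` contains exactly one
vertex (the root) from each connected component. -/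
def IsRootedSpanningForest {α : Type*} [Fintype α] [DecidableEq α]
    (F : Finset (Sym2 α)) (R : Finset α) : Prop :=
  (∀ e ∈ F, ¬ e.IsDiag) ∧
  (SimpleGraph.fromEdgeSet (↑F : Set (Sym2 α))).IsAcyclic ∧
  ∀ v : α, ∃! r, r ∈ R ∧ (SimpleGraph.fromEdgeSet (↑F : Set (Sym2 α))).Reachable v r

/-- The cofactor of the `(i,j)` entry of `M`: `(-1)^(i+j)` times the determinant of the
matrix obtained from `M` by deleting row `i` and column `j`. -/
noncomputable def cofactor {m : ℕ} (M : Matrix (Fin (m + 1)) (Fin (m + 1)) ℝ)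
    (i j : Fin (m + 1)) : ℝ :=
  (-1 : ℝ) ^ ((i : ℕ) + (j : ℕ)) * (M.submatrix i.succAbove j.succAbove).det

namespace MFTaux
open Matrix SimpleGraph Finset

variable {n : ℕ}

/-- indicator row -/
def dl (v : Fin (n+1)) : Fin (n+1) → ℝ := fun w => if w = v then 1 else 0

def rrow (e : Sym2 (Fin (n+1))) (v : Fin (n+1)) : Fin (n+1) → ℝ :=
  fun w => (if w = v ∧ v ∈ e then 1 else 0) - (if s(v,w) = e then 1 else 0)

def g (i j v : Fin (n+1)) : Option (Sym2 (Fin (n+1))) → (Fin (n+1) → ℝ)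
  | none => if v = i then dl j else dl v
  | some e => rrow e v

noncomputable def B (i j : Fin (n+1)) (f : Fin (n+1) → Option (Sym2 (Fin (n+1)))) :
    Matrix (Fin (n+1)) (Fin (n+1)) ℝ := Matrix.of fun v => g i j v (f v)

noncomputable def step (f : Fin (n+1) → Option (Sym2 (Fin (n+1)))) :
    Fin (n+1) → Fin (n+1) := fun v =>
  match f v with
  | none => v
  | some e => if h : v ∈ e then Sym2.Mem.other' h else v

noncomputable def Achoice (G : SimpleGraph (Fin (n+1))) [DecidableRel G.Adj] (i : Fin (n+1)) :
    Fin (n+1) → Finset (Option (Sym2 (Fin (n+1)))) := fun v =>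
  if v = i then {none} else insert none (G.edgeFinset.map ⟨some, Option.some_injective _⟩)

theorem cofactor_eq (M : Matrix (Fin (n+1)) (Fin (n+1)) ℝ) (i j : Fin (n+1)) :
    cofactor M i j = (M.updateRow i (dl j)).det := by
  rw [Matrix.det_succ_row _ i]
  rw [Finset.sum_eq_single j]
  · have h1 : M.updateRow i (dl j) i j = 1 := by simp [Matrix.updateRow_apply, dl]
    have h2 : (M.updateRow i (dl j)).submatrix i.succAbove j.succAbove
        = M.submatrix i.succAbove j.succAbove := by
      ext a b
      simp [Matrix.submatrix_apply, Matrix.updateRow_apply, Fin.succAbove_ne i a]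
    rw [h1, h2, cofactor]
    ring
  · intro b _ hb
    have : M.updateRow i (dl j) i b = 0 := by simp [Matrix.updateRow_apply, dl, hb]
    rw [this]; ring
  · intro h; exact absurd (Finset.mem_univ j) h

theorem row_decomp (G : SimpleGraph (Fin (n+1))) [DecidableRel G.Adj] (i j v : Fin (n+1)) :
    ((1 + G.lapMatrix ℝ).updateRow i (dl j)) v = ∑ c ∈ Achoice G i v, g i j v c := by
  by_cases hv : v = i
  · subst hv
    rw [Matrix.updateRow_self]
    simp [Achoice, g]
  · rw [Matrix.updateRow_ne hv]
    rw [Achoice, if_neg hv]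
    rw [Finset.sum_insert (by simp)]
    rw [Finset.sum_map]
    ext w
    simp only [Finset.sum_apply, Pi.add_apply, g, if_neg hv]
    have hsum2 : ∑ e ∈ G.edgeFinset, rrow e v w
        = (if w = v then (G.degree v : ℝ) else 0) - (if G.Adj v w then 1 else 0) := by
      simp only [rrow]
      rw [Finset.sum_sub_distrib]
      congr 1
      · by_cases hw : w = v
        · subst hw
          simp only [true_and, if_pos rfl]
          rw [Finset.sum_boole]
          rw [Finset.filter_congr (fun e he => Iff.rfl)]
          have : G.edgeFinset.filter (fun e => w ∈ e) = G.incidenceFinset w := by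
            rw [incidenceFinset_eq_filter]
          rw [this]
          rw [card_incidenceFinset_eq_degree]
          simp
        · simp [hw]
      · rw [Finset.sum_ite_eq G.edgeFinset (s(v,w)) (fun _ => (1:ℝ))]
        by_cases ha : G.Adj v w
        · rw [if_pos, if_pos ha]; rwa [SimpleGraph.mem_edgeFinset, SimpleGraph.mem_edgeSet]
        · rw [if_neg, if_neg ha]; rw [SimpleGraph.mem_edgeFinset, SimpleGraph.mem_edgeSet]; exact ha
    simp only [Function.Embedding.coeFn_mk]
    rw [hsum2]
    simp only [Matrix.add_apply, Matrix.one_apply, SimpleGraph.lapMatrix, Matrix.sub_apply,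
      SimpleGraph.degMatrix, Matrix.diagonal_apply, SimpleGraph.adjMatrix_apply, dl]
    by_cases hw : v = w
    · subst hw; simp
    · simp [hw, Ne.symm hw]

theorem det_expand (G : SimpleGraph (Fin (n+1))) [DecidableRel G.Adj] (i j : Fin (n+1)) :
    ((1 + G.lapMatrix ℝ).updateRow i (dl j)).det
      = ∑ f ∈ Fintype.piFinset (Achoice G i), (B i j f).det := by
  have h : ((1 + G.lapMatrix ℝ).updateRow i (dl j)).det
      = (Matrix.detRowAlternating :
          AlternatingMap ℝ (Fin (n+1) → ℝ) ℝ (Fin (n+1))).toMultilinearMap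
          (fun v => ∑ c ∈ Achoice G i v, g i j v c) := by
    rw [← funext (row_decomp G i j)]
    rfl
  rw [h, MultilinearMap.map_sum_finset]
  rfl


/-! ### Row and step lemmas -/

section Rows
variable {i j : Fin (n+1)} {f : Fin (n+1) → Option (Sym2 (Fin (n+1)))}

theorem step_none {v : Fin (n+1)} (h : f v = none) : step f v = v := by
  simp [step, h]

theorem step_fix_of_none {v : Fin (n+1)} (h : f v = none) (m : ℕ) :
    (step f)^[m] v = v :=
  Function.iterate_fixed (step_none h) m

theorem step_spec {v : Fin (n+1)} {e : Sym2 (Fin (n+1))} (h : f v = some e) (hv : v ∈ e) :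
    s(v, step f v) = e := by
  simp only [step, h]
  rw [dif_pos hv]
  exact Sym2.other_spec' hv

theorem step_ne {v : Fin (n+1)} {e : Sym2 (Fin (n+1))} (h : f v = some e) (hv : v ∈ e)
    (hd : ¬ e.IsDiag) : step f v ≠ v := by
  simp only [step, h]
  rw [dif_pos hv]
  rw [← Sym2.other_eq_other' hv]
  exact Sym2.other_ne hd hv

theorem B_row_i (hfi : f i = none) : B i j f i = dl j := by
  show g i j i (f i) = dl j
  rw [hfi]; simp [g]

theorem B_row_none {v : Fin (n+1)} (hv : v ≠ i) (h : f v = none) : B i j f v = dl v := by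
  show g i j v (f v) = dl v
  rw [h]; simp [g, hv]

theorem B_row_some {v : Fin (n+1)} {e : Sym2 (Fin (n+1))} (h : f v = some e)
    (hv : v ∈ e) (hd : ¬ e.IsDiag) :
    B i j f v = fun w => dl v w - dl (step f v) w := by
  have hspec := step_spec h hv
  have hne := step_ne h hv hd
  show g i j v (f v) = _
  rw [h]
  funext w
  simp only [g, rrow, dl]
  congr 1
  · by_cases hw : w = v
    · simp [hw, hv]
    · simp [hw]
  · by_cases hw : w = step f v
    · subst hw; rw [if_pos rfl, if_pos]; rw [hspec]
    · rw [if_neg hw, if_neg]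
      intro hc
      rw [← hspec] at hc
      exact hw (Sym2.congr_right.mp hc)

theorem vecMul_ind (M : Matrix (Fin (n+1)) (Fin (n+1)) ℝ) (a : Fin (n+1)) :
    Matrix.vecMul (dl a) M = M a := by
  funext w
  simp only [Matrix.vecMul, dotProduct, dl, ite_mul, one_mul, zero_mul]
  simp

theorem vecMul_orbit (M : Matrix (Fin (n+1)) (Fin (n+1)) ℝ) (k : ℕ) (orb : ℕ → Fin (n+1)) :
    Matrix.vecMul (fun u => ∑ m ∈ Finset.range k, if u = orb m then (1:ℝ) else 0) M
      = fun w => ∑ m ∈ Finset.range k, M (orb m) w := by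
  funext w
  simp only [Matrix.vecMul, dotProduct, Finset.sum_mul, ite_mul, one_mul, zero_mul]
  rw [Finset.sum_comm]
  refine Finset.sum_congr rfl fun m _ => ?_
  simp

/-- duplicate edge assignment kills the determinant -/
theorem det_zero_of_dup {v v' : Fin (n+1)} {e : Sym2 (Fin (n+1))}
    (hvv' : v ≠ v') (h : f v = some e) (h' : f v' = some e) (hv : v ∈ e) (hv' : v' ∈ e)
    (hd : ¬ e.IsDiag) : (B i j f).det = 0 := by
  have he : e = s(v, v') := (Sym2.mem_and_mem_iff hvv').mp ⟨hv, hv'⟩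
  have hsv : step f v = v' := by
    have := step_spec h hv
    rw [he] at this
    exact Sym2.congr_right.mp this
  have hsv' : step f v' = v := by
    have h1 := step_spec h' hv'
    have h2 : s(v', step f v') = s(v', v) := by rw [h1, he, Sym2.eq_swap]
    exact Sym2.congr_right.mp h2
  have hrv := B_row_some (i := i) (j := j) h hv hd
  have hrv' := B_row_some (i := i) (j := j) h' hv' hd
  have hdet : (B i j f).det = ((B i j f).updateRow v' ((B i j f) v' + (1:ℝ) • (B i j f) v)).det :=
    (Matrix.det_updateRow_add_smul_self _ (Ne.symm hvv') (1:ℝ)).symm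
  rw [hdet]
  apply Matrix.det_eq_zero_of_row_eq_zero v'
  intro w
  rw [Matrix.updateRow_self]
  simp only [one_smul, Pi.add_apply, hrv, hrv', hsv, hsv']
  ring

/-- an unassigned-membership row is a zero row -/
theorem det_zero_of_nonmem {v : Fin (n+1)} {e : Sym2 (Fin (n+1))}
    (hvi : v ≠ i) (h : f v = some e) (hv : v ∉ e) : (B i j f).det = 0 := by
  apply Matrix.det_eq_zero_of_row_eq_zero v
  intro w
  show g i j v (f v) w = 0
  rw [h]
  simp only [g, rrow]
  rw [if_neg (fun hc => hv hc.2), if_neg (fun hc => hv (by rw [← hc]; exact Sym2.mem_mk_left v w))]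
  ring

end Rows


/-! ### Cycles and dependence -/

section Zero
variable {i j : Fin (n+1)} {f : Fin (n+1) → Option (Sym2 (Fin (n+1)))}

/-- orbit telescoping sum kills the determinant when there is a pointer cycle -/
theorem det_zero_of_cycle (hfi : f i = none)
    (hmem : ∀ v e, f v = some e → e ∈ Finset.univ ∧ v ∈ e ∧ ¬ e.IsDiag)
    {v : Fin (n+1)} {k : ℕ} (hk : 0 < k) (hcyc : (step f)^[k] v = v)
    (hsv : step f v ≠ v) : (B i j f).det = 0 := by
  -- every orbit element is a non-sink
  have hper : ∀ t, (step f)^[k*t] v = v := by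
    intro t
    induction t with
    | zero => simp
    | succ t ih =>
      rw [Nat.mul_succ, Function.iterate_add_apply, hcyc, ih]
  have horb : ∀ m, f ((step f)^[m] v) ≠ none := by
    intro m hnone
    have hfix : ∀ t, (step f)^[t] ((step f)^[m] v) = (step f)^[m] v :=
      fun t => step_fix_of_none hnone t
    have hv : v = (step f)^[m] v := by
      have h1 : (step f)^[k*m - m] ((step f)^[m] v) = v := by
        rw [← Function.iterate_add_apply, show k*m - m + m = k*m by
          have : m ≤ k*m := Nat.le_mul_of_pos_left m hk
          omega]
        exact hper m
      rw [hfix (k*m - m)] at h1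
      exact h1.symm
    rw [← hv] at hnone
    exact hsv (step_none hnone)
  -- rows along the orbit
  have hrow : ∀ m, (B i j f) ((step f)^[m] v)
      = fun w => dl ((step f)^[m] v) w - dl ((step f)^[m+1] v) w := by
    intro m
    obtain ⟨e, he⟩ : ∃ e, f ((step f)^[m] v) = some e := by
      cases hfe : f ((step f)^[m] v) with
      | none => exact absurd hfe (horb m)
      | some e => exact ⟨e, rfl⟩
    obtain ⟨-, hmm, hd⟩ := hmem _ _ he
    rw [Function.iterate_succ_apply']
    exact B_row_some he hmm hd
  -- the dependence vector
  rw [← Matrix.exists_vecMul_eq_zero_iff]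
  refine ⟨fun u => ∑ m ∈ Finset.range k, if u = (step f)^[m] v then (1:ℝ) else 0, ?_, ?_⟩
  · intro hzero
    have h0 : (0:ℝ) < ∑ m ∈ Finset.range k, if v = (step f)^[m] v then (1:ℝ) else 0 := by
      have : ∀ m ∈ Finset.range k, (0:ℝ) ≤ if v = (step f)^[m] v then (1:ℝ) else 0 := by
        intro m _; positivity
      refine lt_of_lt_of_le ?_ (Finset.single_le_sum this (Finset.mem_range.mpr hk))
      simp
    rw [congrFun hzero v] at h0
    exact lt_irrefl 0 h0
  · rw [vecMul_orbit]
    funext w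
    have : ∀ m ∈ Finset.range k, (B i j f) ((step f)^[m] v) w
        = dl ((step f)^[m] v) w - dl ((step f)^[m+1] v) w := fun m _ => by rw [hrow m]
    rw [Finset.sum_congr rfl this, Finset.sum_range_sub' (fun m => dl ((step f)^[m] v) w) k]
    simp [hcyc]

end Zero


section Zero2
variable {i j : Fin (n+1)} {f : Fin (n+1) → Option (Sym2 (Fin (n+1)))}

/-- if the pointer path from `j` ends in a sink other than `i`,
the rows are linearly dependent -/
theorem det_zero_of_wrong_sink (hfi : f i = none)
    (hmem : ∀ v e, f v = some e → v ∈ e ∧ ¬ e.IsDiag)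
    {k : ℕ} (hk : ∀ m < k, f ((step f)^[m] j) ≠ none)
    (hr : f ((step f)^[k] j) = none) (hri : (step f)^[k] j ≠ i) :
    (B i j f).det = 0 := by
  set r := (step f)^[k] j with hrdef
  have horbne : ∀ m < k, (step f)^[m] j ≠ i := by
    intro m hm hc
    exact hk m hm (by rw [hc]; exact hfi)
  have hrow : ∀ m < k, (B i j f) ((step f)^[m] j)
      = fun w => dl ((step f)^[m] j) w - dl ((step f)^[m+1] j) w := by
    intro m hm
    obtain ⟨e, he⟩ : ∃ e, f ((step f)^[m] j) = some e := by
      cases hfe : f ((step f)^[m] j) with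
      | none => exact absurd hfe (hk m hm)
      | some e => exact ⟨e, rfl⟩
    obtain ⟨hmm, hd⟩ := hmem _ _ he
    rw [Function.iterate_succ_apply']
    exact B_row_some he hmm hd
  rw [← Matrix.exists_vecMul_eq_zero_iff]
  refine ⟨(fun u => if u = i then (1:ℝ) else 0)
      - (fun u => ∑ m ∈ Finset.range k, if u = (step f)^[m] j then (1:ℝ) else 0)
      - (fun u => if u = r then (1:ℝ) else 0), ?_, ?_⟩
  · intro hzero
    have h0 := congrFun hzero i
    simp only [Pi.sub_apply, Pi.zero_apply] at h0
    have hsum : (∑ m ∈ Finset.range k, if i = (step f)^[m] j then (1:ℝ) else 0) = 0 := by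
      apply Finset.sum_eq_zero
      intro m hm
      rw [if_neg (fun h => horbne m (Finset.mem_range.mp hm) h.symm)]
    rw [hsum, if_neg (fun h : i = r => hri h.symm)] at h0
    norm_num at h0
  · have e1 : Matrix.vecMul (fun u => if u = i then (1:ℝ) else 0) (B i j f) = dl j := by
      show Matrix.vecMul (dl i) _ = _
      rw [vecMul_ind, B_row_i hfi]
    have e3 : Matrix.vecMul (fun u => if u = r then (1:ℝ) else 0) (B i j f) = dl r := by
      show Matrix.vecMul (dl r) _ = _
      rw [vecMul_ind, B_row_none hri hr]
    have e2 : Matrix.vecMul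
        (fun u => ∑ m ∈ Finset.range k, if u = (step f)^[m] j then (1:ℝ) else 0) (B i j f)
        = fun w => dl j w - dl r w := by
      rw [vecMul_orbit]
      funext w
      have : ∀ m ∈ Finset.range k, (B i j f) ((step f)^[m] j) w
          = dl ((step f)^[m] j) w - dl ((step f)^[m+1] j) w :=
        fun m hm => by rw [hrow m (Finset.mem_range.mp hm)]
      rw [Finset.sum_congr rfl this, Finset.sum_range_sub' (fun m => dl ((step f)^[m] j) w) k]
      simp [hrdef]
    rw [Matrix.sub_vecMul, Matrix.sub_vecMul, e1, e2, e3]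
    funext w
    simp
end Zero2

/-! ### eventual sinks -/

section Sink
variable {f : Fin (n+1) → Option (Sym2 (Fin (n+1)))}

/-- Noncirc: no nontrivial pointer cycles -/
def Noncirc (f : Fin (n+1) → Option (Sym2 (Fin (n+1)))) : Prop :=
  ∀ v k, 0 < k → (step f)^[k] v = v → f v = none

theorem sink_exists (hnc : Noncirc f) (v : Fin (n+1)) :
    ∃ m, f ((step f)^[m] v) = none := by
  obtain ⟨a, ha, b, hb, hab, heq⟩ :
      ∃ a ∈ Finset.range (n+2), ∃ b ∈ Finset.range (n+2), a ≠ b ∧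
        (step f)^[a] v = (step f)^[b] v := by
    have h := Finset.exists_ne_map_eq_of_card_lt_of_maps_to
      (s := Finset.range (n+2)) (t := (Finset.univ : Finset (Fin (n+1))))
      (by simp) (fun m _ => Finset.mem_univ ((step f)^[m] v))
    obtain ⟨a, ha, b, hb, hab, heq⟩ := h
    exact ⟨a, ha, b, hb, hab, heq⟩
  rcases Nat.lt_or_ge a b with h | h
  · refine ⟨a, hnc _ (b - a) (by omega) ?_⟩
    rw [← Function.iterate_add_apply, show b - a + a = b by omega]
    exact heq.symm
  · have h' : b < a := by omega
    refine ⟨b, hnc _ (a - b) (by omega) ?_⟩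
    rw [← Function.iterate_add_apply, show a - b + b = a by omega]
    exact heq

end Sink


/-! ### graph side -/

section Graph
variable {i j : Fin (n+1)} {f : Fin (n+1) → Option (Sym2 (Fin (n+1)))}

noncomputable def Ff (G : SimpleGraph (Fin (n+1))) [DecidableRel G.Adj]
    (f : Fin (n+1) → Option (Sym2 (Fin (n+1)))) : Finset (Sym2 (Fin (n+1))) :=
  G.edgeFinset.filter fun e => ∃ v, f v = some e

noncomputable def Rf (f : Fin (n+1) → Option (Sym2 (Fin (n+1)))) : Finset (Fin (n+1)) :=
  Finset.univ.filter fun v => f v = none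

structure Good (G : SimpleGraph (Fin (n+1))) [DecidableRel G.Adj] (i j : Fin (n+1))
    (f : Fin (n+1) → Option (Sym2 (Fin (n+1)))) : Prop where
  hi : f i = none
  mem : ∀ v e, f v = some e → e ∈ G.edgeFinset ∧ v ∈ e
  inj : ∀ v w e, f v = some e → f w = some e → v = w
  nc : Noncirc f
  reach : (SimpleGraph.fromEdgeSet (↑(Ff G f) : Set (Sym2 (Fin (n+1))))).Reachable i j

/-- each edge of the graph is assigned by `f` to one of its endpoints -/
theorem chain {H : SimpleGraph (Fin (n+1))}
    (hassign : ∀ a b, H.Adj a b → ∃ u, (u = a ∨ u = b) ∧ f u = some s(a,b))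
    {a b : Fin (n+1)} (w : H.Walk a b) :
    w.IsPath → (∀ e ∈ w.edges, f a ≠ some e) → a ≠ b →
      f b = some s(b, w.getVert (w.length - 1)) := by
  induction w with
  | nil => intro _ _ hab; exact absurd rfl hab
  | @cons a c b h w' ih =>
    intro hp hcond hab
    have hedge : s(a,c) ∈ (SimpleGraph.Walk.cons h w').edges := by simp
    obtain ⟨u, hu, hfu⟩ := hassign a c h
    have hfc : f c = some s(a,c) := by
      rcases hu with rfl | rfl
      · exact absurd hfu (hcond _ hedge)
      · exact hfu
    by_cases hcb : c = b
    · subst hcb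
      have hnil : w' = SimpleGraph.Walk.nil := SimpleGraph.Walk.isPath_iff_eq_nil.mp hp.of_cons
      subst hnil
      simp only [SimpleGraph.Walk.length_cons, SimpleGraph.Walk.length_nil, Nat.zero_add,
        Nat.sub_self, SimpleGraph.Walk.getVert_zero]
      rw [hfc, Sym2.eq_swap]
    · have hp' := hp.of_cons
      have hnodup : s(a,c) ∉ w'.edges := by
        have h1 := hp.isTrail.edges_nodup
        rw [SimpleGraph.Walk.edges_cons] at h1
        exact (List.nodup_cons.mp h1).1
      have hcond' : ∀ e ∈ w'.edges, f c ≠ some e := by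
        intro e he hc
        rw [hfc] at hc
        obtain rfl := (Option.some.injEq _ _ ▸ hc : s(a,c) = e)
        exact hnodup he
      have hres := ih hp' hcond' hcb
      have hlen : w'.length ≠ 0 := fun h0 =>
        hcb (SimpleGraph.Walk.eq_of_length_eq_zero h0)
      obtain ⟨t, ht⟩ : ∃ t, w'.length = t + 1 := ⟨w'.length - 1, by omega⟩
      rw [hres]
      congr 2
      rw [SimpleGraph.Walk.length_cons, ht]
      simp only [Nat.add_sub_cancel]
      rw [SimpleGraph.Walk.getVert_cons_succ]

theorem sink_unique {H : SimpleGraph (Fin (n+1))}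
    (hassign : ∀ a b, H.Adj a b → ∃ u, (u = a ∨ u = b) ∧ f u = some s(a,b))
    {r1 r2 : Fin (n+1)} (h1 : f r1 = none) (h2 : f r2 = none)
    (hre : H.Reachable r1 r2) : r1 = r2 := by
  by_contra hne
  obtain ⟨w⟩ := hre
  have hchain := chain hassign w.toPath.1 w.toPath.2 (fun e _ => by simp [h1]) hne
  rw [h2] at hchain
  exact nomatch hchain

variable (G : SimpleGraph (Fin (n+1))) [DecidableRel G.Adj]

theorem good_assign (hmem : ∀ v e, f v = some e → e ∈ G.edgeFinset ∧ v ∈ e) :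
    ∀ a b, (SimpleGraph.fromEdgeSet (↑(Ff G f) : Set (Sym2 (Fin (n+1))))).Adj a b →
      ∃ u, (u = a ∨ u = b) ∧ f u = some s(a,b) := by
  intro a b hadj
  rw [SimpleGraph.fromEdgeSet_adj] at hadj
  obtain ⟨hmem2, hne⟩ := hadj
  obtain ⟨hE, u, hu⟩ := Finset.mem_filter.mp hmem2
  refine ⟨u, ?_, hu⟩
  have := (hmem u _ hu).2
  rwa [Sym2.mem_iff] at this

theorem adj_step (hmem : ∀ v e, f v = some e → e ∈ G.edgeFinset ∧ v ∈ e)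
    {v : Fin (n+1)} {e : Sym2 (Fin (n+1))} (h : f v = some e) :
    (SimpleGraph.fromEdgeSet (↑(Ff G f) : Set (Sym2 (Fin (n+1))))).Adj v (step f v) := by
  obtain ⟨hE, hv⟩ := hmem v e h
  have hd : ¬ e.IsDiag := G.not_isDiag_of_mem_edgeSet (SimpleGraph.mem_edgeFinset.mp hE)
  rw [SimpleGraph.fromEdgeSet_adj]
  refine ⟨?_, Ne.symm (step_ne h hv hd)⟩
  rw [step_spec h hv]
  exact Finset.mem_coe.mpr (Finset.mem_filter.mpr ⟨hE, v, h⟩)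

theorem step_reach (hmem : ∀ v e, f v = some e → e ∈ G.edgeFinset ∧ v ∈ e)
    (v : Fin (n+1)) (m : ℕ) :
    (SimpleGraph.fromEdgeSet (↑(Ff G f) : Set (Sym2 (Fin (n+1))))).Reachable
      v ((step f)^[m] v) := by
  induction m with
  | zero => exact SimpleGraph.Reachable.refl v
  | succ m ih =>
    rw [Function.iterate_succ_apply']
    cases hfe : f ((step f)^[m] v) with
    | none => rw [step_none hfe]; exact ih
    | some e => exact ih.trans (adj_step G hmem hfe).reachable

end Graph


section Forward
variable {i j : Fin (n+1)} {f : Fin (n+1) → Option (Sym2 (Fin (n+1)))}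
variable (G : SimpleGraph (Fin (n+1))) [DecidableRel G.Adj]

theorem mem_support_of_mem_edges'' {H : SimpleGraph (Fin (n+1))} {a b : Fin (n+1)}
    {p : H.Walk a b} {e : Sym2 (Fin (n+1))} (he : e ∈ p.edges) {u : Fin (n+1)}
    (hu : u ∈ e) : u ∈ p.support := by
  induction e with
  | _ x y =>
    rcases Sym2.mem_iff.mp hu with rfl | rfl
    · exact p.fst_mem_support_of_mem_edges he
    · exact p.snd_mem_support_of_mem_edges he

theorem good_acyclic (hG : Good G i j f) :
    (SimpleGraph.fromEdgeSet (↑(Ff G f) : Set (Sym2 (Fin (n+1))))).IsAcyclic := by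
  intro v c hc
  cases c with
  | nil => exact SimpleGraph.Walk.IsCycle.not_of_nil hc
  | @cons _ b _ hadj q =>
  set c := SimpleGraph.Walk.cons hadj q with hcdef
  have hedge_mem : ∀ e ∈ c.edges.toFinset, ∃ u, f u = some e := by
    intro e he
    rw [List.mem_toFinset] at he
    have h1 := c.edges_subset_edgeSet he
    rw [SimpleGraph.edgeSet_fromEdgeSet] at h1
    obtain ⟨h2, -⟩ := h1
    exact (Finset.mem_filter.mp (Finset.mem_coe.mp h2)).2
  have htailnodup : c.support.tail.Nodup := ((SimpleGraph.Walk.isCycle_def c).mp hc).2.2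
  have htail : c.support.tail = q.support := by
    rw [hcdef, SimpleGraph.Walk.support_cons, List.tail_cons]
  have hvtail : v ∈ c.support.tail := by
    rw [htail]; exact q.end_mem_support
  have hsupEq : c.support.toFinset = c.support.tail.toFinset := by
    conv_lhs => rw [c.support_eq_cons]
    rw [List.toFinset_cons]
    exact Finset.insert_eq_self.mpr (List.mem_toFinset.mpr hvtail)
  have hcards : c.support.toFinset.card = c.edges.toFinset.card := by
    rw [hsupEq, List.toFinset_card_of_nodup htailnodup,
      List.toFinset_card_of_nodup hc.edges_nodup]
    have hl := c.length_support
    have he := c.length_edges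
    rw [List.length_tail, hl, he]
    simp
  set aF : ∀ e ∈ c.edges.toFinset, Fin (n+1) :=
    fun e he => Classical.choose (hedge_mem e he) with haF
  have haF_spec : ∀ e he, f (aF e he) = some e :=
    fun e he => Classical.choose_spec (hedge_mem e he)
  have haF_mem : ∀ e he, aF e he ∈ c.support.toFinset := by
    intro e he
    have hmm := (hG.mem _ _ (haF_spec e he)).2
    rw [List.mem_toFinset]
    exact mem_support_of_mem_edges'' (List.mem_toFinset.mp he) hmm
  have haF_inj : ∀ e1 e2 he1 he2, aF e1 he1 = aF e2 he2 → e1 = e2 := by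
    intro e1 e2 he1 he2 heq
    have h1 := haF_spec e1 he1
    have h2 := haF_spec e2 he2
    rw [heq, h2] at h1
    exact Option.some.inj h1.symm
  have hsurj : ∀ u ∈ c.support.toFinset, ∃ e he, u = aF e he := fun u hu =>
    Finset.surj_on_of_inj_on_of_card_le aF haF_mem haF_inj (le_of_eq hcards) u hu
  have hnonsink : ∀ u ∈ c.support, f u ≠ none := by
    intro u hu hnone
    obtain ⟨e, he, hue⟩ := hsurj u (List.mem_toFinset.mpr hu)
    rw [hue, haF_spec e he] at hnone
    exact nomatch hnone
  obtain ⟨m, hm⟩ := sink_exists hG.nc v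
  have horb : ∀ t, (step f)^[t] v ∈ c.support := by
    intro t
    induction t with
    | zero => exact c.start_mem_support
    | succ t ih =>
      rw [Function.iterate_succ_apply']
      set u := (step f)^[t] v
      cases hfe : f u with
      | none => rw [step_none hfe]; exact ih
      | some e =>
        obtain ⟨hE, hue⟩ := hG.mem _ _ hfe
        have hstep : s(u, step f u) = e := step_spec hfe hue
        obtain ⟨e', he', hue'⟩ := hsurj u (List.mem_toFinset.mpr ih)
        have heq : e' = e := by
          have h1 := haF_spec e' he'
          rw [← hue', hfe] at h1
          exact (Option.some.inj h1).symm
        subst heq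
        have hmem2 : step f u ∈ e' := by
          rw [← hstep]; exact Sym2.mem_mk_right u (step f u)
        exact mem_support_of_mem_edges'' (List.mem_toFinset.mp he') hmem2
  exact hnonsink _ (horb m) hm

theorem good_forest (hG : Good G i j f) : IsRootedSpanningForest (Ff G f) (Rf f) := by
  refine ⟨?_, good_acyclic G hG, ?_⟩
  · intro e he
    exact G.not_isDiag_of_mem_edgeSet
      (SimpleGraph.mem_edgeFinset.mp (Finset.mem_filter.mp he).1)
  · intro v
    obtain ⟨m, hm⟩ := sink_exists hG.nc v
    refine ⟨(step f)^[m] v, ⟨?_, step_reach G hG.mem v m⟩, ?_⟩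
    · simp only [Rf, Finset.mem_filter, Finset.mem_univ, true_and]
      exact hm
    · rintro r' ⟨hr', hre⟩
      rw [Rf, Finset.mem_filter] at hr'
      exact sink_unique (good_assign G hG.mem) hr'.2 hm (hre.symm.trans (step_reach G hG.mem v m))

theorem good_i_mem (hG : Good G i j f) : i ∈ Rf f := by
  simp only [Rf, Finset.mem_filter, Finset.mem_univ, true_and]
  exact hG.hi

end Forward


section LemmaA
variable {i j : Fin (n+1)} {f : Fin (n+1) → Option (Sym2 (Fin (n+1)))}
variable (G : SimpleGraph (Fin (n+1))) [DecidableRel G.Adj]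

theorem good_of_det_ne_zero (hpi : f ∈ Fintype.piFinset (Achoice G i))
    (hdet : (B i j f).det ≠ 0) : Good G i j f := by
  have hA : ∀ v, f v ∈ Achoice G i v := fun v => Fintype.mem_piFinset.mp hpi v
  have hfi : f i = none := by
    have := hA i
    rw [Achoice, if_pos rfl, Finset.mem_singleton] at this
    exact this
  have hE : ∀ v e, f v = some e → e ∈ G.edgeFinset := by
    intro v e hv
    have hAv := hA v
    by_cases hvi : v = i
    · subst hvi; rw [hfi] at hv; exact nomatch hv
    · rw [Achoice, if_neg hvi] at hAv
      rcases Finset.mem_insert.mp hAv with h | h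
      · rw [hv] at h; exact nomatch h
      · rw [Finset.mem_map] at h
        obtain ⟨e', he', heq⟩ := h
        have : e' = e := by
          rw [hv] at heq
          exact Option.some.inj heq
        rwa [this] at he'
  have hmem : ∀ v e, f v = some e → e ∈ G.edgeFinset ∧ v ∈ e := by
    intro v e hv
    refine ⟨hE v e hv, ?_⟩
    by_contra hnot
    have hvi : v ≠ i := fun h => by rw [h, hfi] at hv; exact nomatch hv
    exact hdet (det_zero_of_nonmem hvi hv hnot)
  have hnd : ∀ v e, f v = some e → ¬ e.IsDiag := fun v e h =>
    G.not_isDiag_of_mem_edgeSet (SimpleGraph.mem_edgeFinset.mp (hE v e h))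
  have hinj : ∀ v w e, f v = some e → f w = some e → v = w := by
    intro v w e hv hw
    by_contra hne
    exact hdet (det_zero_of_dup hne hv hw (hmem _ _ hv).2 (hmem _ _ hw).2 (hnd _ _ hv))
  have hnc : Noncirc f := by
    intro v k hk hcyc
    cases hfv : f v with
    | none => rfl
    | some e =>
      have hsv : step f v ≠ v := step_ne hfv (hmem _ _ hfv).2 (hnd _ _ hfv)
      exact absurd (det_zero_of_cycle hfi
        (fun v e h => ⟨Finset.mem_univ _, (hmem _ _ h).2, hnd _ _ h⟩) hk hcyc hsv) hdet
  have hreach : (SimpleGraph.fromEdgeSet (↑(Ff G f) : Set (Sym2 (Fin (n+1))))).Reachable i j := by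
    obtain ⟨m, hm⟩ := sink_exists hnc j
    set k := Nat.find (sink_exists hnc j) with hkdef
    have hr : f ((step f)^[k] j) = none := Nat.find_spec (sink_exists hnc j)
    have hkmin : ∀ m' < k, f ((step f)^[m'] j) ≠ none := fun m' hm' =>
      Nat.find_min (sink_exists hnc j) hm'
    by_cases hri : (step f)^[k] j = i
    · have h1 := step_reach G hmem j k
      rw [hri] at h1
      exact h1.symm
    · exact absurd (det_zero_of_wrong_sink hfi (fun v e h => ⟨(hmem _ _ h).2, hnd _ _ h⟩)
        hkmin hr hri) hdet
  exact ⟨hfi, hmem, hinj, hnc, hreach⟩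

end LemmaA


section LemmaB
variable {i j : Fin (n+1)} {f : Fin (n+1) → Option (Sym2 (Fin (n+1)))}
variable (G : SimpleGraph (Fin (n+1))) [DecidableRel G.Adj]

theorem det_eq_one_of_good (hG : Good G i j f) : (B i j f).det = 1 := by
  have hnd : ∀ v e, f v = some e → ¬ e.IsDiag := fun v e h =>
    G.not_isDiag_of_mem_edgeSet (SimpleGraph.mem_edgeFinset.mp (hG.mem v e h).1)
  have hrowsome : ∀ v e, f v = some e →
      (B i j f) v = fun w => dl v w - dl (step f v) w :=
    fun v e h => B_row_some h (hG.mem v e h).2 (hnd v e h)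
  have hstepne : ∀ v e, f v = some e → step f v ≠ v :=
    fun v e h => step_ne h (hG.mem v e h).2 (hnd v e h)
  set d : Fin (n+1) → ℕ := fun v => Nat.find (sink_exists hG.nc v) with hddef
  have hdspec : ∀ v, f ((step f)^[d v] v) = none := fun v => Nat.find_spec (sink_exists hG.nc v)
  have hd : ∀ v, f v ≠ none → d (step f v) < d v := by
    intro v hv
    have h0 : d v ≠ 0 := fun h => hv (by have := hdspec v; rwa [h] at this)
    obtain ⟨m, hm⟩ : ∃ m, d v = m + 1 := ⟨d v - 1, by omega⟩
    have hspec : f ((step f)^[m] (step f v)) = none := by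
      have h1 := hdspec v
      rw [hm, Function.iterate_succ_apply] at h1
      exact h1
    have h2 : d (step f v) ≤ m := Nat.find_le hspec
    omega
  -- base case: triangular determinant
  have base : ((B i j f).updateRow i (dl i)).det = 1 := by
    set M := (B i j f).updateRow i (dl i) with hMdef
    have hMrow : ∀ u : Fin (n+1), u ≠ i → M u = (B i j f) u := fun u hu => Matrix.updateRow_ne hu
    have hdiag : ∀ x : Fin (n+1), M x x = 1 := by
      intro x
      by_cases hxi : x = i
      · subst hxi; rw [hMdef, Matrix.updateRow_self]; simp [dl]
      · rw [hMrow x hxi]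
        cases hfx : f x with
        | none =>
          rw [B_row_none hxi hfx]
          simp [dl]
        | some e =>
          rw [hrowsome x e hfx]
          show dl x x - dl (step f x) x = 1
          have h2 : dl (step f x) x = 0 := if_neg (fun h => hstepne x e hfx h.symm)
          have h3 : dl x x = 1 := if_pos rfl
          rw [h2, h3]
          ring
    have hoff : ∀ u w : Fin (n+1), u ≠ w → d u ≤ d w → M u w = 0 := by
      intro u w huw hdle
      by_cases hui : u = i
      · subst hui
        rw [hMdef, Matrix.updateRow_self]
        exact if_neg (fun h => huw h.symm)
      · rw [hMrow u hui]
        cases hfu : f u with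
        | none =>
          rw [B_row_none hui hfu]
          exact if_neg (fun h : w = u => huw h.symm)
        | some e =>
          rw [hrowsome u e hfu]
          have hws : w ≠ step f u := by
            intro h
            have := hd u (by rw [hfu]; exact fun hc => nomatch hc)
            rw [← h] at this
            omega
          show dl u w - dl (step f u) w = 0
          have h2 : dl u w = 0 := if_neg (fun h : w = u => huw h.symm)
          have h3 : dl (step f u) w = 0 := if_neg hws
          rw [h2, h3]
          ring
    have hbt : M.BlockTriangular (fun v => -(d v : ℤ)) := by
      intro u w hlt
      simp only [neg_lt_neg_iff, Nat.cast_lt] at hlt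
      exact hoff u w (fun h => by rw [h] at hlt; exact lt_irrefl _ hlt) (le_of_lt hlt)
    rw [hbt.det]
    apply Finset.prod_eq_one
    intro a _
    have hblock : M.toSquareBlock (fun v => -(d v : ℤ)) a = 1 := by
      ext u w
      rw [Matrix.toSquareBlock_def]
      by_cases huw : u = w
      · subst huw
        rw [Matrix.one_apply_eq]
        exact hdiag u
      · have hne2 : (u : Fin (n+1)) ≠ (w : Fin (n+1)) := fun h => huw (Subtype.ext h)
        have hdeq : d (u : Fin (n+1)) = d (w : Fin (n+1)) := by
          have h1 := u.2
          have h2 := w.2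
          beta_reduce at h1 h2
          have h3 : -(d (u : Fin (n+1)) : ℤ) = -(d (w : Fin (n+1)) : ℤ) := by rw [h1, h2]
          omega
        rw [Matrix.one_apply_ne huw]
        exact hoff _ _ hne2 (le_of_eq hdeq)
    rw [hblock, Matrix.det_one]
  -- climbing along the pointer path
  have climb : ∀ k v, (step f)^[k] v = i → ((B i j f).updateRow i (dl v)).det = 1 := by
    intro k
    induction k with
    | zero =>
      intro v hv
      simp only [Function.iterate_zero, id] at hv
      rw [hv]
      exact base
    | succ k ih =>
      intro v hv
      by_cases hvi : v = i
      · rw [hvi]; exact base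
      · have hfv : f v ≠ none := by
          intro h
          rw [step_fix_of_none h (k+1)] at hv
          exact hvi hv
        obtain ⟨e, he⟩ : ∃ e, f v = some e := by
          cases hfe : f v with
          | none => exact absurd hfe hfv
          | some e => exact ⟨e, rfl⟩
        have hkey : ((B i j f).updateRow i (dl v)).det
            = ((B i j f).updateRow i (dl (step f v))).det := by
          set M' := (B i j f).updateRow i (dl (step f v)) with hM'def
          have hrow_v : M' v = (B i j f) v := Matrix.updateRow_ne hvi
          have hMi : M' i = dl (step f v) := Matrix.updateRow_self
          have heq : (B i j f).updateRow i (dl v)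
              = M'.updateRow i (M' i + (1:ℝ) • M' v) := by
            ext a b
            by_cases hai : a = i
            · subst hai
              rw [Matrix.updateRow_self, Matrix.updateRow_self]
              rw [Pi.add_apply, Pi.smul_apply, hMi, hrow_v, hrowsome v e he]
              simp only [smul_eq_mul, one_mul]
              ring
            · rw [Matrix.updateRow_ne hai, Matrix.updateRow_ne hai, hM'def,
                Matrix.updateRow_ne hai]
          rw [heq, Matrix.det_updateRow_add_smul_self _ (Ne.symm hvi) (1:ℝ)]
        rw [hkey]
        exact ih (step f v) (by rw [← Function.iterate_succ_apply]; exact hv)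
  obtain ⟨m, hm⟩ := sink_exists hG.nc j
  have hri : (step f)^[m] j = i := by
    refine sink_unique (good_assign G hG.mem) hm hG.hi ?_
    exact (step_reach G hG.mem j m).symm.trans hG.reach.symm
  have hBu : (B i j f).updateRow i (dl j) = B i j f := by
    have h1 : (B i j f) i = dl j := B_row_i hG.hi
    rw [← h1]
    exact Matrix.updateRow_eq_self _ _
  rw [← hBu]
  exact climb m j hri

end LemmaB


section Bij
variable {i j : Fin (n+1)}
variable (G : SimpleGraph (Fin (n+1))) [DecidableRel G.Adj]

theorem good_inj {f f' : Fin (n+1) → Option (Sym2 (Fin (n+1)))}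
    (hG : Good G i j f) (hG' : Good G i j f')
    (hF : Ff G f = Ff G f') (hR : Rf f = Rf f') : f = f' := by
  funext v
  have hRmem : ∀ u, u ∈ Rf f ↔ f u = none := by
    intro u; simp [Rf]
  have hRmem' : ∀ u, u ∈ Rf f' ↔ f' u = none := by
    intro u; simp [Rf]
  by_cases hv : f v = none
  · have h2 : f' v = none := (hRmem' v).mp (hR ▸ (hRmem v).mpr hv)
    rw [hv, h2]
  · have hv' : f' v ≠ none := fun h =>
      hv ((hRmem v).mp (hR ▸ (hRmem' v).mpr h))
    obtain ⟨m, hm⟩ := sink_exists hG.nc v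
    set r := (step f)^[m] v with hrdef
    have hrv : (SimpleGraph.fromEdgeSet (↑(Ff G f) : Set (Sym2 (Fin (n+1))))).Reachable v r :=
      step_reach G hG.mem v m
    obtain ⟨w0⟩ := hrv
    have hra : r ≠ v := fun h => hv (by rw [← h]; exact hm)
    have hr' : f' r = none := (hRmem' r).mp (hR ▸ (hRmem r).mpr hm)
    have hassign' := good_assign G hG'.mem
    rw [← hF] at hassign'
    have h1 := chain (good_assign G hG.mem) w0.reverse.toPath.1 w0.reverse.toPath.2
      (fun e _ => by rw [hm]; exact fun hc => nomatch hc) hra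
    have h2 := chain hassign' w0.reverse.toPath.1 w0.reverse.toPath.2
      (fun e _ => by rw [hr']; exact fun hc => nomatch hc) hra
    rw [h1, h2]

theorem good_surj {F : Finset (Sym2 (Fin (n+1)))} {R : Finset (Fin (n+1))}
    (hsub : F ⊆ G.edgeFinset) (hforest : IsRootedSpanningForest F R)
    (hreach : (SimpleGraph.fromEdgeSet (↑F : Set (Sym2 (Fin (n+1))))).Reachable i j)
    (hiR : i ∈ R) :
    ∃ f, f ∈ Fintype.piFinset (Achoice G i) ∧ Good G i j f ∧ Ff G f = F ∧ Rf f = R := by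
  obtain ⟨hdiag, hacyc, hroot⟩ := hforest
  set H := SimpleGraph.fromEdgeSet (↑F : Set (Sym2 (Fin (n+1)))) with hHdef
  have hrt : ∀ v : Fin (n+1), ∃ r, r ∈ R ∧ H.Reachable v r := fun v => (hroot v).exists
  choose rt hrtR hrtRe using hrt
  have hrt_uniq : ∀ v r', r' ∈ R → H.Reachable v r' → r' = rt v := fun v r' h1 h2 =>
    ((hroot v).unique ⟨h1, h2⟩ ⟨hrtR v, hrtRe v⟩)
  have hpath : ∀ v, ∃ p : H.Walk v (rt v), p.IsPath :=
    fun v => ⟨(hrtRe v).some.toPath.1, (hrtRe v).some.toPath.2⟩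
  choose pth hpth using hpath
  set nxt : Fin (n+1) → Fin (n+1) := fun v => (pth v).getVert 1 with hnxtdef
  set f : Fin (n+1) → Option (Sym2 (Fin (n+1))) :=
    fun v => if v ∈ R then none else some s(v, nxt v) with hfdef
  -- basic facts
  have hlen0 : ∀ v, v ∉ R → (pth v).length ≠ 0 := by
    intro v hv h0
    exact hv ((SimpleGraph.Walk.eq_of_length_eq_zero h0) ▸ hrtR v)
  have hadj : ∀ v, v ∉ R → H.Adj v (nxt v) := by
    intro v hv
    have := (pth v).adj_getVert_succ (i := 0) (by have := hlen0 v hv; omega)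
    rwa [SimpleGraph.Walk.getVert_zero] at this
  have hfv_some : ∀ v, v ∉ R → f v = some s(v, nxt v) := fun v hv => if_neg hv
  have hfv_none : ∀ v, v ∈ R → f v = none := fun v hv => if_pos hv
  -- uniqueness of the first step (key fact A)
  have keyA : ∀ v, v ∉ R → ∀ (q : H.Walk v (rt v)), q.IsPath → q.getVert 1 = nxt v := by
    intro v hv q hq
    have := hacyc.path_unique ⟨q, hq⟩ ⟨pth v, hpth v⟩
    rw [hnxtdef]
    exact congrArg (fun w => SimpleGraph.Walk.getVert w 1) (congrArg Subtype.val this)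
  -- the step function agrees with nxt
  have hstep_eq : ∀ v, v ∉ R → step f v = nxt v := by
    intro v hv
    have h1 := step_spec (f := f) (hfv_some v hv) (Sym2.mem_mk_left v (nxt v))
    exact Sym2.congr_right.mp h1
  have hstep_fix : ∀ v, v ∈ R → step f v = v := fun v hv => step_none (hfv_none v hv)
  -- depth function
  set dd : Fin (n+1) → ℕ := fun v => if v ∈ R then 0 else (pth v).length with hddef
  have hdrop : ∀ v, v ∉ R → dd (nxt v) < dd v := by
    intro v hv
    have hlv := hlen0 v hv
    by_cases hu : nxt v ∈ R
    · rw [hddef]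
      simp only [if_pos hu, if_neg hv]
      omega
    · have hrteq : rt (nxt v) = rt v :=
        (hrt_uniq v (rt (nxt v)) (hrtR _) ((hadj v hv).reachable.trans (hrtRe (nxt v))))
      have hnn : ¬ (pth v).Nil := by
        rw [SimpleGraph.Walk.nil_iff_length_eq]
        exact hlen0 v hv
      have htl : ((pth v).tail).length + 1 = (pth v).length :=
        SimpleGraph.Walk.length_tail_add_one hnn
      set q' : H.Walk (nxt v) (rt (nxt v)) := ((pth v).tail).copy rfl hrteq.symm with hq'def
      have hq' : q'.IsPath := by
        rw [hq'def, SimpleGraph.Walk.isPath_copy]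
        exact (hpth v).tail
      have hpu := hacyc.path_unique ⟨q', hq'⟩ ⟨pth (nxt v), hpth (nxt v)⟩
      have hlq : (pth (nxt v)).length = q'.length :=
        (congrArg (fun w => SimpleGraph.Walk.length w)
          (congrArg Subtype.val hpu)).symm
      have hlq2 : q'.length = ((pth v).tail).length := SimpleGraph.Walk.length_copy _ _ _
      rw [hddef]
      simp only [if_neg hu, if_neg hv]
      omega
  -- support of a root's path is trivial
  have hsupR : ∀ a, a ∈ R → ∀ x, x ∈ (pth a).support → x = a := by
    intro a ha x hx
    have ha' : a = rt a := hrt_uniq a a ha (SimpleGraph.Reachable.refl a)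
    have h1 : ((pth a).copy rfl ha'.symm).IsPath := by
      rw [SimpleGraph.Walk.isPath_copy]; exact hpth a
    have hnil : ((pth a).copy rfl ha'.symm) = SimpleGraph.Walk.nil :=
      SimpleGraph.Walk.isPath_iff_eq_nil.mp h1
    have h2 : (pth a).support = [a] := by
      have := congrArg SimpleGraph.Walk.support hnil
      rwa [SimpleGraph.Walk.support_copy, SimpleGraph.Walk.support_nil] at this
    rw [h2] at hx
    simpa using hx
  -- key fact C: an unobstructed neighbor determines the assignment
  have keyC : ∀ a b, H.Adj a b → b ∉ R → b ∉ (pth a).support → f b = some s(a, b) := by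
    intro a b hAdj hbR hbsup
    have hrteq : rt a = rt b :=
      hrt_uniq b (rt a) (hrtR a) ((hAdj.symm).reachable.trans (hrtRe a))
    have hq : (SimpleGraph.Walk.cons hAdj.symm (pth a)).IsPath := (hpth a).cons hbsup
    set q' : H.Walk b (rt b) := (SimpleGraph.Walk.cons hAdj.symm (pth a)).copy rfl hrteq
      with hq'def
    have hq'path : q'.IsPath := by
      rw [hq'def, SimpleGraph.Walk.isPath_copy]; exact hq
    have h1 := keyA b hbR q' hq'path
    have h2 : q'.getVert 1 = a := by
      rw [hq'def, SimpleGraph.Walk.getVert_copy, SimpleGraph.Walk.getVert_cons_succ,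
        SimpleGraph.Walk.getVert_zero]
    rw [h2] at h1
    rw [hfv_some b hbR, ← h1, Sym2.eq_swap]
  -- key fact D: an obstructed neighbor is strictly deeper
  have keyD : ∀ a b, H.Adj a b → b ∉ R → (hmem : b ∈ (pth a).support) →
      (pth b).length < (pth a).length := by
    intro a b hAdj hbR hbsup
    have hrteq : rt a = rt b :=
      hrt_uniq b (rt a) (hrtR a) ((hAdj.symm).reachable.trans (hrtRe a))
    have hq'path : (((pth a).dropUntil b hbsup).copy rfl hrteq).IsPath := by
      rw [SimpleGraph.Walk.isPath_copy]
      exact (hpth a).dropUntil hbsup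
    have hpu := hacyc.path_unique ⟨((pth a).dropUntil b hbsup).copy rfl hrteq, hq'path⟩
      ⟨pth b, hpth b⟩
    have hlq : (pth b).length = ((pth a).dropUntil b hbsup).length := by
      have h := (congrArg (fun w => SimpleGraph.Walk.length w) (congrArg Subtype.val hpu)).symm
      rwa [SimpleGraph.Walk.length_copy] at h
    have hsum : ((pth a).takeUntil b hbsup).length + ((pth a).dropUntil b hbsup).length
        = (pth a).length := by
      have h := congrArg SimpleGraph.Walk.length (SimpleGraph.Walk.take_spec (pth a) hbsup)
      rwa [SimpleGraph.Walk.length_append] at h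
    have htk : ((pth a).takeUntil b hbsup).length ≠ 0 := by
      intro h0
      exact hAdj.ne (SimpleGraph.Walk.eq_of_length_eq_zero h0)
    omega
  -- Noncirc
  have hnc : Noncirc f := by
    intro v k hk hcyc
    by_cases hvR : v ∈ R
    · exact hfv_none v hvR
    exfalso
    have hper : ∀ t, (step f)^[k*t] v = v := by
      intro t
      induction t with
      | zero => simp
      | succ t ih => rw [Nat.mul_succ, Function.iterate_add_apply, hcyc, ih]
    have horbR : ∀ m, (step f)^[m] v ∉ R := by
      intro m hmemR
      have hfix : ∀ t, (step f)^[t] ((step f)^[m] v) = (step f)^[m] v :=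
        fun t => step_fix_of_none (hfv_none _ hmemR) t
      have hv : v = (step f)^[m] v := by
        have h1 : (step f)^[k*m - m] ((step f)^[m] v) = v := by
          rw [← Function.iterate_add_apply, show k*m - m + m = k*m by
            have : m ≤ k*m := Nat.le_mul_of_pos_left m hk
            omega]
          exact hper m
        rw [hfix (k*m - m)] at h1
        exact h1.symm
      rw [← hv] at hmemR
      exact hvR hmemR
    have hdec : ∀ m, dd ((step f)^[m] v) + m ≤ dd v := by
      intro m
      induction m with
      | zero => simp
      | succ m ih =>
        have hu := horbR m
        have h1 : (step f)^[m+1] v = step f ((step f)^[m] v) :=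
          Function.iterate_succ_apply' _ _ _
        have h2 : step f ((step f)^[m] v) = nxt ((step f)^[m] v) := hstep_eq _ hu
        have h3 := hdrop _ hu
        rw [h1, h2]
        omega
    have := hdec k
    rw [hcyc] at this
    omega
  -- membership facts
  have hmem : ∀ v e, f v = some e → e ∈ G.edgeFinset ∧ v ∈ e := by
    intro v e hv
    have hvR : v ∉ R := fun h => by
      rw [hfv_none v h] at hv; exact nomatch hv
    have hev : e = s(v, nxt v) := by
      rw [hfv_some v hvR] at hv
      exact (Option.some.inj hv).symm
    have hAdj := hadj v hvR
    rw [hHdef, SimpleGraph.fromEdgeSet_adj] at hAdj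
    constructor
    · rw [hev]
      exact hsub (Finset.mem_coe.mp hAdj.1)
    · rw [hev]
      exact Sym2.mem_mk_left v (nxt v)
  -- injectivity
  have hinj : ∀ v w e, f v = some e → f w = some e → v = w := by
    intro v w e hv hw
    by_contra hne
    have hvR : v ∉ R := fun h => by
      rw [hfv_none v h] at hv; exact nomatch hv
    have hwR : w ∉ R := fun h => by
      rw [hfv_none w h] at hw; exact nomatch hw
    have hev : e = s(v, nxt v) := by
      rw [hfv_some v hvR] at hv; exact (Option.some.inj hv).symm
    have hew : e = s(w, nxt w) := by
      rw [hfv_some w hwR] at hw; exact (Option.some.inj hw).symm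
    have he2 : e = s(v, w) := (Sym2.mem_and_mem_iff hne).mp
      ⟨hev ▸ Sym2.mem_mk_left v (nxt v), hew ▸ Sym2.mem_mk_left w (nxt w)⟩
    have h1 : nxt v = w := Sym2.congr_right.mp (by rw [← hev, he2])
    have h2 : nxt w = v := Sym2.congr_right.mp (by rw [← hew, he2, Sym2.eq_swap])
    have d1 := hdrop v hvR
    have d2 := hdrop w hwR
    rw [h1] at d1
    rw [h2] at d2
    omega
  -- the edge set is recovered
  have hFf : Ff G f = F := by
    ext e
    constructor
    · intro he
      obtain ⟨hE, v, hv⟩ := Finset.mem_filter.mp he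
      have hvR : v ∉ R := fun h => by
        rw [hfv_none v h] at hv; exact nomatch hv
      have hev : e = s(v, nxt v) := by
        rw [hfv_some v hvR] at hv; exact (Option.some.inj hv).symm
      have hAdj := hadj v hvR
      rw [hHdef, SimpleGraph.fromEdgeSet_adj] at hAdj
      rw [hev]
      exact Finset.mem_coe.mp hAdj.1
    · intro he
      refine Finset.mem_filter.mpr ⟨hsub he, ?_⟩
      induction e with
      | _ a b =>
        have hab : a ≠ b := by
          intro h
          exact hdiag _ he (by rw [h]; exact Sym2.mk_isDiag_iff.mpr rfl)
        have hAdj : H.Adj a b := by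
          rw [hHdef, SimpleGraph.fromEdgeSet_adj]
          exact ⟨Finset.mem_coe.mpr he, hab⟩
        by_cases haR : a ∈ R
        · by_cases hbR : b ∈ R
          · exfalso
            have h1 : a = rt a := hrt_uniq a a haR (SimpleGraph.Reachable.refl a)
            have h2 : b = rt a := hrt_uniq a b hbR hAdj.reachable
            exact hab (h1.trans h2.symm)
          · have hbsup : b ∉ (pth a).support := fun h =>
              hab (hsupR a haR b h).symm
            exact ⟨b, keyC a b hAdj hbR hbsup⟩
        · by_cases hbR : b ∈ R
          · have hasup : a ∉ (pth b).support := fun h =>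
              hab (hsupR b hbR a h)
            refine ⟨a, ?_⟩
            rw [keyC b a hAdj.symm haR hasup, Sym2.eq_swap]
          · by_cases hbsup : b ∈ (pth a).support
            · have hD1 := keyD a b hAdj hbR hbsup
              by_cases hasup : a ∈ (pth b).support
              · have hD2 := keyD b a hAdj.symm haR hasup
                omega
              · refine ⟨a, ?_⟩
                rw [keyC b a hAdj.symm haR hasup, Sym2.eq_swap]
            · exact ⟨b, keyC a b hAdj hbR hbsup⟩
  have hRf : Rf f = R := by
    ext u
    simp only [Rf, Finset.mem_filter, Finset.mem_univ, true_and]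
    constructor
    · intro hu
      by_contra huR
      rw [hfv_some u huR] at hu
      exact nomatch hu
    · exact hfv_none u
  have hpi : f ∈ Fintype.piFinset (Achoice G i) := by
    rw [Fintype.mem_piFinset]
    intro v
    by_cases hvi : v = i
    · rw [Achoice, if_pos hvi, hvi, hfv_none i hiR]
      exact Finset.mem_singleton_self none
    · rw [Achoice, if_neg hvi]
      by_cases hvR : v ∈ R
      · rw [hfv_none v hvR]
        exact Finset.mem_insert_self _ _
      · rw [hfv_some v hvR]
        refine Finset.mem_insert_of_mem ?_
        rw [Finset.mem_map]
        exact ⟨s(v, nxt v), (hmem v _ (hfv_some v hvR)).1, rfl⟩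
  refine ⟨f, hpi, ⟨hfv_none i hiR, hmem, hinj, hnc, ?_⟩, hFf, hRf⟩
  rw [hFf]
  exact hreach

end Bij

end MFTaux

/-- **Counting rooted forests of a simple graph (cofactor form).** For any finite simple
graph `G` and vertices `i, j`, the cofactor of the `(i,j)` entry of `W = I + L(G)`
equals the number of spanning rooted forests of `G` in which `i` and `j` belong to the
same tree and that tree is rooted at `i`. -/
theorem count_rooted_forests_cofactor (n : ℕ) (G : SimpleGraph (Fin (n + 1)))
    [DecidableRel G.Adj] (i j : Fin (n + 1)) :
    cofactor (1 + G.lapMatrix ℝ) i j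
      = ((Finset.univ.filter fun FR : Finset (Sym2 (Fin (n + 1))) × Finset (Fin (n + 1)) =>
            FR.1 ⊆ G.edgeFinset ∧ IsRootedSpanningForest FR.1 FR.2 ∧
            (SimpleGraph.fromEdgeSet (↑FR.1 : Set (Sym2 (Fin (n + 1))))).Reachable i j ∧
            i ∈ FR.2).card : ℝ) := by
  classical
  rw [MFTaux.cofactor_eq, MFTaux.det_expand]
  rw [← Finset.sum_filter_add_sum_filter_not (Fintype.piFinset (MFTaux.Achoice G i))
    (fun f => MFTaux.Good G i j f)]
  have h2 : ∑ f ∈ (Fintype.piFinset (MFTaux.Achoice G i)).filter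
      (fun f => ¬ MFTaux.Good G i j f), (MFTaux.B i j f).det = 0 := by
    apply Finset.sum_eq_zero
    intro f hf
    obtain ⟨hpi, hng⟩ := Finset.mem_filter.mp hf
    by_contra hne
    exact hng (MFTaux.good_of_det_ne_zero G hpi hne)
  have h1 : ∑ f ∈ (Fintype.piFinset (MFTaux.Achoice G i)).filter
      (fun f => MFTaux.Good G i j f), (MFTaux.B i j f).det
      = (((Fintype.piFinset (MFTaux.Achoice G i)).filter
          (fun f => MFTaux.Good G i j f)).card : ℝ) := by
    rw [Finset.sum_congr rfl (fun f hf =>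
      MFTaux.det_eq_one_of_good G (Finset.mem_filter.mp hf).2)]
    rw [Finset.sum_const, nsmul_eq_mul, mul_one]
  rw [h1, h2, add_zero]
  congr 1
  apply Finset.card_bij (fun f _ => (MFTaux.Ff G f, MFTaux.Rf f))
  · intro f hf
    have hG := (Finset.mem_filter.mp hf).2
    refine Finset.mem_filter.mpr ⟨Finset.mem_univ _, ?_, ?_, ?_, ?_⟩
    · exact Finset.filter_subset _ _
    · exact MFTaux.good_forest G hG
    · exact hG.reach
    · exact MFTaux.good_i_mem G hG
  · intro f hf f' hf' heq
    have hG := (Finset.mem_filter.mp hf).2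
    have hG' := (Finset.mem_filter.mp hf').2
    have h1 := congrArg Prod.fst heq
    have h2 := congrArg Prod.snd heq
    exact MFTaux.good_inj G hG hG' h1 h2
  · intro FR hFR
    obtain ⟨-, hsub, hforest, hreach, hiR⟩ := Finset.mem_filter.mp hFR
    obtain ⟨f, hpi, hGood, hF, hR⟩ := MFTaux.good_surj G hsub hforest hreach hiR
    refine ⟨f, Finset.mem_filter.mpr ⟨hpi, hGood⟩, ?_⟩
    rw [hF, hR]
end

section
/- Lemma 2 (principal minors of the Kirchhoff matrix via contraction). Let Γ be a weighted digraph on a finite vertex set V = {1,…,n} and let φ be a nonempty subset of V. Then det L_{−φ} = ε(𝒯_{φ*}), i.e., the determinant of the principal submatrix of L(Γ) obtained by deleting the rows and columns indexed by φ equals the sum of the weights of the spanning trees of the contracted digraph Γ_φ diverging from the contracted vertex φ*. -/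
open scoped Classical

/-- The Kirchhoff (Laplacian) matrix of a weighted digraph on vertex set `α` with arc
weights `ε`: `ℓ i j = -ε j i` for `j ≠ i`, and `ℓ i i = ∑_{k ≠ i} ε k i`. -/
noncomputable def kirchhoff {α : Type*} [Fintype α] [DecidableEq α]
    (ε : α → α → ℝ) : Matrix α α ℝ :=
  Matrix.of fun i j =>
    if i = j then ∑ k ∈ Finset.univ.erase i, ε k i else - ε j i

/-- `F` is a spanning diverging forest: every arc joins distinct vertices, every vertex
has at most one incoming arc, and there are no cycles. -/
def IsDivForest {α : Type*} [Fintype α] [DecidableEq α] (F : Finset (α × α)) : Prop :=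
  (∀ p ∈ F, p.1 ≠ p.2) ∧
  (∀ b : α, (F.filter fun p => p.2 = b).card ≤ 1) ∧
  ∀ a : α, ¬ Relation.TransGen (fun x y : α => (x, y) ∈ F) a a

/-- The weight of a set of arcs: the product of the arc weights. -/
noncomputable def arcWt {α : Type*} (ε : α → α → ℝ) (F : Finset (α × α)) : ℝ :=
  ∏ p ∈ F, ε p.1 p.2

/-- The set of roots of `F`, i.e. the vertices of in-degree 0. -/
noncomputable def rootSet {α : Type*} [Fintype α] [DecidableEq α]
    (F : Finset (α × α)) : Finset α :=
  Finset.univ.filter fun v => ∀ a, (a, v) ∉ F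

/-- The set of all spanning diverging forests. -/
noncomputable def divForests (α : Type*) [Fintype α] [DecidableEq α] :
    Finset (Finset (α × α)) :=
  Finset.univ.filter IsDivForest

/-- The set `𝔉^{i→j}` of spanning diverging forests in which `i` is a root and there is
a directed path from `i` to `j`. -/
noncomputable def divForestsFromTo {α : Type*} [Fintype α] [DecidableEq α] (i j : α) :
    Finset (Finset (α × α)) :=
  Finset.univ.filter fun F => IsDivForest F ∧ (∀ a, (a, i) ∉ F) ∧
    Relation.ReflTransGen (fun x y : α => (x, y) ∈ F) i j

/-- `T` is a spanning tree diverging from the root `r`: every arc joins distinct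
vertices, every vertex other than `r` has exactly one incoming arc, `r` has none, and
there are no cycles. -/
def IsDivTreeFrom {α : Type*} [Fintype α] [DecidableEq α] (r : α)
    (T : Finset (α × α)) : Prop :=
  (∀ p ∈ T, p.1 ≠ p.2) ∧
  (∀ v : α, v ≠ r → (T.filter fun p => p.2 = v).card = 1) ∧
  (∀ a, (a, r) ∉ T) ∧
  ∀ a : α, ¬ Relation.TransGen (fun x y : α => (x, y) ∈ T) a a

/-- The arc weights of the contracted digraph `Γ_φ`, whose vertex set is
`(V ∖ φ) ∪ {φ*}`; the new vertex `φ*` is represented by `none`. -/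
noncomputable def contractWt {n : ℕ} (ε : Fin n → Fin n → ℝ) (φ : Finset (Fin n)) :
    Option {v : Fin n // v ∉ φ} → Option {v : Fin n // v ∉ φ} → ℝ
  | some a, some b => ε a b
  | none, some b => ∑ a ∈ φ, ε a b
  | some a, none => ∑ b ∈ φ, ε a b
  | none, none => 0

/-! Expanding row `u` of the reduced Kirchhoff matrix `L_{-r}` as `∑_{k ≠ u} w k u • (e_u - e_k)`
writes `det L_{-r}` as a sum, over all choices of a parent `f u ≠ u` for each `u ≠ r`, of
`∏_u w (f u) u · det (1 - P_f)`, where `P_f` is the adjacency matrix of `u ↦ f u` off the root.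
If following parents always leads to `r`, ordering vertices by their distance to `r` makes
`1 - P_f` unitriangular; otherwise the indicator of the vertices that never reach `r` lies in its
kernel. The parent choices of the first kind are exactly the spanning trees diverging from `r`.
Contracting `φ` to the root `φ*` leaves the entries of the Kirchhoff matrix outside `φ`
unchanged, because `ε'(φ*, b)` collects exactly the weights `ε(a, b)`, `a ∈ φ`. -/

open Finset Matrix Relation

lemma exists_iterate_apply_eq_iff_of_isFixedPt {α : Type*} {g : α → α} {r : α}
    (hr : g r = r) (v : α) : (∃ k, g^[k] (g v) = r) ↔ ∃ k, g^[k] v = r := by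
  constructor
  · rintro ⟨k, hk⟩
    exact ⟨k + 1, by rwa [Function.iterate_succ_apply]⟩
  · rintro ⟨_ | k, hk⟩
    · exact ⟨0, by simp_all⟩
    · exact ⟨k, by rwa [Function.iterate_succ_apply] at hk⟩

namespace MatrixTree

variable {γ : Type*} [DecidableEq γ] {r : γ} {f : {v : γ // v ≠ r} → γ}

def parentMap (r : γ) (f : {v : γ // v ≠ r} → γ) (v : γ) : γ :=
  if h : v = r then r else f ⟨v, h⟩

@[simp] lemma parentMap_root : parentMap r f r = r := dif_pos rfl

lemma parentMap_of_ne {v : γ} (hv : v ≠ r) : parentMap r f v = f ⟨v, hv⟩ := dif_neg hv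

def ReachesRoot (r : γ) (f : {v : γ // v ≠ r} → γ) : Prop :=
  ∀ v, ∃ k, (parentMap r f)^[k] v = r

noncomputable def depth (hf : ReachesRoot r f) (v : γ) : ℕ := Nat.find (hf v)

lemma depth_parentMap_lt (hf : ReachesRoot r f) {v : γ} (hv : v ≠ r) :
    depth hf (parentMap r f v) < depth hf v := by
  have hspec := Nat.find_spec (hf v)
  obtain ⟨k, hk⟩ : ∃ k, Nat.find (hf v) = k + 1 :=
    Nat.exists_eq_succ_of_ne_zero fun h0 => hv (by rwa [h0] at hspec)
  rw [hk, Function.iterate_succ_apply] at hspec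
  exact (show depth hf v = k + 1 from hk) ▸ Nat.lt_succ_of_le (Nat.find_min' _ hspec)

variable [Fintype γ]

def arcsOf (r : γ) (f : {v : γ // v ≠ r} → γ) : Finset (γ × γ) :=
  univ.image fun u => (f u, (u : γ))

lemma mem_arcsOf {x y : γ} : (x, y) ∈ arcsOf r f ↔ ∃ h : y ≠ r, f ⟨y, h⟩ = x := by
  simp only [arcsOf, mem_image, mem_univ, true_and, Prod.mk.injEq]
  constructor
  · rintro ⟨u, rfl, rfl⟩
    exact ⟨u.2, rfl⟩
  · rintro ⟨h, rfl⟩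
    exact ⟨⟨y, h⟩, rfl, rfl⟩

lemma parentMap_mem_arcsOf {y : γ} (hy : y ≠ r) : (parentMap r f y, y) ∈ arcsOf r f :=
  mem_arcsOf.2 ⟨hy, (parentMap_of_ne hy).symm⟩

lemma ReachesRoot.acyclic (hf : ReachesRoot r f) (a : γ) :
    ¬ TransGen (fun x y => (x, y) ∈ arcsOf r f) a a := by
  intro h
  have hlt : TransGen (· < ·) (depth hf a) (depth hf a) := by
    refine h.lift (depth hf) fun x y hxy => ?_
    obtain ⟨hy, rfl⟩ := mem_arcsOf.1 hxy
    simpa [parentMap_of_ne hy] using depth_parentMap_lt hf hy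
  rw [transGen_eq_self] at hlt
  exact lt_irrefl _ hlt

/-- A walk that never reaches the root eventually repeats a vertex, which closes a cycle. -/
lemma reachesRoot_of_acyclic (h : ∀ a, ¬ TransGen (fun x y => (x, y) ∈ arcsOf r f) a a) :
    ReachesRoot r f := by
  intro v
  by_contra! hv
  set g := parentMap r f
  have chain : ∀ i m, TransGen (fun x y => (x, y) ∈ arcsOf r f) (g^[i + m + 1] v) (g^[i] v) := by
    intro i m
    induction m with
    | zero =>
      exact .single (by simpa [Function.iterate_succ_apply'] using parentMap_mem_arcsOf (hv i))
    | succ m ih =>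
      refine .head ?_ ih
      rw [show i + (m + 1) + 1 = i + m + 1 + 1 by ring, Function.iterate_succ_apply']
      exact parentMap_mem_arcsOf (hv _)
  obtain ⟨i, j, hij, heq⟩ := Finite.exists_ne_map_eq_of_infinite fun k => g^[k] v
  rcases Nat.lt_or_gt_of_ne hij with hlt | hlt
  · obtain ⟨m, rfl⟩ : ∃ m, j = i + m + 1 := ⟨j - i - 1, by omega⟩
    exact h _ (heq ▸ chain i m)
  · obtain ⟨m, rfl⟩ : ∃ m, i = j + m + 1 := ⟨i - j - 1, by omega⟩
    exact h _ (heq.symm ▸ chain j m)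

def parentMatrix (r : γ) (f : {v : γ // v ≠ r} → γ) :
    Matrix {v : γ // v ≠ r} {v : γ // v ≠ r} ℝ :=
  of fun u v => if (v : γ) = f u then 1 else 0

lemma parentMatrix_mulVec {X : γ → ℝ} (hX : X r = 0) :
    parentMatrix r f *ᵥ (fun v => X v) = fun u => X (f u) := by
  ext u
  simp only [mulVec, dotProduct, parentMatrix, of_apply, ite_mul, one_mul,
    zero_mul]
  by_cases hu : f u = r
  · rw [hu, hX]
    exact sum_eq_zero fun v _ => if_neg v.2
  · rw [Fintype.sum_eq_single ⟨f u, hu⟩ fun v hv => if_neg fun h => hv (Subtype.ext h),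
      if_pos rfl]

lemma det_one_sub_parentMatrix_of_not_reachesRoot (hf : ¬ ReachesRoot r f) :
    (1 - parentMatrix r f).det = 0 := by
  set X : γ → ℝ := fun v => if ∃ k, (parentMap r f)^[k] v = r then 0 else 1
  have hX_root : X r = 0 := if_pos ⟨0, rfl⟩
  have hX_parent (v : γ) : X (parentMap r f v) = X v := by
    simp only [X, exists_iterate_apply_eq_iff_of_isFixedPt parentMap_root]
  obtain ⟨v, hv⟩ : ∃ v, ¬ ∃ k, (parentMap r f)^[k] v = r := by simpa [ReachesRoot] using hf
  have hvr : v ≠ r := fun h => hv ⟨0, h⟩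
  refine exists_mulVec_eq_zero_iff.1 ⟨fun u => X u, fun h0 => ?_, ?_⟩
  · simpa [X, hv] using congrFun h0 ⟨v, hvr⟩
  · ext u
    rw [sub_mulVec, one_mulVec, parentMatrix_mulVec hX_root, Pi.sub_apply,
      ← parentMap_of_ne (f := f) u.2, hX_parent, sub_self, Pi.zero_apply]

lemma det_one_sub_parentMatrix_of_reachesRoot (hf : ReachesRoot r f) :
    (1 - parentMatrix r f).det = 1 := by
  have hP (u v : {v : γ // v ≠ r}) (huv : depth hf u ≤ depth hf v) : parentMatrix r f u v = 0 := by
    refine if_neg fun h => huv.not_gt ?_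
    simpa [h, parentMap_of_ne u.2] using depth_parentMap_lt hf u.2
  have hb : (1 - parentMatrix r f).BlockTriangular fun u => OrderDual.toDual (depth hf u) := by
    intro u v huv
    rw [Matrix.sub_apply, hP u v huv.le, one_apply_ne (fun h => huv.ne (by rw [h])),
      sub_zero]
  rw [hb.det]
  refine prod_eq_one fun k _ => ?_
  have hblock : (1 - parentMatrix r f).toSquareBlock (fun u => OrderDual.toDual (depth hf u)) k
      = 1 := by
    ext u v
    rw [toSquareBlock_def, of_apply, Matrix.sub_apply,
      hP _ _ (u.2.trans v.2.symm).ge, sub_zero]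
    simp only [one_apply, Subtype.ext_iff]
  rw [hblock, det_one]

lemma kirchhoff_submatrix_row (w : γ → γ → ℝ) (u : {v : γ // v ≠ r}) :
    (kirchhoff w).submatrix (fun v : {v : γ // v ≠ r} => (v : γ))
        (fun v : {v : γ // v ≠ r} => (v : γ)) u = ∑ k ∈ univ.erase (u : γ),
      w k u • ((1 : Matrix {v : γ // v ≠ r} {v : γ // v ≠ r} ℝ) u -
        fun v : {v : γ // v ≠ r} => if (v : γ) = k then 1 else 0) := by
  ext v
  simp only [submatrix_apply, kirchhoff, of_apply, Finset.sum_apply, Pi.smul_apply,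
    Pi.sub_apply, smul_eq_mul, mul_sub, sum_sub_distrib, one_apply, mul_ite, mul_one, mul_zero,
    Subtype.ext_iff, sum_ite_eq, mem_erase, ne_eq, mem_univ, and_true]
  split_ifs with h h' <;> simp_all [eq_comm]

lemma det_kirchhoff_submatrix_eq_sum (w : γ → γ → ℝ) (r : γ) :
    ((kirchhoff w).submatrix (fun v : {v : γ // v ≠ r} => (v : γ))
        (fun v : {v : γ // v ≠ r} => (v : γ))).det =
      ∑ f ∈ Fintype.piFinset fun u : {v : γ // v ≠ r} => univ.erase (u : γ),
        (∏ u, w (f u) u) * (1 - parentMatrix r f).det := by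
  have hexp := (detRowAlternating (R := ℝ) (n := {v : γ // v ≠ r})).map_sum_finset
    (fun u k => w k u • ((1 : Matrix {v : γ // v ≠ r} {v : γ // v ≠ r} ℝ) u -
        fun v : {v : γ // v ≠ r} => if (v : γ) = k then 1 else 0)) fun u => univ.erase (u : γ)
  have hrows : (kirchhoff w).submatrix (fun v : {v : γ // v ≠ r} => (v : γ))
      (fun v : {v : γ // v ≠ r} => (v : γ)) = _ := funext (kirchhoff_submatrix_row w)
  rw [hrows]
  refine hexp.trans (sum_congr rfl fun f _ => ?_)
  exact (detRowAlternating.map_smul_univ (fun u => w (f u) u)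
    (1 - parentMatrix r f : Matrix {v : γ // v ≠ r} {v : γ // v ≠ r} ℝ)).trans
    (smul_eq_mul _ _)

lemma arcWt_arcsOf (w : γ → γ → ℝ) (f : {v : γ // v ≠ r} → γ) :
    arcWt w (arcsOf r f) = ∏ u, w (f u) u :=
  prod_image fun _ _ _ _ h => Subtype.ext (congrArg Prod.snd h)

lemma arcsOf_injective : Function.Injective (arcsOf r) := by
  intro f g hfg
  funext u
  have hu : (f u, (u : γ)) ∈ arcsOf r g := hfg ▸ mem_arcsOf.2 ⟨u.2, rfl⟩
  exact (mem_arcsOf.1 hu).2.symm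

lemma isDivTreeFrom_arcsOf (hloop : ∀ u, f u ≠ u) (hf : ReachesRoot r f) :
    IsDivTreeFrom r (arcsOf r f) := by
  refine ⟨?_, fun v hv => card_eq_one.2 ⟨(f ⟨v, hv⟩, v), ?_⟩, fun a ha => (mem_arcsOf.1 ha).1 rfl,
    hf.acyclic⟩
  · rintro ⟨x, y⟩ hxy
    obtain ⟨hy, rfl⟩ := mem_arcsOf.1 hxy
    exact hloop _
  · ext ⟨x, y⟩
    simp only [mem_filter, mem_arcsOf, mem_singleton, Prod.mk.injEq]
    constructor
    · rintro ⟨⟨hy, rfl⟩, rfl⟩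
      exact ⟨rfl, rfl⟩
    · rintro ⟨rfl, rfl⟩
      exact ⟨⟨hv, rfl⟩, rfl⟩

lemma exists_arcsOf_eq_of_isDivTreeFrom {T : Finset (γ × γ)} (hT : IsDivTreeFrom r T) :
    ∃ f : {v : γ // v ≠ r} → γ, (∀ u, f u ≠ u) ∧ arcsOf r f = T := by
  obtain ⟨hloop, hin, hroot, -⟩ := hT
  choose p hp using fun u : {v : γ // v ≠ r} => card_eq_one.1 (hin u u.2)
  have hmem (u : {v : γ // v ≠ r}) : p u ∈ T ∧ (p u).2 = u :=
    mem_filter.1 ((hp u).ge (mem_singleton_self _))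
  refine ⟨fun u => (p u).1, fun u h => hloop _ (hmem u).1 (h.trans (hmem u).2.symm), ?_⟩
  ext ⟨x, y⟩
  rw [mem_arcsOf]
  constructor
  · rintro ⟨hy, rfl⟩
    convert (hmem ⟨y, hy⟩).1
    exact (hmem ⟨y, hy⟩).2.symm
  · intro hxy
    have hy : y ≠ r := fun h => hroot x (h ▸ hxy)
    have hp_eq : (x, y) = p ⟨y, hy⟩ := mem_singleton.1 (hp ⟨y, hy⟩ ▸ mem_filter.2 ⟨hxy, rfl⟩)
    exact ⟨hy, by rw [← hp_eq]⟩

lemma image_arcsOf_eq_divTrees :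
    ((Fintype.piFinset fun u : {v : γ // v ≠ r} => univ.erase (u : γ)).filter
      (ReachesRoot r)).image (arcsOf r) = univ.filter (IsDivTreeFrom r) := by
  ext T
  simp only [mem_image, mem_filter, Fintype.mem_piFinset, mem_erase, mem_univ, and_true, true_and]
  constructor
  · rintro ⟨f, ⟨hloop, hf⟩, rfl⟩
    exact isDivTreeFrom_arcsOf hloop hf
  · intro hT
    obtain ⟨f, hloop, rfl⟩ := exists_arcsOf_eq_of_isDivTreeFrom hT
    exact ⟨f, ⟨hloop, reachesRoot_of_acyclic hT.2.2.2⟩, rfl⟩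

theorem det_kirchhoff_submatrix_eq_sum_divTrees (w : γ → γ → ℝ) (r : γ) :
    ((kirchhoff w).submatrix (fun v : {v : γ // v ≠ r} => (v : γ))
        (fun v : {v : γ // v ≠ r} => (v : γ))).det =
      ∑ T ∈ univ.filter (IsDivTreeFrom r), arcWt w T := by
  rw [det_kirchhoff_submatrix_eq_sum, ← image_arcsOf_eq_divTrees,
    sum_image arcsOf_injective.injOn, sum_filter]
  refine sum_congr rfl fun f _ => ?_
  split_ifs with hf
  · rw [det_one_sub_parentMatrix_of_reachesRoot hf, mul_one, arcWt_arcsOf]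
  · rw [det_one_sub_parentMatrix_of_not_reachesRoot hf, mul_zero]

end MatrixTree

lemma kirchhoff_apply_self {α : Type*} [Fintype α] [DecidableEq α] (ε : α → α → ℝ) (i : α) :
    kirchhoff ε i i = ∑ k, ε k i - ε i i := by
  rw [kirchhoff, of_apply, if_pos rfl, sum_erase_eq_sub (mem_univ i)]

lemma kirchhoff_apply_of_ne {α : Type*} [Fintype α] [DecidableEq α] (ε : α → α → ℝ) {i j : α}
    (h : i ≠ j) : kirchhoff ε i j = -ε j i := by
  rw [kirchhoff, of_apply, if_neg h]

lemma kirchhoff_contractWt_some {n : ℕ} (ε : Fin n → Fin n → ℝ) (φ : Finset (Fin n))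
    (a b : {v : Fin n // v ∉ φ}) :
    kirchhoff (contractWt ε φ) (some a) (some b) = kirchhoff ε a b := by
  obtain rfl | hab := eq_or_ne a b
  · have hcol : ∑ k, contractWt ε φ k (some a) = ∑ k, ε k a := by
      rw [Fintype.sum_option, ← sum_add_sum_compl φ]
      exact congrArg _ (sum_subtype φᶜ (fun _ => mem_compl) (ε · a)).symm
    rw [kirchhoff_apply_self, kirchhoff_apply_self, hcol]
    rfl
  · rw [kirchhoff_apply_of_ne _ (Option.some_injective _ |>.ne hab),
      kirchhoff_apply_of_ne _ (Subtype.coe_ne_coe.2 hab)]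
    rfl

theorem principal_minor_eq_contracted_trees_general (n : ℕ) (ε : Fin n → Fin n → ℝ)
    (φ : Finset (Fin n)) :
    ((kirchhoff ε).submatrix (fun v : {v : Fin n // v ∉ φ} => (v : Fin n))
        (fun v : {v : Fin n // v ∉ φ} => (v : Fin n))).det
      = ∑ T ∈ Finset.univ.filter
            (IsDivTreeFrom (none : Option {v : Fin n // v ∉ φ})),
          arcWt (contractWt ε φ) T := by
  let e : {v : Fin n // v ∉ φ} ≃ {v : Option {v : Fin n // v ∉ φ} // v ≠ none} :=
    (Equiv.optionIsSomeEquiv _).symm.trans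
      (Equiv.subtypeEquivRight fun _ => Option.isSome_iff_ne_none)
  rw [← MatrixTree.det_kirchhoff_submatrix_eq_sum_divTrees, ← det_submatrix_equiv_self e]
  congr 1
  ext a b
  exact (kirchhoff_contractWt_some ε φ a b).symm

/-- **Lemma 2** (principal minors of the Kirchhoff matrix via contraction). For any
nonempty `φ ⊆ V`, `det L_{−φ} = ε(𝒯_{φ*})`: the principal minor of `L(Γ)` obtained by
deleting the rows and columns of `φ` equals the total weight of the spanning trees of
the contracted digraph `Γ_φ` diverging from the contracted vertex `φ*`. -/
theorem principal_minor_eq_contracted_trees (n : ℕ) (ε : Fin n → Fin n → ℝ)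
    (hdiag : ∀ a, ε a a = 0) (φ : Finset (Fin n)) (hφ : φ.Nonempty) :
    ((kirchhoff ε).submatrix (fun v : {v : Fin n // v ∉ φ} => (v : Fin n))
        (fun v : {v : Fin n // v ∉ φ} => (v : Fin n))).det
      = ∑ T ∈ Finset.univ.filter
            (IsDivTreeFrom (none : Option {v : Fin n // v ∉ φ})),
          arcWt (contractWt ε φ) T :=
  principal_minor_eq_contracted_trees_general n ε φ
end

section
/- Lemma 3 (Fiedler–Sedláček). Let Γ be a weighted digraph on a finite vertex set V = {1,…,n}. For any subset φ ⊆ V, det L_{−φ} = ε(𝔉_φ), i.e., the determinant of the principal submatrix of L(Γ) obtained by deleting the rows and columns indexed by φ equals the sum of the weights of the spanning diverging forests of Γ whose set of roots is exactly φ. (For φ = ∅ both sides are zero, and for φ = V both sides equal 1.) -/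
open scoped Classical

/-- The set `𝔉_φ` of spanning diverging forests whose set of roots is exactly `φ`. -/
noncomputable def divForestsRootedAt {α : Type*} [Fintype α] [DecidableEq α]
    (φ : Finset α) : Finset (Finset (α × α)) :=
  Finset.univ.filter fun F => IsDivForest F ∧ rootSet F = φ

section Aux

variable {n : ℕ} (φ : Finset (Fin n))

/-- The arc set of the functional digraph of a parent function `r`. -/
noncomputable def fGraph (r : {v : Fin n // v ∉ φ} → Fin n) : Finset (Fin n × Fin n) :=
  Finset.univ.image fun i : {v : Fin n // v ∉ φ} => (r i, (i : Fin n))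

lemma mem_fGraph {r : {v : Fin n // v ∉ φ} → Fin n} {p : Fin n × Fin n} :
    p ∈ fGraph φ r ↔ ∃ i : {v : Fin n // v ∉ φ}, r i = p.1 ∧ (i : Fin n) = p.2 := by
  simp [fGraph, Prod.ext_iff]

/-- The elementary row `e_i - e_k` (restricted to indices outside `φ`). -/
noncomputable def vRow (i : {v : Fin n // v ∉ φ}) (k : Fin n) :
    {v : Fin n // v ∉ φ} → ℝ :=
  fun j => (if (j : Fin n) = (i : Fin n) then 1 else 0) - (if (j : Fin n) = k then 1 else 0)

/-- The 0/1 matrix `I - P` where `P` is the parent incidence. -/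
noncomputable def rowMat (r : {v : Fin n // v ∉ φ} → Fin n) :
    Matrix {v : Fin n // v ∉ φ} {v : Fin n // v ∉ φ} ℝ :=
  Matrix.of fun i => vRow φ i (r i)

lemma det_rowMat_eq_one (r : {v : Fin n // v ∉ φ} → Fin n)
    (hr : ∀ i : {v : Fin n // v ∉ φ}, r i ≠ (i : Fin n))
    (hacyc : ∀ a, ¬ Relation.TransGen (fun x y : Fin n => (x, y) ∈ fGraph φ r) a a) :
    (rowMat φ r).det = 1 := by
  rw [Matrix.det_apply]
  rw [Finset.sum_eq_single 1]
  · have : ∀ i : {v : Fin n // v ∉ φ}, rowMat φ r i i = 1 := by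
      intro i
      simp [rowMat, vRow, (hr i).symm]
    simp [this]
  · intro σ _ hσ
    have hprod : (∏ i, rowMat φ r (σ i) i) = 0 := by
      by_contra hne
      have hfac : ∀ i, rowMat φ r (σ i) i ≠ 0 := by
        intro i
        exact Finset.prod_ne_zero_iff.mp hne i (Finset.mem_univ i)
      -- every moved point gives an arc i → σ i
      have harc : ∀ i, σ i ≠ i →
          ((i : Fin n), ((σ i : {v : Fin n // v ∉ φ}) : Fin n)) ∈ fGraph φ r := by
        intro i h
        have h2 : ((i : Fin n) : Fin n) ≠ ((σ i : {v : Fin n // v ∉ φ}) : Fin n) := by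
          intro hEq
          exact h (Subtype.coe_injective hEq).symm
        have := hfac i
        simp only [rowMat, Matrix.of_apply, vRow] at this
        rw [if_neg h2] at this
        have : (i : Fin n) = r (σ i) := by
          by_contra hcon
          rw [if_neg hcon] at this
          simp at this
        exact (mem_fGraph φ).mpr ⟨σ i, this.symm, rfl⟩
      obtain ⟨i0, hi0⟩ : ∃ i, σ i ≠ i := by
        by_contra hall
        push_neg at hall
        exact hσ (Equiv.ext hall)
      have hmove : ∀ t : ℕ, σ ((σ ^ t) i0) ≠ (σ ^ t) i0 := by
        intro t hEq
        have hc : σ ((σ ^ t) i0) = (σ ^ t) (σ i0) := by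
          rw [← Equiv.Perm.mul_apply, ← Equiv.Perm.mul_apply, ← pow_succ', ← pow_succ]
        rw [hc] at hEq
        exact hi0 ((σ ^ t).injective hEq)
      have hchain : ∀ t : ℕ, Relation.TransGen
          (fun x y : Fin n => (x, y) ∈ fGraph φ r) (i0 : Fin n) (((σ ^ (t + 1)) i0 : _) : Fin n) := by
        intro t
        induction t with
        | zero =>
          refine Relation.TransGen.single ?_
          have := harc i0 hi0
          simpa using this
        | succ t ih =>
          refine Relation.TransGen.tail ih ?_
          have h1 := harc ((σ ^ (t + 1)) i0) (hmove (t + 1))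
          have hc : σ ((σ ^ (t + 1)) i0) = (σ ^ (t + 2)) i0 := by
            rw [← Equiv.Perm.mul_apply, ← pow_succ']
          rw [hc] at h1
          exact h1
      have hord : orderOf σ ≥ 1 := orderOf_pos σ
      obtain ⟨s, hs⟩ : ∃ s, orderOf σ = s + 1 := ⟨orderOf σ - 1, by omega⟩
      have := hchain s
      rw [← hs, pow_orderOf_eq_one σ] at this
      simp at this
      exact hacyc _ this
    rw [hprod, smul_zero]
  · simp

lemma det_rowMat_eq_zero (r : {v : Fin n // v ∉ φ} → Fin n) (a : Fin n)
    (hcyc : Relation.TransGen (fun x y : Fin n => (x, y) ∈ fGraph φ r) a a) :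
    (rowMat φ r).det = 0 := by
  classical
  set R := fun x y : Fin n => (x, y) ∈ fGraph φ r with hR
  -- a is the target of an arc, hence a ∉ φ
  have ha : a ∉ φ := by
    have hx : ∃ x, R x a := by
      cases hcyc with
      | single h => exact ⟨a, h⟩
      | tail _ h => exact ⟨_, h⟩
    obtain ⟨x, hx⟩ := hx
    obtain ⟨i, _, hi2⟩ := (mem_fGraph φ).mp hx
    have := i.2
    rw [hi2] at this
    exact this
  set j0 : {v : Fin n // v ∉ φ} := ⟨a, ha⟩ with hj0
  -- the "parent" map inside the complement of φ
  set g : {v : Fin n // v ∉ φ} → {v : Fin n // v ∉ φ} :=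
    fun j => if h : r j ∉ φ then ⟨r j, h⟩ else j with hg
  -- backward chain lemma
  have chain : ∀ (x : Fin n) (jy : {v : Fin n // v ∉ φ}),
      Relation.TransGen R x (jy : Fin n) →
      ∃ m, x = r (g^[m] jy) ∧ ∀ t < m, r (g^[t] jy) ∉ φ := by
    intro x jy h
    induction h using Relation.TransGen.head_induction_on with
    | single h' =>
      obtain ⟨i, hi1, hi2⟩ := (mem_fGraph φ).mp h'
      have hijy : i = jy := Subtype.coe_injective hi2
      subst hijy
      exact ⟨0, by simpa using hi1.symm, by omega⟩
    | head h' hmid ihp =>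
      obtain ⟨m', hm1, hm2⟩ := ihp
      obtain ⟨j, hj1, hj2⟩ := (mem_fGraph φ).mp h'
      have hcphi : r (g^[m'] jy) ∉ φ := by
        have := j.2
        rw [hj2] at this
        rw [← hm1]
        exact this
      have hstep : g^[m' + 1] jy = j := by
        rw [Function.iterate_succ_apply']
        rw [hg]
        simp only
        rw [dif_pos hcphi]
        apply Subtype.coe_injective
        simp only [← hm1] at hj2 ⊢
        exact hm1.symm.trans hj2.symm
      refine ⟨m' + 1, ?_, ?_⟩
      · rw [hstep]
        exact hj1.symm
      · intro t ht
        rcases Nat.lt_succ_iff_lt_or_eq.mp ht with h | h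
        · exact hm2 t h
        · subst h; exact hcphi
  obtain ⟨m, hm1, hm2⟩ := chain a j0 hcyc
  set k := m + 1 with hk
  have hmphi : r (g^[m] j0) ∉ φ := by rw [← hm1]; exact ha
  have hper : g^[k] j0 = j0 := by
    have h1 : ((g (g^[m] j0) : {v : Fin n // v ∉ φ}) : Fin n) = r (g^[m] j0) := by
      rw [hg]; simp only; rw [dif_pos hmphi]
    rw [hk, Function.iterate_succ_apply']
    apply Subtype.coe_injective
    show ((g (g^[m] j0)) : Fin n) = (j0 : Fin n)
    rw [h1, ← hm1]
  have hnophi : ∀ t < k, r (g^[t] j0) ∉ φ := by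
    intro t ht
    rcases Nat.lt_succ_iff_lt_or_eq.mp ht with h | h
    · exact hm2 t h
    · subst h; exact hmphi
  set C : Finset {v : Fin n // v ∉ φ} := (Finset.range k).image (fun t => g^[t] j0) with hC
  have hj0C : j0 ∈ C := by
    rw [hC]
    exact Finset.mem_image.mpr ⟨0, Finset.mem_range.mpr (by rw [hk]; omega), rfl⟩
  have hCg : ∀ v ∈ C, ((g v : {v : Fin n // v ∉ φ}) : Fin n) = r v := by
    intro v hv
    obtain ⟨t, ht, rfl⟩ := Finset.mem_image.mp hv
    rw [hg]
    simp only
    rw [dif_pos (hnophi t (Finset.mem_range.mp ht))]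
  have himg : C.image g = C := by
    apply subset_antisymm
    · intro w hw
      obtain ⟨v, hv, rfl⟩ := Finset.mem_image.mp hw
      obtain ⟨t, ht, rfl⟩ := Finset.mem_image.mp hv
      have ht' := Finset.mem_range.mp ht
      rw [← Function.iterate_succ_apply' g t j0]
      rcases Nat.lt_or_ge (t + 1) k with h | h
      · exact Finset.mem_image.mpr ⟨t + 1, Finset.mem_range.mpr h, rfl⟩
      · have h3 : (t + 1 : ℕ) = k := by omega
        have h4 : g^[t+1] j0 ∈ C := by rw [h3, hper]; exact hj0C
        exact h4
    · intro v hv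
      obtain ⟨t, ht, rfl⟩ := Finset.mem_image.mp hv
      rcases Nat.eq_zero_or_pos t with h | h
      · subst h
        refine Finset.mem_image.mpr ⟨g^[m] j0, ?_, ?_⟩
        · exact Finset.mem_image.mpr ⟨m, Finset.mem_range.mpr (by rw [hk]; omega), rfl⟩
        · rw [← Function.iterate_succ_apply' g m j0]
          show g^[m+1] j0 = j0
          rw [← hk]
          exact hper
      · obtain ⟨s, rfl⟩ : ∃ s, t = s + 1 := ⟨t - 1, by omega⟩
        refine Finset.mem_image.mpr ⟨g^[s] j0, ?_, ?_⟩
        · exact Finset.mem_image.mpr ⟨s, Finset.mem_range.mpr (by have ht2 := Finset.mem_range.mp ht; omega), rfl⟩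
        · rw [← Function.iterate_succ_apply' g s j0]
  have hinj : Set.InjOn g C := Finset.injOn_of_card_image_eq (by rw [himg])
  rw [← Matrix.exists_vecMul_eq_zero_iff]
  refine ⟨fun j => if j ∈ C then (1 : ℝ) else 0, ?_, ?_⟩
  · intro hzero
    have := congrFun hzero j0
    rw [if_pos hj0C] at this
    simpa using this
  · funext j
    have hone : ∀ f : {v : Fin n // v ∉ φ} → ℝ,
        (∑ v, (if v ∈ C then (1:ℝ) else 0) * f v) = ∑ v ∈ C, f v := by
      intro f
      have hterm : ∀ v, (if v ∈ C then (1:ℝ) else 0) * f v = if v ∈ C then f v else 0 := by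
        intro v; by_cases h : v ∈ C <;> simp [h]
      rw [Finset.sum_congr rfl fun v _ => hterm v, ← Finset.sum_filter,
        Finset.filter_mem_eq_inter, Finset.univ_inter]
    show (∑ v, (if v ∈ C then (1:ℝ) else 0) * rowMat φ r v j) = 0
    rw [hone]
    have hsplit : ∑ v ∈ C, rowMat φ r v j =
        (∑ v ∈ C, if (j : Fin n) = (v : Fin n) then (1:ℝ) else 0)
        - ∑ v ∈ C, (if (j : Fin n) = r v then (1:ℝ) else 0) := by
      rw [← Finset.sum_sub_distrib]
      rfl
    rw [hsplit]
    have h1 : (∑ v ∈ C, if (j : Fin n) = (v : Fin n) then (1:ℝ) else 0)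
        = if j ∈ C then 1 else 0 := by
      simp only [Subtype.coe_inj]
      exact Finset.sum_ite_eq C j (fun _ => (1:ℝ))
    have h2 : (∑ v ∈ C, if (j : Fin n) = r v then (1:ℝ) else 0)
        = if j ∈ C then 1 else 0 := by
      have hterm : ∀ v ∈ C, (if (j : Fin n) = r v then (1:ℝ) else 0)
          = if j = g v then 1 else 0 := by
        intro v hv
        simp only [← hCg v hv, Subtype.coe_inj]
      rw [Finset.sum_congr rfl hterm]
      have h2' : ∑ w ∈ C.image g, (if j = w then (1:ℝ) else 0)
          = ∑ v ∈ C, if j = g v then (1:ℝ) else 0 :=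
        Finset.sum_image (fun x hx y hy h => hinj hx hy h)
      rw [← h2', himg]
      exact Finset.sum_ite_eq C j (fun _ => (1:ℝ))
    rw [h1, h2]
    simp


lemma fGraph_forest (r : {v : Fin n // v ∉ φ} → Fin n) (hr : ∀ i, r i ≠ (i : Fin n))
    (hacyc : ∀ a, ¬ Relation.TransGen (fun x y : Fin n => (x, y) ∈ fGraph φ r) a a) :
    IsDivForest (fGraph φ r) := by
  refine ⟨?_, ?_, hacyc⟩
  · intro p hp
    obtain ⟨i, h1, h2⟩ := (mem_fGraph φ).mp hp
    rw [← h1, ← h2]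
    exact hr i
  · intro b
    apply Finset.card_le_one.mpr
    intro p hp q hq
    rw [Finset.mem_filter] at hp hq
    obtain ⟨i, hi1, hi2⟩ := (mem_fGraph φ).mp hp.1
    obtain ⟨i', hi1', hi2'⟩ := (mem_fGraph φ).mp hq.1
    have hii : i = i' := Subtype.coe_injective
      (show ((i : Fin n)) = (i' : Fin n) by rw [hi2, hi2', hp.2, hq.2])
    subst hii
    have hpe : p = (r i, (i : Fin n)) := by
      rw [Prod.ext_iff]; exact ⟨hi1.symm, hi2.symm⟩
    have hqe : q = (r i, (i : Fin n)) := by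
      rw [Prod.ext_iff]; exact ⟨hi1'.symm, hi2'.symm⟩
    rw [hpe, hqe]

lemma rootSet_fGraph (r : {v : Fin n // v ∉ φ} → Fin n) : rootSet (fGraph φ r) = φ := by
  ext v
  simp only [rootSet, Finset.mem_filter, Finset.mem_univ, true_and]
  constructor
  · intro h
    by_contra hv
    exact h (r ⟨v, hv⟩) ((mem_fGraph φ).mpr ⟨⟨v, hv⟩, rfl, rfl⟩)
  · intro hv a ha
    obtain ⟨i, _, hi2⟩ := (mem_fGraph φ).mp ha
    have := i.2
    rw [hi2] at this
    exact this hv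

lemma parent_uniq_fGraph (r : {v : Fin n // v ∉ φ} → Fin n) {a : Fin n}
    {i : {v : Fin n // v ∉ φ}} (h : (a, (i : Fin n)) ∈ fGraph φ r) : a = r i := by
  obtain ⟨i', h1, h2⟩ := (mem_fGraph φ).mp h
  have : i' = i := Subtype.coe_injective h2
  subst this
  exact h1.symm

/-- The parent function of a forest whose roots are exactly `φ`. -/
noncomputable def parentFn (F : Finset (Fin n × Fin n)) : {v : Fin n // v ∉ φ} → Fin n :=
  fun i => if h : ∃ a, (a, (i : Fin n)) ∈ F then h.choose else (i : Fin n)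

lemma forest_uniq {F : Finset (Fin n × Fin n)}
    (h : ∀ b, (F.filter fun p => p.2 = b).card ≤ 1)
    {a b v : Fin n} (ha : (a, v) ∈ F) (hb : (b, v) ∈ F) : a = b := by
  have := Finset.card_le_one.mp (h v) (a, v)
    (Finset.mem_filter.mpr ⟨ha, rfl⟩) (b, v) (Finset.mem_filter.mpr ⟨hb, rfl⟩)
  exact congrArg Prod.fst this

lemma exists_parent {F : Finset (Fin n × Fin n)} (hroot : rootSet F = φ)
    (i : {v : Fin n // v ∉ φ}) : ∃ a, (a, (i : Fin n)) ∈ F := by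
  have : (i : Fin n) ∉ rootSet F := by rw [hroot]; exact i.2
  simp only [rootSet, Finset.mem_filter, Finset.mem_univ, true_and] at this
  push_neg at this
  exact this

lemma parentFn_mem {F : Finset (Fin n × Fin n)} (hroot : rootSet F = φ)
    (i : {v : Fin n // v ∉ φ}) : (parentFn φ F i, (i : Fin n)) ∈ F := by
  rw [parentFn, dif_pos (exists_parent φ hroot i)]
  exact (exists_parent φ hroot i).choose_spec

lemma fGraph_parentFn {F : Finset (Fin n × Fin n)} (hF : IsDivForest F)
    (hroot : rootSet F = φ) : fGraph φ (parentFn φ F) = F := by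
  ext p
  constructor
  · intro hp
    obtain ⟨i, h1, h2⟩ := (mem_fGraph φ).mp hp
    have := parentFn_mem φ hroot i
    rw [h1, h2] at this
    rwa [← Prod.mk.eta (p := p)]
  · intro hp
    have hp2 : p.2 ∉ φ := by
      intro hmem
      have : p.2 ∈ rootSet F := by rw [hroot]; exact hmem
      simp only [rootSet, Finset.mem_filter, Finset.mem_univ, true_and] at this
      exact this p.1 (by rwa [Prod.mk.eta])
    set i : {v : Fin n // v ∉ φ} := ⟨p.2, hp2⟩ with hi
    have h1 : (parentFn φ F i, (i : Fin n)) ∈ F := parentFn_mem φ hroot i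
    have h2 : parentFn φ F i = p.1 :=
      forest_uniq hF.2.1 h1 (by rwa [Prod.mk.eta])
    exact (mem_fGraph φ).mpr ⟨i, h2, rfl⟩

lemma arcWt_fGraph (ε : Fin n → Fin n → ℝ) (r : {v : Fin n // v ∉ φ} → Fin n) :
    arcWt ε (fGraph φ r) = ∏ i : {v : Fin n // v ∉ φ}, ε (r i) (i : Fin n) := by
  rw [arcWt, fGraph, Finset.prod_image]
  · intro x _ y _ h
    exact Subtype.coe_injective (congrArg Prod.snd h)

end Aux


/-- **Lemma 3** (Fiedler–Sedláček). For any `φ ⊆ V`, `det L_{−φ} = ε(𝔉_φ)`: the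
principal minor of `L(Γ)` obtained by deleting the rows and columns of `φ` equals the
total weight of the spanning diverging forests of `Γ` whose set of roots is exactly
`φ`. -/
theorem principal_minor_eq_forests (n : ℕ) (ε : Fin n → Fin n → ℝ)
    (hdiag : ∀ a, ε a a = 0) (φ : Finset (Fin n)) :
    ((kirchhoff ε).submatrix (fun v : {v : Fin n // v ∉ φ} => (v : Fin n))
        (fun v : {v : Fin n // v ∉ φ} => (v : Fin n))).det
      = ∑ F ∈ divForestsRootedAt φ, arcWt ε F := by
  classical
  -- Step 1: expand the determinant by multilinearity in the rows.
  have hrow : ((kirchhoff ε).submatrix (fun v : {v : Fin n // v ∉ φ} => (v : Fin n))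
        (fun v : {v : Fin n // v ∉ φ} => (v : Fin n)))
      = fun i : {v : Fin n // v ∉ φ} =>
          ∑ k ∈ Finset.univ.erase (i : Fin n), ε k (i : Fin n) • vRow φ i k := by
    funext i j
    rw [Finset.sum_apply]
    simp only [Matrix.submatrix_apply, kirchhoff, Matrix.of_apply]
    by_cases h : (j : Fin n) = (i : Fin n)
    · rw [if_pos h.symm]
      refine Finset.sum_congr rfl ?_
      intro k hk
      have hknei : k ≠ (i : Fin n) := Finset.ne_of_mem_erase hk
      have hjk : ¬ ((j : Fin n) = k) := by rw [h]; exact fun hh => hknei hh.symm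
      have hik : ¬ ((i : Fin n) = k) := fun hh => hknei hh.symm
      simp [vRow, h, hjk, hik]
    · rw [if_neg (fun hh => h hh.symm)]
      have hterm : ∀ k ∈ Finset.univ.erase (i : Fin n),
          (ε k (i : Fin n) • vRow φ i k) j
            = if (j : Fin n) = k then -ε k (i : Fin n) else 0 := by
        intro k hk
        have hknei : k ≠ (i : Fin n) := Finset.ne_of_mem_erase hk
        by_cases hjk : (j : Fin n) = k
        · simp [vRow, h, hjk, hknei]
        · simp [vRow, h, hjk]
      rw [Finset.sum_congr rfl hterm,
        Finset.sum_ite_eq (Finset.univ.erase (i : Fin n)) (j : Fin n)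
          (fun k => -ε k (i : Fin n)),
        if_pos (Finset.mem_erase.mpr ⟨h, Finset.mem_univ _⟩)]
  have hdet : ((kirchhoff ε).submatrix (fun v : {v : Fin n // v ∉ φ} => (v : Fin n))
        (fun v : {v : Fin n // v ∉ φ} => (v : Fin n))).det
      = ∑ r ∈ Fintype.piFinset
          (fun i : {v : Fin n // v ∉ φ} => Finset.univ.erase (i : Fin n)),
          (∏ i, ε (r i) (i : Fin n)) * (rowMat φ r).det := by
    calc ((kirchhoff ε).submatrix (fun v : {v : Fin n // v ∉ φ} => (v : Fin n))
        (fun v : {v : Fin n // v ∉ φ} => (v : Fin n))).det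
        = Matrix.detRowAlternating (fun i : {v : Fin n // v ∉ φ} =>
            ∑ k ∈ Finset.univ.erase (i : Fin n), ε k (i : Fin n) • vRow φ i k) := by
          rw [← hrow]
          rfl
      _ = ∑ r ∈ Fintype.piFinset
            (fun i : {v : Fin n // v ∉ φ} => Finset.univ.erase (i : Fin n)),
            Matrix.detRowAlternating
              (fun i : {v : Fin n // v ∉ φ} => ε (r i) (i : Fin n) • vRow φ i (r i)) :=
          (Matrix.detRowAlternating (R := ℝ)
            (n := {v : Fin n // v ∉ φ})).toMultilinearMap.map_sum_finset
            (fun i k => ε k (i : Fin n) • vRow φ i k)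
            (fun i => Finset.univ.erase (i : Fin n))
      _ = ∑ r ∈ Fintype.piFinset
            (fun i : {v : Fin n // v ∉ φ} => Finset.univ.erase (i : Fin n)),
            (∏ i, ε (r i) (i : Fin n)) * (rowMat φ r).det := by
          refine Finset.sum_congr rfl ?_
          intro r _
          have := (Matrix.detRowAlternating (R := ℝ)
            (n := {v : Fin n // v ∉ φ})).toMultilinearMap.map_smul_univ
            (fun i => ε (r i) (i : Fin n)) (fun i => vRow φ i (r i))
          rw [smul_eq_mul] at this
          exact this
  rw [hdet]
  -- Step 2: each elementary determinant is 1 or 0.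
  have hsplit : ∀ r ∈ Fintype.piFinset
      (fun i : {v : Fin n // v ∉ φ} => Finset.univ.erase (i : Fin n)),
      (∏ i, ε (r i) (i : Fin n)) * (rowMat φ r).det
        = if (∀ a, ¬ Relation.TransGen (fun x y : Fin n => (x, y) ∈ fGraph φ r) a a)
            then ∏ i, ε (r i) (i : Fin n) else 0 := by
    intro r hr
    have hrne : ∀ i, r i ≠ (i : Fin n) := fun i =>
      (Finset.mem_erase.mp ((Fintype.mem_piFinset.mp hr) i)).1
    by_cases hcyc : ∀ a, ¬ Relation.TransGen (fun x y : Fin n => (x, y) ∈ fGraph φ r) a a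
    · rw [det_rowMat_eq_one φ r hrne hcyc, mul_one, if_pos hcyc]
    · rw [if_neg hcyc]
      push_neg at hcyc
      obtain ⟨a, ha⟩ := hcyc
      rw [det_rowMat_eq_zero φ r a ha, mul_zero]
  rw [Finset.sum_congr rfl hsplit, ← Finset.sum_filter]
  -- Step 3: acyclic parent functions biject with forests rooted at φ.
  refine Finset.sum_bij' (fun r _ => fGraph φ r) (fun F _ => parentFn φ F) ?_ ?_ ?_ ?_ ?_
  · intro r hr
    rw [Finset.mem_filter] at hr
    have hrne : ∀ i, r i ≠ (i : Fin n) := fun i =>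
      (Finset.mem_erase.mp ((Fintype.mem_piFinset.mp hr.1) i)).1
    simp only [divForestsRootedAt, Finset.mem_filter, Finset.mem_univ, true_and]
    exact ⟨fGraph_forest φ r hrne hr.2, rootSet_fGraph φ r⟩
  · intro F hF
    simp only [divForestsRootedAt, Finset.mem_filter, Finset.mem_univ, true_and] at hF
    rw [Finset.mem_filter]
    constructor
    · rw [Fintype.mem_piFinset]
      intro i
      refine Finset.mem_erase.mpr ⟨?_, Finset.mem_univ _⟩
      exact hF.1.1 _ (parentFn_mem φ hF.2 i)
    · rw [fGraph_parentFn φ hF.1 hF.2]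
      exact hF.1.2.2
  · intro r hr
    funext i
    have hmem : (r i, (i : Fin n)) ∈ fGraph φ r := (mem_fGraph φ).mpr ⟨i, rfl, rfl⟩
    have hex : ∃ a, (a, (i : Fin n)) ∈ fGraph φ r := ⟨r i, hmem⟩
    simp only [parentFn]
    rw [dif_pos hex]
    exact parent_uniq_fGraph φ r hex.choose_spec
  · intro F hF
    simp only [divForestsRootedAt, Finset.mem_filter, Finset.mem_univ, true_and] at hF
    exact fGraph_parentFn φ hF.1 hF.2
  · intro r _
    exact (arcWt_fGraph φ ε r).symm
end

section
/- Lemma 4 (forest expansion of the Laplacian characteristic polynomial). Let Γ be a weighted digraph on a finite vertex set V = {1,…,n} and let p(λ) = det(λI + L(Γ)) = ∑_{k=0}^n c_k λ^k be the characteristic polynomial of −L(Γ). Then for every k = 0,…,n, c_k = ∑_{φ⊆V, |φ|=k} ε(𝔉_φ); equivalently, det(λI + L(Γ)) = ∑_{φ⊆V} ε(𝔉_φ) λ^{|φ|}. -/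
open scoped Classical

namespace ForestAux
open Polynomial Matrix
variable {n : ℕ}

/-- arc relation: `x` is the parent of `y`. -/
def Rel (f : Fin n → Option (Fin n)) (x y : Fin n) : Prop := f y = some x

def HasCyc (f : Fin n → Option (Fin n)) : Prop := ∃ a, Relation.TransGen (Rel f) a a

noncomputable def pfun (f : Fin n → Option (Fin n)) (i : Fin n) : Fin n := (f i).getD i

def Compat (f : Fin n → Option (Fin n)) (σ : Equiv.Perm (Fin n)) : Prop :=
  ∀ i, σ i ≠ i → f i = some (σ i)

lemma pfun_eq {f : Fin n → Option (Fin n)} {i k : Fin n} (h : f i = some k) : pfun f i = k := by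
  simp [pfun, h]

lemma transGen_iterate {f : Fin n → Option (Fin n)} {x y : Fin n}
    (h : Relation.TransGen (Rel f) x y) :
    ∃ m, 0 < m ∧ (pfun f)^[m] y = x ∧ ∀ j < m, f ((pfun f)^[j] y) ≠ none := by
  induction h with
  | single h =>
      exact ⟨1, Nat.one_pos, by simp [pfun_eq h], by
        intro j hj; interval_cases j; simp only [Function.iterate_zero, id]
        rw [h]; simp⟩
  | @tail b c hxb hbc ih =>
      obtain ⟨m, hm, hiter, hdef⟩ := ih
      refine ⟨m + 1, Nat.succ_pos _, ?_, ?_⟩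
      · rw [Function.iterate_add_apply]
        simpa [pfun_eq hbc] using hiter
      · intro j hj
        rcases Nat.eq_zero_or_pos j with rfl | hj0
        · simp only [Function.iterate_zero, id]; rw [hbc]; simp
        · obtain ⟨j', rfl⟩ := Nat.exists_eq_add_of_le hj0
          rw [Nat.add_comm 1 j', Function.iterate_add_apply]
          have : (pfun f)^[1] c = b := by simp [pfun_eq hbc]
          rw [this]
          exact hdef j' (by omega)


lemma compat_one (f : Fin n → Option (Fin n)) : Compat f 1 := fun i hi => absurd rfl hi

lemma eq_one_of_compat {f : Fin n → Option (Fin n)} {σ : Equiv.Perm (Fin n)}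
    (hnc : ¬ HasCyc f) (hc : Compat f σ) : σ = 1 := by
  by_contra h
  obtain ⟨i, hi⟩ : ∃ i, σ i ≠ i := by
    by_contra h'
    push_neg at h'
    exact h (Equiv.ext h')
  have hsupp : i ∈ σ.support := Equiv.Perm.mem_support.2 hi
  have key : ∀ j : ℕ, 0 < j → Relation.TransGen (Rel f) ((σ ^ j) i) i := by
    intro j hj
    induction j with
    | zero => omega
    | succ m ih =>
        have hmem : ∀ k : ℕ, (σ ^ k) i ∈ σ.support := by
          intro k
          induction k with
          | zero => simpa using hsupp
          | succ l ihl =>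
              rw [pow_succ', Equiv.Perm.mul_apply]
              exact Equiv.Perm.apply_mem_support.2 ihl
        rcases Nat.eq_zero_or_pos m with rfl | hm
        · refine Relation.TransGen.single ?_
          exact hc i hi
        · have step : Rel f ((σ ^ (m+1)) i) ((σ ^ m) i) := by
            have h1 : σ ((σ ^ m) i) ≠ (σ ^ m) i := Equiv.Perm.mem_support.1 (hmem m)
            have h2 := hc _ h1
            show f ((σ ^ m) i) = some ((σ ^ (m+1)) i)
            rw [pow_succ', Equiv.Perm.mul_apply]
            exact h2
          exact Relation.TransGen.head step (ih hm)
  have hord : (σ ^ orderOf σ) i = i := by rw [pow_orderOf_eq_one]; rfl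
  exact hnc ⟨i, by have := key (orderOf σ) (orderOf_pos σ); rwa [hord] at this⟩

lemma sum_compat_eq_zero {f : Fin n → Option (Fin n)} (hf : ∀ i, f i ≠ some i)
    (hcyc : HasCyc f) :
    ∑ σ ∈ Finset.univ.filter (Compat f),
      ((Equiv.Perm.sign σ : ℤ) * (-1) ^ σ.support.card) = 0 := by
  obtain ⟨a, htg⟩ := hcyc
  obtain ⟨m, hm, hit, hdef⟩ := transGen_iterate htg
  set p := pfun f with hp
  set O : Finset (Fin n) := (Finset.range m).image (fun j => p^[j] a) with hO
  have hmemO : ∀ x, x ∈ O ↔ ∃ j < m, p^[j] a = x := by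
    intro x; simp [hO, Finset.mem_image, Finset.mem_range]
  have haO : a ∈ O := (hmemO a).2 ⟨0, hm, rfl⟩
  have hfO : ∀ x ∈ O, f x ≠ none := by
    intro x hx; obtain ⟨j, hj, rfl⟩ := (hmemO x).1 hx; exact hdef j hj
  have hfsome : ∀ x ∈ O, f x = some (p x) := by
    intro x hx
    rcases Option.ne_none_iff_exists'.1 (hfO x hx) with ⟨k, hk⟩
    rw [hk]
    exact congrArg some (pfun_eq hk).symm
  -- iterates of a reduce mod m
  have hmulfix : ∀ q : ℕ, p^[m * q] a = a := by
    intro q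
    rw [Function.iterate_mul]
    exact Function.iterate_fixed hit q
  have hmod : ∀ j : ℕ, p^[j] a = p^[j % m] a := by
    intro j
    conv_lhs => rw [← Nat.mod_add_div j m]
    rw [Function.iterate_add_apply, hmulfix]
  have hiter_mem : ∀ j : ℕ, p^[j] a ∈ O := by
    intro j
    rw [hmod]
    exact (hmemO _).2 ⟨j % m, Nat.mod_lt _ hm, rfl⟩
  have hpO : ∀ x ∈ O, p x ∈ O := by
    intro x hx; obtain ⟨j, hj, rfl⟩ := (hmemO x).1 hx
    have : p (p^[j] a) = p^[j+1] a := (Function.iterate_succ_apply' p j a).symm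
    rw [this]; exact hiter_mem _
  have hpne : ∀ x ∈ O, p x ≠ x := by
    intro x hx heq
    have h1 := hfsome x hx
    rw [heq] at h1
    exact hf x h1
  have hfixm : ∀ x ∈ O, p^[m] x = x := by
    intro x hx; obtain ⟨j, hj, rfl⟩ := (hmemO x).1 hx
    rw [← Function.iterate_add_apply, Nat.add_comm, Function.iterate_add_apply, hit]
  have hpinj : ∀ x ∈ O, ∀ y ∈ O, p x = p y → x = y := by
    intro x hx y hy hxy
    have hx' : p^[m-1] (p x) = x := by
      have h1 : p^[m-1+1] x = x := by rw [Nat.sub_add_cancel hm]; exact hfixm x hx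
      rwa [Function.iterate_succ_apply] at h1
    have hy' : p^[m-1] (p y) = y := by
      have h1 : p^[m-1+1] y = y := by rw [Nat.sub_add_cancel hm]; exact hfixm y hy
      rwa [Function.iterate_succ_apply] at h1
    rw [← hx', ← hy', hxy]
  -- the cycle permutation
  have hinj : Function.Injective (fun x => if x ∈ O then p x else x) := by
    intro x y hxy
    simp only at hxy
    by_cases hx : x ∈ O <;> by_cases hy : y ∈ O
    · rw [if_pos hx, if_pos hy] at hxy; exact hpinj x hx y hy hxy
    · rw [if_pos hx, if_neg hy] at hxy; exact absurd (hxy ▸ hpO x hx) hy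
    · rw [if_neg hx, if_pos hy] at hxy; exact absurd (hxy ▸ hpO y hy) hx
    · rw [if_neg hx, if_neg hy] at hxy; exact hxy
  set c : Equiv.Perm (Fin n) :=
    Equiv.ofBijective _ (Finite.injective_iff_bijective.mp hinj) with hc
  have c_app : ∀ x, c x = if x ∈ O then p x else x := fun _ => rfl
  have hcO : ∀ x ∈ O, c x = p x := by intro x hx; rw [c_app, if_pos hx]
  have hcO' : ∀ x, x ∉ O → c x = x := by intro x hx; rw [c_app, if_neg hx]
  have hcinvO' : ∀ x, x ∉ O → c⁻¹ x = x := by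
    intro x hx
    apply c.injective
    rw [(Equiv.Perm.eq_inv_iff_eq.1 rfl : c (c⁻¹ x) = x), hcO' x hx]
  have hcinvO : ∀ x ∈ O, c⁻¹ x ∈ O := by
    intro x hx
    by_contra h
    have h1 : c (c⁻¹ x) = c⁻¹ x := hcO' _ h
    have h2 : c (c⁻¹ x) = x := Equiv.Perm.eq_inv_iff_eq.1 rfl
    rw [h2] at h1
    rw [← h1] at h
    exact h hx
  have supp_c : c.support = O := by
    ext x
    rw [Equiv.Perm.mem_support]
    constructor
    · intro h; by_contra hx; exact h (hcO' x hx)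
    · intro hx; rw [hcO x hx]; exact hpne x hx
  have cpow : ∀ (j : ℕ), ∀ x ∈ O, (c ^ j) x = p^[j] x := by
    intro j
    induction j with
    | zero => intro x _; simp
    | succ l ih =>
        intro x hx
        have hmem : p^[l] x ∈ O := by
          clear ih
          induction l with
          | zero => simpa using hx
          | succ l' ih' =>
              rw [Function.iterate_succ_apply']
              exact hpO _ ih'
        rw [pow_succ', Equiv.Perm.mul_apply, ih x hx, Function.iterate_succ_apply',
          hcO _ hmem]
  have hccyc : c.IsCycle := by
    refine ⟨a, ?_, ?_⟩
    · rw [hcO a haO]; exact hpne a haO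
    · intro y hy
      have hyO : y ∈ O := by
        by_contra h; exact hy (hcO' y h)
      obtain ⟨j, hj, rfl⟩ := (hmemO y).1 hyO
      exact ⟨(j : ℤ), by rw [zpow_natCast, cpow j a haO]⟩
  have sign_c : Equiv.Perm.sign c = -(-1) ^ O.card := by
    rw [hccyc.sign, supp_c]
  have hcne : c ≠ 1 := by
    intro h
    have := hcO a haO
    rw [h] at this
    exact hpne a haO this.symm
  -- compat closure
  have hsuppP : ∀ σ : Equiv.Perm (Fin n), Compat f σ → ∀ i ∈ σ.support, σ i = p i := by
    intro σ hσ i hi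
    have := hσ i (Equiv.Perm.mem_support.1 hi)
    exact (pfun_eq this).symm
  have hclos : ∀ σ : Equiv.Perm (Fin n), Compat f σ → ∀ i ∈ σ.support, p i ∈ σ.support := by
    intro σ hσ i hi
    rw [← hsuppP σ hσ i hi]
    exact Equiv.Perm.apply_mem_support.2 hi
  have hdich : ∀ σ : Equiv.Perm (Fin n), Compat f σ → ¬ (O ⊆ σ.support) →
      Disjoint O σ.support := by
    intro σ hσ hns
    rw [Finset.disjoint_left]
    intro x hxO hxs
    apply hns
    intro y hyO
    obtain ⟨j, hj, rfl⟩ := (hmemO x).1 hxO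
    obtain ⟨j', hj', rfl⟩ := (hmemO y).1 hyO
    have hiter : ∀ k : ℕ, p^[k] (p^[j] a) ∈ σ.support := by
      intro k
      induction k with
      | zero => simpa using hxs
      | succ l ih => rw [Function.iterate_succ_apply']; exact hclos σ hσ _ ih
    have : p^[m + j' - j] (p^[j] a) = p^[j'] a := by
      rw [← Function.iterate_add_apply, Nat.sub_add_cancel (by omega), Nat.add_comm,
        Function.iterate_add_apply, hit]
    exact this ▸ hiter (m + j' - j)
  -- products with the cycle
  have hmul_dis : ∀ σ : Equiv.Perm (Fin n), Compat f σ → Disjoint O σ.support →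
      ((σ * c).support = σ.support ∪ O ∧ Compat f (σ * c)) := by
    intro σ hσ hdis
    have happ : ∀ x, (σ * c) x = if x ∈ O then p x else σ x := by
      intro x
      by_cases hx : x ∈ O
      · rw [if_pos hx, Equiv.Perm.mul_apply, hcO x hx]
        have h1 : p x ∉ σ.support := Finset.disjoint_left.1 hdis (hpO x hx)
        exact Equiv.Perm.notMem_support.1 h1
      · rw [if_neg hx, Equiv.Perm.mul_apply, hcO' x hx]
    constructor
    · ext x
      rw [Equiv.Perm.mem_support, happ x, Finset.mem_union]
      by_cases hx : x ∈ O
      · simp [hx, hpne x hx]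
      · simp [hx, Equiv.Perm.mem_support]
    · intro i hi
      rw [happ i] at hi
      rw [happ i]
      by_cases hx : i ∈ O
      · rw [if_pos hx] at hi ⊢
        exact hfsome i hx
      · rw [if_neg hx] at hi ⊢
        exact hσ i hi
  have hmul_sub : ∀ σ : Equiv.Perm (Fin n), Compat f σ → O ⊆ σ.support →
      ((σ * c⁻¹).support = σ.support \ O ∧ Compat f (σ * c⁻¹)) := by
    intro σ hσ hsub
    have happ : ∀ x, (σ * c⁻¹) x = if x ∈ O then x else σ x := by
      intro x
      by_cases hx : x ∈ O
      · rw [if_pos hx, Equiv.Perm.mul_apply]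
        have h1 : c⁻¹ x ∈ O := hcinvO x hx
        have h2 : σ (c⁻¹ x) = p (c⁻¹ x) := hsuppP σ hσ _ (hsub h1)
        rw [h2, ← hcO _ h1, (Equiv.Perm.eq_inv_iff_eq.1 rfl : c (c⁻¹ x) = x)]
      · rw [if_neg hx, Equiv.Perm.mul_apply, hcinvO' x hx]
    constructor
    · ext x
      rw [Equiv.Perm.mem_support, happ x, Finset.mem_sdiff]
      by_cases hx : x ∈ O
      · simp [hx]
      · simp [hx, Equiv.Perm.mem_support]
    · intro i hi
      rw [happ i] at hi
      by_cases hx : i ∈ O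
      · rw [if_pos hx] at hi; exact absurd rfl hi
      · rw [if_neg hx] at hi
        rw [happ i, if_neg hx]
        exact hσ i hi
  have sign_c' : ((Equiv.Perm.sign c : ℤ)) = -(-1) ^ O.card := by
    rw [sign_c]; simp
  refine Finset.sum_involution
    (fun σ _ => if O ⊆ σ.support then σ * c⁻¹ else σ * c) ?_ ?_ ?_ ?_
  · intro σ hσmem
    have hσ : Compat f σ := (Finset.mem_filter.1 hσmem).2
    by_cases hsub : O ⊆ σ.support
    · obtain ⟨hs, _⟩ := hmul_sub σ hσ hsub
      have ho : O.card ≤ σ.support.card := Finset.card_le_card hsub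
      simp only [if_pos hsub]
      rw [hs, Finset.card_sdiff_of_subset hsub]
      have hsgn : ((Equiv.Perm.sign (σ * c⁻¹) : ℤ))
          = (Equiv.Perm.sign σ : ℤ) * (-(-1) ^ O.card) := by
        rw [_root_.map_mul, map_inv, Int.units_inv_eq_self]
        rw [Units.val_mul, sign_c']
      rw [hsgn]
      have key : ((-1:ℤ) ^ O.card) * (-1:ℤ) ^ (σ.support.card - O.card)
          = (-1:ℤ) ^ σ.support.card := by
        rw [← pow_add, Nat.add_sub_cancel' ho]
      linear_combination (-((Equiv.Perm.sign σ : ℤ))) * key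
    · have hdis := hdich σ hσ hsub
      obtain ⟨hs, _⟩ := hmul_dis σ hσ hdis
      simp only [if_neg hsub]
      rw [hs, Finset.card_union_of_disjoint hdis.symm]
      have hsgn : ((Equiv.Perm.sign (σ * c) : ℤ))
          = (Equiv.Perm.sign σ : ℤ) * (-(-1) ^ O.card) := by
        rw [_root_.map_mul, Units.val_mul, sign_c']
      rw [hsgn]
      have key : ((-1:ℤ) ^ O.card) * (-1:ℤ) ^ (σ.support.card + O.card)
          = (-1:ℤ) ^ σ.support.card := by
        rw [pow_add, ← mul_assoc, mul_comm ((-1:ℤ) ^ O.card), mul_assoc, ← pow_add,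
          Even.neg_one_pow ⟨O.card, rfl⟩, mul_one]
      linear_combination (-((Equiv.Perm.sign σ : ℤ))) * key
  · intro σ hσmem _
    by_cases hsub : O ⊆ σ.support
    · simp only [if_pos hsub]
      intro h
      have : c⁻¹ = 1 := mul_left_cancel (a := σ) (by rw [mul_one]; exact h)
      exact hcne (by rwa [inv_eq_one] at this)
    · simp only [if_neg hsub]
      intro h
      have : c = 1 := mul_left_cancel (a := σ) (by rw [mul_one]; exact h)
      exact hcne this
  · intro σ hσmem
    have hσ : Compat f σ := (Finset.mem_filter.1 hσmem).2
    by_cases hsub : O ⊆ σ.support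
    · simp only [if_pos hsub]
      exact Finset.mem_filter.2 ⟨Finset.mem_univ _, (hmul_sub σ hσ hsub).2⟩
    · simp only [if_neg hsub]
      exact Finset.mem_filter.2 ⟨Finset.mem_univ _, (hmul_dis σ hσ (hdich σ hσ hsub)).2⟩
  · intro σ hσmem
    have hσ : Compat f σ := (Finset.mem_filter.1 hσmem).2
    by_cases hsub : O ⊆ σ.support
    · simp only [if_pos hsub]
      have hns : ¬ (O ⊆ (σ * c⁻¹).support) := by
        rw [(hmul_sub σ hσ hsub).1]
        intro h
        have := h haO
        rw [Finset.mem_sdiff] at this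
        exact this.2 haO
      simp only [if_neg hns]
      exact inv_mul_cancel_right σ c
    · simp only [if_neg hsub]
      have hdis := hdich σ hσ hsub
      have hs2 : O ⊆ (σ * c).support := by
        rw [(hmul_dis σ hσ hdis).1]
        exact Finset.subset_union_right
      simp only [if_pos hs2]
      exact mul_inv_cancel_right σ c



lemma key (f : Fin n → Option (Fin n)) (hf : ∀ i, f i ≠ some i) :
    ∑ σ ∈ Finset.univ.filter (Compat f),
      ((Equiv.Perm.sign σ : ℤ) * (-1) ^ σ.support.card)
      = if HasCyc f then 0 else 1 := by
  by_cases h : HasCyc f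
  · rw [if_pos h]
    exact sum_compat_eq_zero hf h
  · rw [if_neg h]
    have hfil : Finset.univ.filter (Compat f) = {(1 : Equiv.Perm (Fin n))} := by
      ext σ
      simp only [Finset.mem_filter, Finset.mem_univ, true_and, Finset.mem_singleton]
      exact ⟨fun hc => eq_one_of_compat h hc, fun he => he ▸ compat_one f⟩
    rw [hfil, Finset.sum_singleton]
    simp

noncomputable def wgt (ε : Fin n → Fin n → ℝ) (i : Fin n) : Option (Fin n) → Polynomial ℝ
  | none => Polynomial.X
  | some k => if k = i then 0 else Polynomial.C (ε k i)

noncomputable def tfam (σ : Equiv.Perm (Fin n)) (i : Fin n) : Finset (Option (Fin n)) :=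
  if σ i = i then (Finset.univ : Finset (Option (Fin n))) else {some (σ i)}

lemma mem_piFinset_iff_compat (σ : Equiv.Perm (Fin n)) (g : Fin n → Option (Fin n)) :
    g ∈ Fintype.piFinset (tfam σ) ↔ Compat g σ := by
  rw [Fintype.mem_piFinset]
  constructor
  · intro h i hi
    have := h i
    rw [tfam, if_neg hi] at this
    simpa using this
  · intro h i
    rw [tfam]
    by_cases hi : σ i = i
    · rw [if_pos hi]; exact Finset.mem_univ _
    · rw [if_neg hi]; simp [h i hi]

lemma prod_charmatrix (ε : Fin n → Fin n → ℝ) (σ : Equiv.Perm (Fin n)) :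
    ∏ i, (Matrix.charmatrix (-(kirchhoff ε))) i (σ i)
      = (-1) ^ σ.support.card *
        ∑ g ∈ Fintype.piFinset (tfam σ), ∏ i, wgt ε i (g i) := by
  rw [← Finset.prod_univ_sum]
  have hsgn : ((-1 : Polynomial ℝ)) ^ σ.support.card
      = ∏ i, (if σ i = i then (1 : Polynomial ℝ) else -1) := by
    rw [Finset.prod_ite, Finset.prod_const_one, one_mul, Finset.prod_const]
    congr 1
  rw [hsgn, ← Finset.prod_mul_distrib]
  apply Finset.prod_congr rfl
  intro i _
  by_cases hi : σ i = i
  · rw [hi, if_pos rfl, Matrix.charmatrix_apply_eq, one_mul]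
    have h1 : ∑ o ∈ tfam σ i, wgt ε i o = Polynomial.X + ∑ k, wgt ε i (some k) := by
      rw [tfam, if_pos hi, Fintype.sum_option]
      rfl
    have h2 : ∑ k, wgt ε i (some k) = ∑ k ∈ Finset.univ.erase i, Polynomial.C (ε k i) := by
      have h0 : wgt ε i (some i) = 0 := by simp [wgt]
      rw [← Finset.sum_erase (f := fun k => wgt ε i (some k)) Finset.univ h0]
      apply Finset.sum_congr rfl
      intro k hk
      rw [wgt, if_neg (Finset.mem_erase.1 hk).1]
    rw [h1, h2]
    have h3 : (-(kirchhoff ε)) i i = -(∑ k ∈ Finset.univ.erase i, ε k i) := by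
      simp [kirchhoff]
    rw [h3, map_neg, sub_neg_eq_add, map_sum]
  · have hne : i ≠ σ i := fun h => hi h.symm
    rw [Matrix.charmatrix_apply_ne _ _ _ hne]
    have h1 : ∑ o ∈ tfam σ i, wgt ε i o = Polynomial.C (ε (σ i) i) := by
      rw [tfam, if_neg hi, Finset.sum_singleton, wgt, if_neg hi]
    have h2 : (-(kirchhoff ε)) i (σ i) = ε (σ i) i := by
      simp [kirchhoff, hne]
    rw [if_neg hi, h1, h2, neg_one_mul]

lemma charpoly_expand (ε : Fin n → Fin n → ℝ) :
    (-(kirchhoff ε)).charpoly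
      = ∑ g : Fin n → Option (Fin n),
          (((∑ σ ∈ Finset.univ.filter (Compat g),
              ((Equiv.Perm.sign σ : ℤ) * (-1) ^ σ.support.card)) : ℤ) : Polynomial ℝ)
            * ∏ i, wgt ε i (g i) := by
  rw [Matrix.charpoly, ← Matrix.det_transpose, Matrix.det_apply']
  have step1 : ∀ σ : Equiv.Perm (Fin n),
      ∏ i, (Matrix.charmatrix (-(kirchhoff ε)))ᵀ (σ i) i
        = (-1) ^ σ.support.card * ∑ g ∈ Fintype.piFinset (tfam σ), ∏ i, wgt ε i (g i) := by
    intro σ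
    rw [← prod_charmatrix ε σ]
    apply Finset.prod_congr rfl
    intro i _
    rfl
  calc ∑ σ : Equiv.Perm (Fin n), ((Equiv.Perm.sign σ : ℤ) : Polynomial ℝ)
        * ∏ i, (Matrix.charmatrix (-(kirchhoff ε)))ᵀ (σ i) i
      = ∑ σ : Equiv.Perm (Fin n), ∑ g : Fin n → Option (Fin n),
          (if Compat g σ then
            (((Equiv.Perm.sign σ : ℤ) * (-1) ^ σ.support.card : ℤ) : Polynomial ℝ)
              * ∏ i, wgt ε i (g i) else 0) := by
        apply Finset.sum_congr rfl
        intro σ _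
        rw [step1 σ, ← Finset.filter_univ_mem (Fintype.piFinset (tfam σ)),
          Finset.sum_filter]
        rw [Finset.mul_sum, Finset.mul_sum]
        apply Finset.sum_congr rfl
        intro g _
        simp only [mem_piFinset_iff_compat]
        by_cases h : Compat g σ
        · rw [if_pos h, if_pos h]
          push_cast
          ring
        · rw [if_neg h, if_neg h, mul_zero, mul_zero]
    _ = ∑ g : Fin n → Option (Fin n),
          (((∑ σ ∈ Finset.univ.filter (Compat g),
              ((Equiv.Perm.sign σ : ℤ) * (-1) ^ σ.support.card)) : ℤ) : Polynomial ℝ)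
            * ∏ i, wgt ε i (g i) := by
        rw [Finset.sum_comm]
        apply Finset.sum_congr rfl
        intro g _
        rw [Finset.sum_filter, Int.cast_sum, Finset.sum_mul]
        apply Finset.sum_congr rfl
        intro σ _
        by_cases h : Compat g σ
        · rw [if_pos h, if_pos h]
        · rw [if_neg h, if_neg h, Int.cast_zero, zero_mul]


def Good (g : Fin n → Option (Fin n)) : Prop := (∀ i, g i ≠ some i) ∧ ¬ HasCyc g

noncomputable def toF (g : Fin n → Option (Fin n)) : Finset (Fin n × Fin n) :=
  Finset.univ.filter (fun p : Fin n × Fin n => g p.2 = some p.1)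

lemma mem_toF {g : Fin n → Option (Fin n)} {p : Fin n × Fin n} :
    p ∈ toF g ↔ g p.2 = some p.1 := by
  simp [toF]

lemma rel_toF (g : Fin n → Option (Fin n)) :
    (fun x y : Fin n => (x, y) ∈ toF g) = Rel g := by
  funext x y
  simp [mem_toF, Rel]

lemma toF_isDivForest {g : Fin n → Option (Fin n)} (hg : Good g) : IsDivForest (toF g) := by
  refine ⟨?_, ?_, ?_⟩
  · intro p hp h
    rw [mem_toF] at hp
    rw [h] at hp
    exact hg.1 p.2 hp
  · intro b
    rw [Finset.card_le_one]
    intro p hp q hq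
    rw [Finset.mem_filter] at hp hq
    have hp1 : g b = some p.1 := by rw [← hp.2]; exact mem_toF.1 hp.1
    have hq1 : g b = some q.1 := by rw [← hq.2]; exact mem_toF.1 hq.1
    have h1 : p.1 = q.1 := Option.some_injective _ (hp1.symm.trans hq1)
    have h2 : p.2 = q.2 := hp.2.trans hq.2.symm
    exact Prod.ext h1 h2
  · intro a
    rw [rel_toF]
    intro h
    exact hg.2 ⟨a, h⟩

lemma _root_.rootSet_toF {g : Fin n → Option (Fin n)} :
    _root_.rootSet (toF g) = Finset.univ.filter (fun i => g i = none) := by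
  ext v
  simp only [_root_.rootSet, Finset.mem_filter, Finset.mem_univ, true_and]
  constructor
  · intro h
    cases hv : g v with
    | none => rfl
    | some k => exact absurd (mem_toF.2 hv) (h k)
  · intro h a hmem
    rw [mem_toF] at hmem
    rw [h] at hmem
    cases hmem

lemma prod_wgt_eq {ε : Fin n → Fin n → ℝ} {g : Fin n → Option (Fin n)} (hg : Good g) :
    ∏ i, wgt ε i (g i)
      = Polynomial.C (arcWt ε (toF g)) * Polynomial.X ^ (_root_.rootSet (toF g)).card := by
  rw [← Finset.prod_filter_mul_prod_filter_not Finset.univ (fun i => g i = none)]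
  have h1 : ∏ i ∈ Finset.univ.filter (fun i => g i = none), wgt ε i (g i)
      = Polynomial.X ^ (_root_.rootSet (toF g)).card := by
    rw [_root_.rootSet_toF, ← Finset.prod_const]
    apply Finset.prod_congr rfl
    intro i hi
    rw [(Finset.mem_filter.1 hi).2]
    rfl
  have h2 : ∏ i ∈ Finset.univ.filter (fun i => ¬ g i = none), wgt ε i (g i)
      = Polynomial.C (arcWt ε (toF g)) := by
    rw [arcWt, map_prod]
    refine (Finset.prod_bij (fun (p : Fin n × Fin n) (_ : p ∈ toF g) => p.2) ?_ ?_ ?_ ?_).symm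
    · intro p hp
      rw [Finset.mem_filter]
      refine ⟨Finset.mem_univ _, ?_⟩
      rw [mem_toF.1 hp]
      simp
    · intro p hp q hq h
      have h' : p.2 = q.2 := h
      have hp1 := mem_toF.1 hp
      have hq1 := mem_toF.1 hq
      rw [h'] at hp1
      exact Prod.ext (Option.some_injective _ (hp1.symm.trans hq1)) h'
    · intro i hi
      have : ¬ g i = none := (Finset.mem_filter.1 hi).2
      rcases Option.ne_none_iff_exists'.1 this with ⟨k, hk⟩
      exact ⟨(k, i), mem_toF.2 hk, rfl⟩
    · intro p hp
      have hp1 := mem_toF.1 hp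
      have hne : p.1 ≠ p.2 := by
        intro h
        rw [h] at hp1
        exact hg.1 p.2 hp1
      show Polynomial.C (ε p.1 p.2) = wgt ε p.2 (g p.2)
      rw [hp1, wgt, if_neg hne]
  rw [h1, h2, mul_comm]


lemma toF_inj {g₁ g₂ : Fin n → Option (Fin n)} (h : toF g₁ = toF g₂) : g₁ = g₂ := by
  funext i
  cases h1 : g₁ i with
  | none =>
      cases h2 : g₂ i with
      | none => rfl
      | some k =>
          have : (k, i) ∈ toF g₁ := h ▸ mem_toF.2 h2
          rw [mem_toF] at this
          rw [h1] at this
          cases this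
  | some k =>
      have : (k, i) ∈ toF g₂ := h ▸ mem_toF.2 h1
      rw [mem_toF] at this
      rw [this]

lemma toF_surj {F : Finset (Fin n × Fin n)} (hF : IsDivForest F) :
    ∃ g, Good g ∧ toF g = F := by
  have huniq : ∀ {x y i : Fin n}, (x, i) ∈ F → (y, i) ∈ F → x = y := by
    intro x y i hx hy
    have h := Finset.card_le_one.1 (hF.2.1 i) (x, i)
      (Finset.mem_filter.2 ⟨hx, rfl⟩) (y, i) (Finset.mem_filter.2 ⟨hy, rfl⟩)
    exact congrArg Prod.fst h
  set g : Fin n → Option (Fin n) :=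
    fun i => if h : ∃ k, (k, i) ∈ F then some h.choose else none with hg
  have hsome : ∀ i k, g i = some k ↔ (k, i) ∈ F := by
    intro i k
    constructor
    · intro h
      by_cases he : ∃ k', (k', i) ∈ F
      · rw [hg] at h
        simp only [dif_pos he] at h
        have hcs := he.choose_spec
        have hk : he.choose = k := Option.some_injective _ h
        rwa [hk] at hcs
      · rw [hg] at h; simp only [dif_neg he] at h
        cases h
    · intro h
      have he : ∃ k', (k', i) ∈ F := ⟨k, h⟩
      rw [hg]
      simp only [dif_pos he]
      exact congrArg some (huniq he.choose_spec h)
  have htoF : toF g = F := by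
    ext p
    rw [mem_toF, hsome]
  refine ⟨g, ⟨?_, ?_⟩, htoF⟩
  · intro i h
    exact hF.1 (i, i) ((hsome i i).1 h) rfl
  · intro ⟨a, hcyc⟩
    apply hF.2.2 a
    have : Rel g = fun x y : Fin n => (x, y) ∈ F := by
      funext x y
      rw [eq_iff_iff, Rel, hsome]
    rwa [this] at hcyc


lemma charpoly_forest (ε : Fin n → Fin n → ℝ) :
    (-(kirchhoff ε)).charpoly
      = ∑ F ∈ divForests (Fin n),
          Polynomial.C (arcWt ε F) * Polynomial.X ^ (_root_.rootSet F).card := by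
  rw [charpoly_expand]
  have step : ∀ g : Fin n → Option (Fin n),
      (((∑ σ ∈ Finset.univ.filter (Compat g),
          ((Equiv.Perm.sign σ : ℤ) * (-1) ^ σ.support.card)) : ℤ) : Polynomial ℝ)
        * ∏ i, wgt ε i (g i)
      = if Good g then ∏ i, wgt ε i (g i) else 0 := by
    intro g
    by_cases h1 : ∀ i, g i ≠ some i
    · rw [key g h1]
      by_cases h2 : HasCyc g
      · simp [Good, h2]
      · simp [Good, h1, h2]
    · push_neg at h1
      obtain ⟨i, hi⟩ := h1
      have hzero : ∏ j, wgt ε j (g j) = 0 := by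
        apply Finset.prod_eq_zero (Finset.mem_univ i)
        rw [hi]
        simp [wgt]
      rw [hzero, mul_zero]
      split <;> rfl
  rw [Finset.sum_congr rfl (fun g _ => step g), ← Finset.sum_filter]
  refine Finset.sum_bij (fun g (_ : g ∈ Finset.univ.filter Good) => toF g) ?_ ?_ ?_ ?_
  · intro g hg
    rw [divForests, Finset.mem_filter]
    exact ⟨Finset.mem_univ _, toF_isDivForest (Finset.mem_filter.1 hg).2⟩
  · intro g₁ h₁ g₂ h₂ h
    exact toF_inj h
  · intro F hF
    obtain ⟨g, hgood, htoF⟩ := toF_surj (Finset.mem_filter.1 hF).2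
    exact ⟨g, Finset.mem_filter.2 ⟨Finset.mem_univ _, hgood⟩, htoF⟩
  · intro g hg
    exact prod_wgt_eq (Finset.mem_filter.1 hg).2


theorem coeff_eq (ε : Fin n → Fin n → ℝ) (k : ℕ) :
    (-(kirchhoff ε)).charpoly.coeff k
      = ∑ φ ∈ Finset.univ.filter (fun φ : Finset (Fin n) => φ.card = k),
          ∑ F ∈ divForestsRootedAt φ, arcWt ε F := by
  rw [charpoly_forest, Polynomial.finset_sum_coeff]
  have lhs : ∀ F : Finset (Fin n × Fin n),
      (Polynomial.C (arcWt ε F) * Polynomial.X ^ (_root_.rootSet F).card).coeff k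
        = if (_root_.rootSet F).card = k then arcWt ε F else 0 := by
    intro F
    rw [Polynomial.coeff_C_mul, Polynomial.coeff_X_pow]
    by_cases h : (_root_.rootSet F).card = k
    · rw [if_pos h, if_pos h.symm, mul_one]
    · rw [if_neg h, if_neg (fun hh => h hh.symm), mul_zero]
  rw [Finset.sum_congr rfl (fun F _ => lhs F)]
  have rhs : ∀ φ : Finset (Fin n), ∑ F ∈ divForestsRootedAt φ, arcWt ε F
      = ∑ F ∈ divForests (Fin n), (if _root_.rootSet F = φ then arcWt ε F else 0) := by
    intro φ
    have hfil : divForestsRootedAt φ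
        = (divForests (Fin n)).filter (fun F => _root_.rootSet F = φ) := by
      rw [divForestsRootedAt, divForests, Finset.filter_filter]
    rw [hfil, Finset.sum_filter]
  rw [Finset.sum_congr rfl (fun φ _ => rhs φ), Finset.sum_comm]
  apply Finset.sum_congr rfl
  intro F _
  have : ∀ φ ∈ Finset.univ.filter (fun φ : Finset (Fin n) => φ.card = k),
      (if _root_.rootSet F = φ then arcWt ε F else 0)
        = (if _root_.rootSet F = φ then arcWt ε F else 0) := fun _ _ => rfl
  rw [show (∑ φ ∈ Finset.univ.filter (fun φ : Finset (Fin n) => φ.card = k),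
      if _root_.rootSet F = φ then arcWt ε F else 0)
      = if _root_.rootSet F ∈ Finset.univ.filter (fun φ : Finset (Fin n) => φ.card = k)
        then arcWt ε F else 0 from
    Finset.sum_ite_eq _ (_root_.rootSet F) (fun _ => arcWt ε F)]
  simp only [Finset.mem_filter, Finset.mem_univ, true_and]


end ForestAux

/-- **Lemma 4** (forest expansion of the Laplacian characteristic polynomial). Writing
`p(λ) = det (λI + L(Γ)) = ∑_k c_k λ^k` for the characteristic polynomial of `−L(Γ)`,
for every `k = 0, …, n` one has `c_k = ∑_{φ ⊆ V, |φ| = k} ε(𝔉_φ)`. -/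
theorem charpoly_coeff_eq_forests (n : ℕ) (ε : Fin n → Fin n → ℝ)
    (hdiag : ∀ a, ε a a = 0) (k : ℕ) (hk : k ≤ n) :
    (-(kirchhoff ε)).charpoly.coeff k
      = ∑ φ ∈ Finset.univ.filter (fun φ : Finset (Fin n) => φ.card = k),
          ∑ F ∈ divForestsRootedAt φ, arcWt ε F := by
  exact ForestAux.coeff_eq ε k
end

section
/- Lemma 5 (forest expansion of the cofactors of the Laplacian characteristic matrix). Let Γ be a weighted digraph on a finite vertex set V = {1,…,n}, let i, j ∈ V, and let W_λ = λI + L(Γ). Write the cofactor of the (i,j) entry of W_λ as W_λ^{ij} = ∑_{k=0}^{n−1} b_k λ^k. Then for every k = 0,…,n−1, b_k = ∑_{φ⊆V∖{i,j}, |φ|=k} ε(𝔉_{φ∪{i}}^{i→j}); equivalently, W_λ^{ij} = ∑_{φ⊆V∖{i,j}} ε(𝔉_{φ∪{i}}^{i→j}) λ^{|φ|}. -/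
open scoped Classical

set_option linter.unusedSectionVars false
set_option maxHeartbeats 1000000

namespace ForestAux

open Relation Matrix Finset

variable {α : Type*} [Fintype α] [DecidableEq α]

/-- `RelF f a b` : the arc `a → b` is present, i.e. `b`'s parent is `a`. -/
def RelF (f : α → Option α) (a b : α) : Prop := f b = some a

/-- total parent map -/
noncomputable def pm (f : α → Option α) (v : α) : α := (f v).getD v

def Acyc (f : α → Option α) : Prop := ∀ a, ¬ Relation.TransGen (RelF f) a a

noncomputable def rowM (i j : α) (f : α → Option α) : Matrix α α ℝ :=
  Matrix.of fun r => if r = i then Pi.single j 1 else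
    (f r).elim (Pi.single r (1:ℝ)) (fun k => Pi.single r 1 - Pi.single k 1)

lemma rowM_apply_i (i j : α) (f : α → Option α) : rowM i j f i = Pi.single j 1 := by
  funext c; simp [rowM, Matrix.of_apply]

lemma rowM_apply_none {i r : α} (j : α) {f : α → Option α} (hr : r ≠ i)
    (hf : f r = none) : rowM i j f r = Pi.single r 1 := by
  funext c; simp [rowM, Matrix.of_apply, hr, hf]

lemma rowM_apply_some {i r k : α} (j : α) {f : α → Option α} (hr : r ≠ i)
    (hf : f r = some k) : rowM i j f r = Pi.single r 1 - Pi.single k 1 := by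
  funext c; simp [rowM, Matrix.of_apply, hr, hf]

lemma pm_some {f : α → Option α} {b : α} (h : (f b).isSome) : f b = some (pm f b) := by
  cases hfb : f b with
  | none => simp [hfb] at h
  | some k => simp [pm, hfb]

lemma pm_eq {f : α → Option α} {b k : α} (h : f b = some k) : pm f b = k := by
  simp [pm, h]

lemma relF_pm {f : α → Option α} {b : α} (h : (f b).isSome) : RelF f (pm f b) b := pm_some h

lemma iter_reach (f : α → Option α) (b : α) (m : ℕ)
    (h : ∀ u < m, (f ((pm f)^[u] b)).isSome) :
    Relation.ReflTransGen (RelF f) ((pm f)^[m] b) b := by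
  induction m with
  | zero => exact Relation.ReflTransGen.refl
  | succ m ih =>
    have h1 : RelF f ((pm f)^[m+1] b) ((pm f)^[m] b) := by
      rw [Function.iterate_succ_apply']
      exact relF_pm (h m (Nat.lt_succ_self m))
    exact Relation.ReflTransGen.head h1 (ih fun u hu => h u (hu.trans (Nat.lt_succ_self m)))

lemma iter_trans (f : α → Option α) (b : α) (m : ℕ) (hm : 0 < m)
    (h : ∀ u < m, (f ((pm f)^[u] b)).isSome) :
    Relation.TransGen (RelF f) ((pm f)^[m] b) b := by
  obtain ⟨m, rfl⟩ := Nat.exists_eq_succ_of_ne_zero hm.ne'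
  have h1 : RelF f ((pm f)^[m+1] b) ((pm f)^[m] b) := by
    rw [Function.iterate_succ_apply']
    exact relF_pm (h m (Nat.lt_succ_self m))
  exact Relation.TransGen.head' h1 (iter_reach f b m (fun u hu => h u (hu.trans (Nat.lt_succ_self m))))

lemma reach_iter {f : α → Option α} {a b : α} (h : Relation.ReflTransGen (RelF f) a b) :
    ∃ s, (∀ t < s, (f ((pm f)^[t] b)).isSome) ∧ (pm f)^[s] b = a := by
  induction h using Relation.ReflTransGen.head_induction_on with
  | refl => exact ⟨0, by simp, rfl⟩
  | head h1 h2 ih =>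
    obtain ⟨s, hs, hc⟩ := ih
    refine ⟨s + 1, ?_, ?_⟩
    · intro t ht
      rcases Nat.lt_succ_iff_lt_or_eq.mp ht with ht | rfl
      · exact hs t ht
      · rw [hc, h1]; rfl
    · rw [Function.iterate_succ_apply', hc, pm_eq h1]

lemma trans_iter {f : α → Option α} {a b : α} (h : Relation.TransGen (RelF f) a b) :
    ∃ s, 0 < s ∧ (∀ t < s, (f ((pm f)^[t] b)).isSome) ∧ (pm f)^[s] b = a := by
  obtain ⟨c, hac, hcb⟩ := Relation.TransGen.tail'_iff.mp h
  obtain ⟨s, hs, hc⟩ := reach_iter hac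
  refine ⟨s + 1, Nat.succ_pos s, ?_, ?_⟩
  · intro t ht
    cases t with
    | zero => simp only [Function.iterate_zero_apply]; rw [hcb]; rfl
    | succ t =>
      rw [Function.iterate_succ_apply, pm_eq hcb]
      exact hs t (Nat.succ_lt_succ_iff.mp ht)
  · rw [Function.iterate_succ_apply, pm_eq hcb, hc]

lemma det_eq_zero_of_comb (M : Matrix α α ℝ) (w : α → ℝ) (hw : ∃ r, w r ≠ 0)
    (h : ∀ c, ∑ r, w r * M r c = 0) : M.det = 0 := by
  apply Matrix.exists_vecMul_eq_zero_iff.mp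
  obtain ⟨r0, hr0⟩ := hw
  refine ⟨w, fun h0 => hr0 (congrFun h0 r0), ?_⟩
  funext c
  simpa [Matrix.vecMul, dotProduct] using h c


lemma det_rowM_cycle (i j : α) (f : α → Option α) (hfi : f i = none)
    {a : α} (h : Relation.TransGen (RelF f) a a) : (rowM i j f).det = 0 := by
  obtain ⟨s0, hs0pos, hs0some, hs0eq⟩ := trans_iter h
  have hP : ∃ m, 0 < m ∧ (∀ t < m, (f ((pm f)^[t] a)).isSome) ∧ (pm f)^[m] a = a :=
    ⟨s0, hs0pos, hs0some, hs0eq⟩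
  obtain ⟨hmpos, hmsome, hmeq⟩ := Nat.find_spec hP
  set m := Nat.find hP with hmdef
  have hinj : ∀ t1 t2, t1 < t2 → t2 < m → (pm f)^[t1] a ≠ (pm f)^[t2] a := by
    intro t1 t2 h12 h2m heq
    have hlt : m - t2 + t1 < m := by omega
    apply Nat.find_min hP hlt
    refine ⟨by omega, fun t ht => hmsome t (by omega), ?_⟩
    have : (pm f)^[m - t2 + t1] a = (pm f)^[m - t2] ((pm f)^[t1] a) :=
      Function.iterate_add_apply _ _ _ _
    rw [this, heq, ← Function.iterate_add_apply]
    have h2 : m - t2 + t2 = m := by omega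
    rw [h2]
    exact hmeq
  have hinj' : ∀ t1 ∈ range m, ∀ t2 ∈ range m,
      (pm f)^[t1] a = (pm f)^[t2] a → t1 = t2 := by
    intro t1 h1 t2 h2 heq
    rcases lt_trichotomy t1 t2 with h | h | h
    · exact absurd heq (hinj t1 t2 h (mem_range.mp h2))
    · exact h
    · exact absurd heq.symm (hinj t2 t1 h (mem_range.mp h1))
  set C := (range m).image (fun t => (pm f)^[t] a) with hC
  have haC : a ∈ C := mem_image.mpr ⟨0, mem_range.mpr hmpos, rfl⟩
  apply det_eq_zero_of_comb _ (fun v => if v ∈ C then (1:ℝ) else 0)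
    ⟨a, by simp [haC]⟩
  intro c
  have : ∀ r : α, (if r ∈ C then (1:ℝ) else 0) * rowM i j f r c
      = if r ∈ C then rowM i j f r c else 0 := by
    intro r; split <;> simp
  rw [Finset.sum_congr rfl fun r _ => this r, Finset.sum_ite_mem, univ_inter,
    Finset.sum_image hinj']
  have hrow : ∀ t ∈ range m, rowM i j f ((pm f)^[t] a) c
      = (Pi.single ((pm f)^[t] a) 1 : α → ℝ) c - (Pi.single ((pm f)^[t+1] a) 1 : α → ℝ) c := by
    intro t ht
    have hsome := hmsome t (mem_range.mp ht)
    have hne : (pm f)^[t] a ≠ i := by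
      intro he; rw [he, hfi] at hsome; simp at hsome
    have hfx : f ((pm f)^[t] a) = some ((pm f)^[t+1] a) := by
      rw [Function.iterate_succ_apply']; exact pm_some hsome
    rw [rowM_apply_some j hne hfx]
    simp
  rw [Finset.sum_congr rfl hrow, Finset.sum_range_sub', hmeq]; simp

lemma det_rowM_no_path (i j : α) (f : α → Option α) (hfi : f i = none)
    (hacyc : Acyc f) (hnp : ¬ Relation.ReflTransGen (RelF f) i j) :
    (rowM i j f).det = 0 := by
  have key : ∀ s t, s < t → (∀ u < t, (f ((pm f)^[u] j)).isSome) →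
      (pm f)^[s] j ≠ (pm f)^[t] j := by
    intro s t hst hsome heq
    have htr := iter_trans f ((pm f)^[s] j) (t - s) (by omega)
      (fun u hu => by rw [← Function.iterate_add_apply]; exact hsome (u + s) (by omega))
    rw [← Function.iterate_add_apply] at htr
    have h2 : t - s + s = t := by omega
    rw [h2, ← heq] at htr
    exact hacyc _ htr
  have hex : ∃ m, f ((pm f)^[m] j) = none := by
    by_contra hc
    push_neg at hc
    have hsome : ∀ m, (f ((pm f)^[m] j)).isSome :=
      fun m => Option.ne_none_iff_isSome.mp (hc m)
    obtain ⟨t1, t2, hne, heq⟩ :=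
      Finite.exists_ne_map_eq_of_infinite (fun t : ℕ => (pm f)^[t] j)
    rcases hne.lt_or_gt with h12 | h12
    · exact key t1 t2 h12 (fun u _ => hsome u) heq
    · exact key t2 t1 h12 (fun u _ => hsome u) heq.symm
  have hmnone : f ((pm f)^[Nat.find hex] j) = none := Nat.find_spec hex
  set m := Nat.find hex with hmdef
  have hmsome : ∀ t < m, (f ((pm f)^[t] j)).isSome :=
    fun t ht => Option.ne_none_iff_isSome.mp (Nat.find_min hex ht)
  have hinj' : ∀ t1 ∈ range (m+1), ∀ t2 ∈ range (m+1),
      (pm f)^[t1] j = (pm f)^[t2] j → t1 = t2 := by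
    intro t1 h1 t2 h2 heq
    have h1' := mem_range.mp h1
    have h2' := mem_range.mp h2
    rcases lt_trichotomy t1 t2 with h | h | h
    · exact absurd heq (key t1 t2 h (fun u hu => hmsome u (by omega)))
    · exact h
    · exact absurd heq.symm (key t2 t1 h (fun u hu => hmsome u (by omega)))
  have hchain_i : ∀ t, t ≤ m → (pm f)^[t] j ≠ i := by
    intro t ht he
    rcases lt_or_eq_of_le ht with ht | heq
    · have := hmsome t ht; rw [he, hfi] at this; simp at this
    · rw [heq] at he
      exact hnp (he ▸ iter_reach f j m hmsome)
  set C := (range (m+1)).image (fun t => (pm f)^[t] j) with hC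
  have hiC : i ∉ C := by
    intro hiC
    obtain ⟨t, ht, hti⟩ := mem_image.mp hiC
    exact hchain_i t (Nat.lt_succ_iff.mp (mem_range.mp ht)) hti
  apply det_eq_zero_of_comb _
    (fun v => if v = i then (-1:ℝ) else if v ∈ C then 1 else 0)
    ⟨i, by simp⟩
  intro c
  have hsplit : ∀ r : α,
      (if r = i then (-1:ℝ) else if r ∈ C then 1 else 0) * rowM i j f r c
      = (if r ∈ C then rowM i j f r c else 0) + (if r = i then -rowM i j f r c else 0) := by
    intro r
    by_cases h1 : r = i
    · subst h1; simp [hiC]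
    · by_cases h2 : r ∈ C <;> simp [h1, h2]
  rw [Finset.sum_congr rfl fun r _ => hsplit r, Finset.sum_add_distrib,
    Finset.sum_ite_mem, univ_inter, Finset.sum_image hinj', Finset.sum_ite_eq' univ i,
    Finset.sum_range_succ]
  have hrow : ∀ t ∈ range m, rowM i j f ((pm f)^[t] j) c
      = (Pi.single ((pm f)^[t] j) 1 : α → ℝ) c - (Pi.single ((pm f)^[t+1] j) 1 : α → ℝ) c := by
    intro t ht
    have hsome := hmsome t (mem_range.mp ht)
    have hfx : f ((pm f)^[t] j) = some ((pm f)^[t+1] j) := by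
      rw [Function.iterate_succ_apply']; exact pm_some hsome
    rw [rowM_apply_some j (hchain_i t (le_of_lt (mem_range.mp ht))) hfx]
    simp
  rw [Finset.sum_congr rfl hrow, Finset.sum_range_sub',
    rowM_apply_none j (hchain_i m le_rfl) hmnone, rowM_apply_i]
  simp

section

lemma relF_update {f : α → Option α} {v a b : α} :
    RelF (Function.update f v none) a b ↔ b ≠ v ∧ RelF f a b := by
  unfold RelF
  by_cases hb : b = v
  · subst hb; simp
  · simp [Function.update_of_ne hb, hb]

lemma acyc_update {f : α → Option α} (h : Acyc f) (v : α) :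
    Acyc (Function.update f v none) :=
  fun a ha => h a (Relation.TransGen.mono (fun _ _ hxy => (relF_update.mp hxy).2) _ _ ha)

lemma eq_of_reach_root {f : α → Option α} {i : α} (hfi : f i = none) :
    ∀ a, Relation.ReflTransGen (RelF f) a i → a = i := by
  intro a h
  rcases Relation.ReflTransGen.cases_tail h with h | ⟨c, _, hc⟩
  · exact h.symm
  · rw [RelF, hfi] at hc; exact absurd hc (by simp)

lemma reach_update_of_not {f : α → Option α} {ℓ j : α}
    (hℓ : ¬ Relation.ReflTransGen (RelF f) ℓ j) :
    ∀ a, Relation.ReflTransGen (RelF f) a j →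
      Relation.ReflTransGen (RelF (Function.update f ℓ none)) a j := by
  intro a h
  induction h using Relation.ReflTransGen.head_induction_on with
  | refl => exact Relation.ReflTransGen.refl
  | head h1 h2 ih =>
    refine Relation.ReflTransGen.head (relF_update.mpr ⟨?_, h1⟩) ih
    intro he
    exact hℓ (he ▸ h2)

lemma reach_update_or {f : α → Option α} {v1 i : α} (hv1 : f v1 = some i) :
    ∀ a b, Relation.ReflTransGen (RelF f) a b →
      Relation.ReflTransGen (RelF (Function.update f v1 none)) a b ∨
        Relation.ReflTransGen (RelF f) a i := by
  intro a b h
  induction h using Relation.ReflTransGen.head_induction_on with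
  | refl => exact Or.inl Relation.ReflTransGen.refl
  | @head a c h1 h2 ih =>
    by_cases hc : c = v1
    · rw [hc] at h1
      have : a = i := Option.some_injective _ ((show f v1 = some a from h1).symm.trans hv1)
      exact Or.inr (this ▸ Relation.ReflTransGen.refl)
    · rcases ih with hL | hR
      · exact Or.inl (Relation.ReflTransGen.head (relF_update.mpr ⟨hc, h1⟩) hL)
      · exact Or.inr (Relation.ReflTransGen.head h1 hR)

/-- Phase 2: every vertex with a parent reaches `j`; then the digraph is a path
from `i` to `j` plus isolated vertices, and the determinant is 1. -/
lemma det_rowM_path_aux (j : α) : ∀ (N : ℕ) (i : α) (f : α → Option α),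
    f i = none → (∀ r k, f r = some k → k ≠ r) → Acyc f →
    Relation.ReflTransGen (RelF f) i j →
    (∀ r, (f r).isSome → Relation.ReflTransGen (RelF f) r j) →
    (univ.filter fun r => (f r).isSome).card = N →
    (rowM i j f).det = 1 := by
  intro N
  induction N using Nat.strong_induction_on with
  | _ N ih =>
  intro i f hfi hne hacyc hreach hall hcard
  rcases Relation.ReflTransGen.cases_head hreach with heq | ⟨v1, hv1, hv1j⟩
  · -- i = j : the matrix is the identity
    subst heq
    have hnone : ∀ r, f r = none := by
      intro r
      by_contra hr
      have hrs : (f r).isSome := Option.ne_none_iff_isSome.mp hr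
      have := eq_of_reach_root hfi r (hall r hrs)
      rw [this, hfi] at hrs; simp at hrs
    have : rowM i i f = 1 := by
      ext r c
      by_cases hr : r = i
      · subst hr
        rw [rowM_apply_i]
        simp [Pi.single_apply, Matrix.one_apply, eq_comm]
      · rw [rowM_apply_none i hr (hnone r)]
        simp [Pi.single_apply, Matrix.one_apply, eq_comm]
    rw [this, det_one]
  · -- step : i ≠ j, unique child v1 of i
    have hiv1 : i ≠ v1 := hne v1 i hv1
    have hij : i ≠ j := by
      intro he
      apply hiv1
      apply Eq.symm
      apply eq_of_reach_root hfi v1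
      rwa [he]
    -- uniqueness of the child of i
    have aux : ∀ s1 s2 : ℕ, s1 < s2 → (∀ t ≤ s2, (f ((pm f)^[t] j)).isSome) →
        (pm f)^[s1+1] j ≠ (pm f)^[s2+1] j := by
      intro s1 s2 h12 hsome heq
      have htr := iter_trans f ((pm f)^[s1+1] j) (s2 - s1) (by omega)
        (fun u hu => by
          rw [← Function.iterate_add_apply]
          exact hsome (u + (s1+1)) (by omega))
      rw [← Function.iterate_add_apply] at htr
      have h2 : s2 - s1 + (s1 + 1) = s2 + 1 := by omega
      rw [h2, ← heq] at htr
      exact hacyc _ htr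
    have huniq : ∀ c, f c = some i → c = v1 := by
      intro c hc
      have hcs : (f c).isSome := by rw [hc]; rfl
      obtain ⟨s, hs, hsc⟩ := reach_iter (hall c hcs)
      obtain ⟨s', hs', hsv⟩ := reach_iter hv1j
      have hsome : ∀ t, t ≤ max s s' → (f ((pm f)^[t] j)).isSome := by
        intro t ht
        rcases lt_or_ge t s with h | h
        · exact hs t h
        · rcases lt_or_ge t s' with h' | h'
          · exact hs' t h'
          · have : t = s ∨ t = s' := by omega
            rcases this with rfl | rfl
            · rw [hsc, hc]; rfl
            · rw [hsv, hv1]; rfl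
      have hci : (pm f)^[s+1] j = i := by
        rw [Function.iterate_succ_apply', hsc, pm_eq hc]
      have hvi : (pm f)^[s'+1] j = i := by
        rw [Function.iterate_succ_apply', hsv, pm_eq hv1]
      have hss : s = s' := by
        rcases lt_trichotomy s s' with h | h | h
        · exact absurd (hci.trans hvi.symm)
            (aux s s' h (fun t ht => hsome t (le_max_of_le_right ht)))
        · exact h
        · exact absurd (hvi.trans hci.symm)
            (aux s' s h (fun t ht => hsome t (le_max_of_le_left ht)))
      rw [← hsc, hss, hsv]
    -- matrix manipulations
    have hv1i : v1 ≠ i := Ne.symm hiv1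
    have hrowv1 : rowM i j f v1 = Pi.single v1 1 - Pi.single i 1 :=
      rowM_apply_some j hv1i hv1
    have hcol : ∀ r, r ≠ v1 → rowM i j f r i = 0 := by
      intro r hr
      by_cases hri : r = i
      · rw [hri, rowM_apply_i]
        exact Pi.single_eq_of_ne hij 1
      · cases hfr : f r with
        | none =>
          rw [rowM_apply_none j hri hfr]
          exact Pi.single_eq_of_ne (Ne.symm hri) 1
        | some k =>
          rw [rowM_apply_some j hri hfr]
          have hki : k ≠ i := fun he => hr (huniq r (he ▸ hfr))
          simp [Pi.single_eq_of_ne (Ne.symm hri), Pi.single_eq_of_ne (Ne.symm hki)]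
    set f' := Function.update f v1 none with hf'
    set M2 := updateRow (rowM i j f) v1 (Pi.single i 1) with hM2
    have step1 : (rowM i j f).det = -(M2.det) := by
      conv_lhs => rw [← Matrix.updateRow_eq_self (rowM i j f) v1]
      rw [hrowv1, sub_eq_add_neg, Matrix.det_updateRow_add]
      have hzero : (updateRow (rowM i j f) v1 (Pi.single v1 1)).det = 0 := by
        apply Matrix.det_eq_zero_of_column_eq_zero i
        intro r
        by_cases hr : r = v1
        · rw [hr, Matrix.updateRow_self]
          exact Pi.single_eq_of_ne hiv1 1
        · rw [Matrix.updateRow_ne hr]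
          exact hcol r hr
      rw [hzero, zero_add]
      have : -(Pi.single i 1 : α → ℝ) = (-1 : ℝ) • (Pi.single i 1 : α → ℝ) := by
        funext z; simp
      rw [this, Matrix.det_updateRow_smul, neg_one_mul, ← hM2]
    have step2 : (M2.submatrix (Equiv.swap i v1) id) = rowM v1 j f' := by
      ext r c
      simp only [Matrix.submatrix_apply, id_eq]
      by_cases hr : r = i
      · rw [hr, Equiv.swap_apply_left, hM2, Matrix.updateRow_self]
        have : f' i = none := by
          rw [hf', Function.update_of_ne hiv1, hfi]
        rw [rowM_apply_none j hiv1 this]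
      · by_cases hr2 : r = v1
        · rw [hr2, Equiv.swap_apply_right, hM2, Matrix.updateRow_ne hiv1,
            rowM_apply_i, rowM_apply_i]
        · rw [Equiv.swap_apply_of_ne_of_ne hr hr2, hM2, Matrix.updateRow_ne hr2]
          have hfr : f' r = f r := Function.update_of_ne hr2 _ _
          cases hfr2 : f r with
          | none =>
            rw [rowM_apply_none j hr hfr2, rowM_apply_none j hr2 (hfr.trans hfr2)]
          | some k =>
            rw [rowM_apply_some j hr hfr2, rowM_apply_some j hr2 (hfr.trans hfr2)]
    have step3 : (M2.submatrix (Equiv.swap i v1) id).det = -(M2.det) := by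
      rw [Matrix.det_permute]
      rw [Equiv.Perm.sign_swap hiv1]
      simp
    -- apply the induction hypothesis
    have hv1S : v1 ∈ univ.filter (fun r => (f r).isSome) := by
      simp only [mem_filter, mem_univ, true_and]
      rw [show f v1 = some i from hv1]; rfl
    have hS' : (univ.filter fun r => ((f' : α → Option α) r).isSome)
        = (univ.filter fun r => (f r).isSome).erase v1 := by
      ext r
      simp only [mem_filter, mem_univ, true_and, mem_erase]
      constructor
      · intro hr
        have hrv : r ≠ v1 := by
          intro he; rw [he, hf'] at hr; simp at hr
        exact ⟨hrv, by rwa [hf', Function.update_of_ne hrv] at hr⟩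
      · intro ⟨hrv, hr⟩
        rwa [hf', Function.update_of_ne hrv]
    have hNpos : 0 < N := by
      rw [← hcard]
      exact card_pos.mpr ⟨v1, hv1S⟩
    have hcard' : (univ.filter fun r => ((f' : α → Option α) r).isSome).card = N - 1 := by
      rw [hS', card_erase_of_mem hv1S, hcard]
    have hdet' : (rowM v1 j f').det = 1 := by
      apply ih (N-1) (by omega) v1 f'
      · rw [hf']; exact Function.update_self v1 none f
      · intro r k hk
        rw [hf'] at hk
        by_cases hr : r = v1
        · rw [hr, Function.update_self] at hk; exact absurd hk (by simp)
        · exact hne r k (by rwa [Function.update_of_ne hr] at hk)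
      · exact acyc_update hacyc v1
      · rcases reach_update_or hv1 v1 j hv1j with h | h
        · exact h
        · exact absurd (eq_of_reach_root hfi v1 h) hv1i
      · intro r hr
        have hrv : r ≠ v1 := by
          intro he; rw [he, hf', Function.update_self] at hr; simp at hr
        have hfr : (f r).isSome := by rwa [hf', Function.update_of_ne hrv] at hr
        rcases reach_update_or hv1 r j (hall r hfr) with h | h
        · exact h
        · have := eq_of_reach_root hfi r h
          rw [this, hfi] at hfr; simp at hfr
      · exact hcard'
    rw [step1, ← neg_neg (M2.det), ← step3, step2, hdet']
    simp

lemma det_rowM_path (i j : α) : ∀ (N : ℕ) (f : α → Option α),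
    f i = none → (∀ r k, f r = some k → k ≠ r) → Acyc f →
    Relation.ReflTransGen (RelF f) i j →
    (univ.filter fun r => (f r).isSome ∧ ¬ Relation.ReflTransGen (RelF f) r j).card = N →
    (rowM i j f).det = 1 := by
  intro N
  induction N using Nat.strong_induction_on with
  | _ N ih =>
  intro f hfi hne hacyc hreach hcard
  by_cases hD : (univ.filter fun r => (f r).isSome ∧ ¬ Relation.ReflTransGen (RelF f) r j) = ∅
  · -- phase 2 applies
    apply det_rowM_path_aux j _ i f hfi hne hacyc hreach _ rfl
    intro r hr
    by_contra hnr
    have : r ∈ univ.filter fun r => (f r).isSome ∧ ¬ Relation.ReflTransGen (RelF f) r j :=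
      mem_filter.mpr ⟨mem_univ r, hr, hnr⟩
    rw [hD] at this
    exact absurd this (notMem_empty r)
  · -- pick a maximal off-path vertex ℓ (it has no children) and prune it
    haveI : IsTrans α (fun a b : α => Relation.TransGen (RelF f) b a) :=
      ⟨fun _ _ _ hab hbc => Relation.TransGen.trans hbc hab⟩
    haveI : IsIrrefl α (fun a b : α => Relation.TransGen (RelF f) b a) :=
      ⟨fun a h => hacyc a h⟩
    have hwf : WellFounded (fun a b : α => Relation.TransGen (RelF f) b a) :=
      Finite.wellFounded_of_trans_of_irrefl _
    set D := univ.filter fun r => (f r).isSome ∧ ¬ Relation.ReflTransGen (RelF f) r j with hDdef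
    have hDne : (↑D : Set α).Nonempty := by
      obtain ⟨x, hx⟩ := Finset.nonempty_iff_ne_empty.mpr hD
      exact ⟨x, hx⟩
    obtain ⟨ℓ, hℓD, hℓmin⟩ := hwf.has_min _ hDne
    have hℓD' : ℓ ∈ D := hℓD
    obtain ⟨hℓsome, hℓnr⟩ := (mem_filter.mp hℓD').2
    obtain ⟨k, hk⟩ : ∃ k, f ℓ = some k := Option.isSome_iff_exists.mp hℓsome
    have hnochild : ∀ c, f c ≠ some ℓ := by
      intro c hc
      have hcD : c ∈ D := by
        refine mem_filter.mpr ⟨mem_univ c, by rw [hc]; rfl, fun hreachc => ?_⟩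
        exact hℓnr (Relation.ReflTransGen.head (show RelF f ℓ c from hc) hreachc)
      exact hℓmin c hcD (Relation.TransGen.single hc)
    have hℓi : ℓ ≠ i := by
      intro he; rw [he, hfi] at hℓsome; simp at hℓsome
    have hℓj : ℓ ≠ j := fun he => hℓnr (he ▸ Relation.ReflTransGen.refl)
    have hkℓ : k ≠ ℓ := hne ℓ k hk
    set f' := Function.update f ℓ none with hf'
    have hf'ℓ : f' ℓ = none := by rw [hf']; exact Function.update_self ℓ none f
    have hf'r : ∀ r, r ≠ ℓ → f' r = f r := fun r hr => Function.update_of_ne hr _ _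
    have hM : rowM i j f = updateRow (rowM i j f') ℓ (Pi.single ℓ 1 - Pi.single k 1) := by
      ext r c
      by_cases hr : r = ℓ
      · rw [hr, Matrix.updateRow_self, rowM_apply_some j hℓi hk]
      · rw [Matrix.updateRow_ne hr]
        by_cases hri : r = i
        · rw [hri, rowM_apply_i, rowM_apply_i]
        · cases hfr : f r with
          | none => rw [rowM_apply_none j hri hfr, rowM_apply_none j hri ((hf'r r hr).trans hfr)]
          | some k' => rw [rowM_apply_some j hri hfr, rowM_apply_some j hri ((hf'r r hr).trans hfr)]
    have hzero : (updateRow (rowM i j f') ℓ (Pi.single k 1)).det = 0 := by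
      apply Matrix.det_eq_zero_of_column_eq_zero ℓ
      intro r
      by_cases hr : r = ℓ
      · rw [hr, Matrix.updateRow_self]
        exact Pi.single_eq_of_ne (Ne.symm hkℓ) 1
      · rw [Matrix.updateRow_ne hr]
        by_cases hri : r = i
        · rw [hri, rowM_apply_i]
          exact Pi.single_eq_of_ne hℓj 1
        · cases hfr : f' r with
          | none =>
            rw [rowM_apply_none j hri hfr]
            exact Pi.single_eq_of_ne (Ne.symm hr) 1
          | some k' =>
            rw [rowM_apply_some j hri hfr]
            have hk'ℓ : k' ≠ ℓ := by
              intro he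
              rw [hf'r r hr] at hfr
              exact hnochild r (he ▸ hfr)
            simp [Pi.single_eq_of_ne (Ne.symm hr), Pi.single_eq_of_ne (Ne.symm hk'ℓ)]
    have hreach_iff : ∀ r, Relation.ReflTransGen (RelF f') r j ↔
        Relation.ReflTransGen (RelF f) r j := by
      intro r
      constructor
      · intro h; exact Relation.ReflTransGen.mono (fun _ _ hxy => (relF_update.mp hxy).2) _ _ h
      · intro h; exact reach_update_of_not hℓnr r h
    have hD' : (univ.filter fun r => ((f' : α → Option α) r).isSome ∧
        ¬ Relation.ReflTransGen (RelF f') r j) = D.erase ℓ := by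
      ext r
      simp only [mem_filter, mem_univ, true_and, mem_erase, hDdef]
      constructor
      · intro ⟨h1, h2⟩
        have hrℓ : r ≠ ℓ := by
          intro he; rw [he, hf'ℓ] at h1; simp at h1
        rw [hf'r r hrℓ] at h1
        exact ⟨hrℓ, h1, fun hrj => h2 ((hreach_iff r).mpr hrj)⟩
      · intro ⟨hrℓ, h1, h2⟩
        rw [hf'r r hrℓ]
        exact ⟨h1, fun hrj => h2 ((hreach_iff r).mp hrj)⟩
    have hℓmem : ℓ ∈ D := hℓD'
    have hNpos : 0 < N := by
      rw [← hcard]; exact card_pos.mpr ⟨ℓ, hℓmem⟩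
    have hdet' : (rowM i j f').det = 1 := by
      apply ih (N-1) (by omega) f'
      · rw [hf']; rw [Function.update_of_ne (Ne.symm hℓi), hfi]
      · intro r k' hk'
        by_cases hr : r = ℓ
        · rw [hr, hf'ℓ] at hk'; exact absurd hk' (by simp)
        · exact hne r k' (by rwa [hf'r r hr] at hk')
      · exact acyc_update hacyc ℓ
      · exact (hreach_iff i).mpr hreach
      · rw [hD', card_erase_of_mem hℓmem, hcard]
    calc (rowM i j f).det
        = (updateRow (rowM i j f') ℓ (Pi.single ℓ 1 - Pi.single k 1)).det := by rw [← hM]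
      _ = (updateRow (rowM i j f') ℓ (Pi.single ℓ 1)).det
          + (updateRow (rowM i j f') ℓ (-(Pi.single k 1))).det := by
            rw [← Matrix.det_updateRow_add]
            rw [sub_eq_add_neg]
      _ = 1 := by
            have h1 : updateRow (rowM i j f') ℓ (Pi.single ℓ 1) = rowM i j f' := by
              rw [← rowM_apply_none j hℓi hf'ℓ]
              exact Matrix.updateRow_eq_self _ _
            have h2 : (updateRow (rowM i j f') ℓ (-(Pi.single k 1))).det = 0 := by
              have : -(Pi.single k 1 : α → ℝ) = (-1 : ℝ) • (Pi.single k 1 : α → ℝ) := by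
                funext z; simp
              rw [this, Matrix.det_updateRow_smul, hzero, mul_zero]
            rw [h1, h2, hdet', add_zero]

/-- The master determinant evaluation. -/
lemma det_rowM (i j : α) (f : α → Option α) (hfi : f i = none)
    (hne : ∀ r k, f r = some k → k ≠ r) :
    (rowM i j f).det =
      if Acyc f ∧ Relation.ReflTransGen (RelF f) i j then 1 else 0 := by
  by_cases hacyc : Acyc f
  · by_cases hreach : Relation.ReflTransGen (RelF f) i j
    · rw [if_pos ⟨hacyc, hreach⟩]
      exact det_rowM_path i j _ f hfi hne hacyc hreach rfl
    · rw [if_neg (fun h => hreach h.2)]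
      exact det_rowM_no_path i j f hfi hacyc hreach
  · rw [if_neg (fun h => hacyc h.1)]
    unfold Acyc at hacyc
    push_neg at hacyc
    obtain ⟨a, ha⟩ := hacyc
    exact det_rowM_cycle i j f hfi ha

lemma cofactor_eq_det_updateRow' {m : ℕ} (M : Matrix (Fin (m+1)) (Fin (m+1)) ℝ)
    (i j : Fin (m+1)) :
    (M.updateRow i (Pi.single j 1)).det = cofactor M i j := by
  rw [Matrix.det_succ_row _ i]
  have hsub : ∀ c : Fin (m+1),
      (M.updateRow i (Pi.single j 1)).submatrix i.succAbove c.succAbove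
        = M.submatrix i.succAbove c.succAbove := by
    intro c; ext a b
    simp only [Matrix.submatrix_apply]
    rw [Matrix.updateRow_ne (Fin.succAbove_ne i a)]
  rw [Finset.sum_eq_single j]
  · rw [hsub, Matrix.updateRow_self, Pi.single_eq_same]
    rw [cofactor]
    ring
  · intro c _ hc
    rw [Matrix.updateRow_self, Pi.single_eq_of_ne hc]
    ring
  · intro h; exact absurd (mem_univ j) h

end
end ForestAux

namespace ForestAux
section
variable {α : Type*} [Fintype α] [DecidableEq α]
open Relation Matrix Finset

/-- index sets for the multilinear expansion -/
noncomputable def idxA (i : α) : α → Finset (Option α) := fun r =>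
  if r = i then {none} else insert none ((univ.erase r).image some)

/-- summands of each row -/
noncomputable def rowG (ε : α → α → ℝ) (lam : ℝ) (i j : α) :
    α → Option α → (α → ℝ) := fun r o =>
  if r = i then Pi.single j 1 else
    o.elim (lam • (Pi.single r 1 : α → ℝ)) (fun k => ε k r • (Pi.single r 1 - Pi.single k 1))

/-- scalar coefficient attached to a choice function -/
noncomputable def coefC (ε : α → α → ℝ) (lam : ℝ) (i : α)
    (x : α → Option α) : α → ℝ := fun r =>
  (x r).elim (if r = i then (1:ℝ) else lam) (fun k => ε k r)

variable (ε : α → α → ℝ) (lam : ℝ) (i j : α)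

lemma rowG_eq_coef_smul (x : α → Option α) (hx : x i = none) (r : α) :
    rowG ε lam i j r (x r) = coefC ε lam i x r • rowM i j x r := by
  by_cases hr : r = i
  · subst hr
    rw [rowM_apply_i]
    unfold rowG coefC
    rw [hx]
    simp
  · cases hxr : x r with
    | none =>
      rw [rowM_apply_none j hr hxr]
      unfold rowG coefC
      rw [hxr]
      simp [hr]
    | some k =>
      rw [rowM_apply_some j hr hxr]
      unfold rowG coefC
      rw [hxr]
      simp [hr]

lemma updateRow_row_eq_sum (r c : α) :
    ((lam • (1 : Matrix α α ℝ) + kirchhoff ε).updateRow i (Pi.single j 1)) r c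
      = (∑ o ∈ idxA i r, rowG ε lam i j r o) c := by
  by_cases hr : r = i
  · subst hr
    rw [Matrix.updateRow_self, idxA, if_pos rfl, Finset.sum_singleton, rowG, if_pos rfl]
  · rw [Matrix.updateRow_ne hr, idxA]
    simp only [if_neg hr]
    have hnone : (none : Option α) ∉ (univ.erase r).image some := by simp
    rw [Finset.sum_insert hnone,
      Finset.sum_image (fun a _ b _ h => Option.some_injective _ h)]
    conv_rhs => rw [Pi.add_apply, Finset.sum_apply]
    have hG0 : rowG ε lam i j r none = lam • (Pi.single r 1 : α → ℝ) := by
      simp [rowG, hr]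
    have hGk : ∀ k, rowG ε lam i j r (some k)
        = ε k r • ((Pi.single r 1 : α → ℝ) - Pi.single k 1) := by
      intro k; simp [rowG, hr]
    rw [hG0]
    simp only [Matrix.add_apply, Matrix.smul_apply, Matrix.one_apply, smul_eq_mul]
    rw [show kirchhoff ε r c = if r = c then ∑ k ∈ Finset.univ.erase r, ε k r else - ε c r
      from rfl]
    by_cases hc : r = c
    · subst hc
      rw [if_pos rfl, if_pos rfl, mul_one]
      simp only [Pi.smul_apply, Pi.single_eq_same, smul_eq_mul, mul_one]
      congr 1
      apply Finset.sum_congr rfl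
      intro k hk
      rw [hGk k]
      have hkr : k ≠ r := (mem_erase.mp hk).1
      simp [Pi.single_eq_same, Pi.single_eq_of_ne (Ne.symm hkr)]
    · rw [if_neg hc, if_neg hc, mul_zero, zero_add]
      have hc' : c ∈ Finset.univ.erase r := mem_erase.mpr ⟨fun h => hc h.symm, mem_univ c⟩
      rw [Finset.sum_eq_single_of_mem c hc']
      · rw [hGk c]
        simp [Pi.single_eq_same, Pi.single_eq_of_ne (fun h : c = r => hc h.symm)]
      · intro k hk hkc
        rw [hGk k]
        simp [Pi.single_eq_of_ne (fun h : c = r => hc h.symm),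
          Pi.single_eq_of_ne (fun h : c = k => hkc (h.symm : k = c))]

lemma det_expansion :
    ((lam • (1 : Matrix α α ℝ) + kirchhoff ε).updateRow i (Pi.single j 1)).det
      = ∑ x ∈ Fintype.piFinset (idxA i),
          (∏ r, coefC ε lam i x r) * (rowM i j x).det := by
  have h0 : ((lam • (1 : Matrix α α ℝ) + kirchhoff ε).updateRow i (Pi.single j 1))
      = Matrix.of (fun r => ∑ o ∈ idxA i r, rowG ε lam i j r o) := by
    ext r c
    exact updateRow_row_eq_sum ε lam i j r c
  rw [h0]
  have h2 := (Matrix.detRowAlternating (R := ℝ) (n := α)).toMultilinearMap.map_sum_finset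
    (rowG ε lam i j) (idxA i)
  have h1 : (Matrix.of (fun r => ∑ o ∈ idxA i r, rowG ε lam i j r o)).det
      = ∑ x ∈ Fintype.piFinset (idxA i),
          Matrix.detRowAlternating (fun r => rowG ε lam i j r (x r)) := h2
  rw [h1]
  apply Finset.sum_congr rfl
  intro x hx
  have hxi : x i = none := by
    have := (Fintype.mem_piFinset.mp hx) i
    rw [idxA, if_pos rfl] at this
    simpa using this
  have hrw : (fun r => rowG ε lam i j r (x r))
      = fun r => coefC ε lam i x r • rowM i j x r := by
    funext r
    exact rowG_eq_coef_smul ε lam i j x hxi r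
  rw [hrw]
  calc Matrix.detRowAlternating (fun r => coefC ε lam i x r • rowM i j x r)
      = (Matrix.detRowAlternating (R := ℝ) (n := α)).toMultilinearMap
          (fun r => coefC ε lam i x r • rowM i j x r) := rfl
    _ = (∏ r, coefC ε lam i x r) •
          (Matrix.detRowAlternating (R := ℝ) (n := α)).toMultilinearMap
            (fun r => rowM i j x r) :=
        MultilinearMap.map_smul_univ _ _ _
    _ = (∏ r, coefC ε lam i x r) * (rowM i j x).det := by rw [smul_eq_mul]; rfl

/-- the arc set of a choice function -/
noncomputable def arcsOf (x : α → Option α) : Finset (α × α) :=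
  univ.filter fun p => x p.2 = some p.1

lemma mem_arcsOf {x : α → Option α} {p : α × α} : p ∈ arcsOf x ↔ x p.2 = some p.1 := by
  simp [arcsOf]

/-- the choice function of a forest -/
noncomputable def choiceOf (F : Finset (α × α)) : α → Option α := fun r =>
  if h : ∃ a, (a, r) ∈ F then some h.choose else none

lemma choiceOf_eq_some {F : Finset (α × α)}
    (hdeg : ∀ b, (F.filter fun p => p.2 = b).card ≤ 1)
    {a b : α} : choiceOf F b = some a ↔ (a, b) ∈ F := by
  constructor
  · intro h
    by_cases hex : ∃ a', (a', b) ∈ F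
    · rw [choiceOf, dif_pos hex] at h
      have heq : hex.choose = a := Option.some_injective _ h
      exact heq ▸ hex.choose_spec
    · rw [choiceOf, dif_neg hex] at h
      exact absurd h (by simp)
  · intro h
    have hex : ∃ a', (a', b) ∈ F := ⟨a, h⟩
    rw [choiceOf, dif_pos hex]
    have h1 : (hex.choose, b) ∈ F.filter (fun p => p.2 = b) :=
      mem_filter.mpr ⟨hex.choose_spec, rfl⟩
    have h2 : (a, b) ∈ F.filter (fun p => p.2 = b) := mem_filter.mpr ⟨h, rfl⟩
    have := Finset.card_le_one.mp (hdeg b) _ h1 _ h2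
    exact congrArg some (congrArg Prod.fst this)

lemma indeg_arcsOf (x : α → Option α) :
    ∀ b, ((arcsOf x).filter fun p => p.2 = b).card ≤ 1 := by
  intro b
  apply Finset.card_le_one.mpr
  intro p hp q hq
  obtain ⟨hp1, hp2⟩ := mem_filter.mp hp
  obtain ⟨hq1, hq2⟩ := mem_filter.mp hq
  have hxp := mem_arcsOf.mp hp1
  have hxq := mem_arcsOf.mp hq1
  rw [hp2] at hxp
  rw [hq2] at hxq
  have : p.1 = q.1 := Option.some_injective _ (hxp.symm.trans hxq)
  exact Prod.ext this (hp2.trans hq2.symm)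

lemma expansion_to_forests :
    ∑ x ∈ Fintype.piFinset (idxA i), (∏ r, coefC ε lam i x r) * (rowM i j x).det
      = ∑ F ∈ divForestsFromTo i j, arcWt ε F * lam ^ ((rootSet F).erase i).card := by
  have hmem : ∀ x ∈ Fintype.piFinset (idxA i),
      x i = none ∧ ∀ r k, x r = some k → k ≠ r := by
    intro x hx
    have hx' := Fintype.mem_piFinset.mp hx
    constructor
    · have := hx' i
      rw [idxA, if_pos rfl] at this
      simpa using this
    · intro r k hk
      by_cases hr : r = i
      · have := hx' i
        rw [idxA, if_pos rfl] at this
        rw [hr] at hk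
        rw [hk] at this
        simp at this
      · have := hx' r
        rw [idxA, if_neg hr, hk] at this
        rcases mem_insert.mp this with h | h
        · exact absurd h (by simp)
        · obtain ⟨a, ha, haa⟩ := mem_image.mp h
          have : a = k := Option.some_injective _ haa
          exact this ▸ (mem_erase.mp ha).1
  -- rewrite the determinant factor as an indicator
  have step1 : ∑ x ∈ Fintype.piFinset (idxA i),
      (∏ r, coefC ε lam i x r) * (rowM i j x).det
      = ∑ x ∈ (Fintype.piFinset (idxA i)).filter
          (fun x => Acyc x ∧ Relation.ReflTransGen (RelF x) i j),
          ∏ r, coefC ε lam i x r := by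
    rw [Finset.sum_filter]
    apply Finset.sum_congr rfl
    intro x hx
    obtain ⟨hxi, hxne⟩ := hmem x hx
    rw [det_rowM i j x hxi hxne]
    split_ifs with h
    · rw [mul_one]
    · rw [mul_zero]
  rw [step1]
  -- now a bijection with forests
  apply Finset.sum_nbij' arcsOf choiceOf
  · -- maps into divForestsFromTo
    intro x hx
    obtain ⟨hxmem, hcond⟩ := mem_filter.mp hx
    obtain ⟨hxi, hxne⟩ := hmem x hxmem
    refine mem_filter.mpr ⟨mem_univ _, ⟨?_, indeg_arcsOf x, ?_⟩, ?_, ?_⟩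
    · intro p hp
      exact hxne p.2 p.1 (mem_arcsOf.mp hp)
    · intro a h
      exact hcond.1 a (Relation.TransGen.mono (fun u v huv => (mem_arcsOf (p := (u, v))).mp huv) _ _ h)
    · intro a ha
      have := mem_arcsOf.mp ha
      rw [hxi] at this
      exact absurd this (by simp)
    · exact Relation.ReflTransGen.mono (fun u v huv => mem_arcsOf.mpr huv) _ _ hcond.2
  · -- maps back
    intro F hF
    obtain ⟨_, hforest, hroot, hpath⟩ := mem_filter.mp hF
    have hdeg := hforest.2.1
    have hrel' : ∀ a b, choiceOf F b = some a ↔ (a, b) ∈ F :=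
      fun a b => choiceOf_eq_some hdeg
    refine mem_filter.mpr ⟨Fintype.mem_piFinset.mpr ?_, ?_, ?_⟩
    · intro r
      by_cases hr : r = i
      · rw [idxA, hr, if_pos rfl]
        have : choiceOf F i = none := by
          rw [choiceOf, dif_neg]
          push_neg
          exact fun a => hroot a
        rw [this]
        exact mem_singleton_self none
      · rw [idxA, if_neg hr]
        rw [choiceOf]
        split_ifs with hex
        · have hspec := hex.choose_spec
          have hne : hex.choose ≠ r := hforest.1 _ hspec
          exact mem_insert_of_mem (mem_image.mpr ⟨hex.choose,
            mem_erase.mpr ⟨hne, mem_univ _⟩, rfl⟩)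
        · exact mem_insert_self none _
    · intro a h
      exact hforest.2.2 a (Relation.TransGen.mono (fun u v huv => (hrel' u v).mp huv) _ _ h)
    · exact Relation.ReflTransGen.mono (fun u v huv => (hrel' u v).mpr huv) _ _ hpath
  · -- left inverse
    intro x hx
    obtain ⟨hxmem, _⟩ := mem_filter.mp hx
    funext r
    cases hxr : x r with
    | none =>
      rw [choiceOf, dif_neg]
      push_neg
      intro a ha
      have := mem_arcsOf.mp ha
      rw [hxr] at this
      exact absurd this (by simp)
    | some k =>
      exact (choiceOf_eq_some (indeg_arcsOf x)).mpr (mem_arcsOf.mpr hxr)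
  · -- right inverse
    intro F hF
    obtain ⟨_, hforest, _, _⟩ := mem_filter.mp hF
    ext p
    rw [mem_arcsOf]
    exact choiceOf_eq_some hforest.2.1
  · -- values agree
    intro x hx
    obtain ⟨hxmem, _⟩ := mem_filter.mp hx
    obtain ⟨hxi, hxne⟩ := hmem x hxmem
    rw [← Finset.prod_filter_mul_prod_filter_not univ (fun r => (x r).isSome)
      (coefC ε lam i x)]
    have hfact1 : ∏ r ∈ univ.filter (fun r => (x r).isSome), coefC ε lam i x r
        = arcWt ε (arcsOf x) := by
      rw [arcWt]
      apply Finset.prod_nbij' (fun r => ((x r).getD r, r)) (fun p => p.2)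
      · intro r hr
        have hrs := (mem_filter.mp hr).2
        exact mem_arcsOf.mpr (pm_some hrs)
      · intro p hp
        exact mem_filter.mpr ⟨mem_univ _, by rw [mem_arcsOf.mp hp]; rfl⟩
      · intro r hr; rfl
      · intro p hp
        have h := mem_arcsOf.mp hp
        rw [h]
        simp
      · intro r hr
        have hrs := (mem_filter.mp hr).2
        obtain ⟨k, hk⟩ := Option.isSome_iff_exists.mp hrs
        simp [coefC, hk]
    have hiNf : i ∈ univ.filter (fun r => ¬ (x r).isSome) := by
      refine mem_filter.mpr ⟨mem_univ _, ?_⟩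
      rw [hxi]
      simp
    have hfact2 : ∏ r ∈ univ.filter (fun r => ¬ (x r).isSome), coefC ε lam i x r
        = lam ^ ((rootSet (arcsOf x)).erase i).card := by
      rw [← Finset.mul_prod_erase _ _ hiNf]
      have hci : coefC ε lam i x i = 1 := by
        simp [coefC, hxi]
      rw [hci, one_mul]
      have hset : (univ.filter (fun r => ¬ (x r).isSome)).erase i
          = (rootSet (arcsOf x)).erase i := by
        ext r
        simp only [mem_erase, mem_filter, mem_univ, true_and, rootSet]
        constructor
        · intro ⟨hri, hrs⟩
          refine ⟨hri, ?_⟩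
          intro a ha
          have h := mem_arcsOf.mp ha
          rw [h] at hrs
          exact hrs rfl
        · intro ⟨hri, hrs⟩
          refine ⟨hri, ?_⟩
          intro hsome
          obtain ⟨k, hk⟩ := Option.isSome_iff_exists.mp hsome
          exact hrs k (mem_arcsOf.mpr hk)
      have hconst : ∀ r ∈ (univ.filter (fun r => ¬ (x r).isSome)).erase i,
          coefC ε lam i x r = lam := by
        intro r hr
        obtain ⟨hri, hrmem⟩ := mem_erase.mp hr
        have hrs := (mem_filter.mp hrmem).2
        have hxr : x r = none := Option.not_isSome_iff_eq_none.mp hrs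
        simp [coefC, hxr, hri]
      rw [Finset.prod_congr rfl hconst, Finset.prod_const, hset]
    rw [hfact1, hfact2]


lemma rhs_collapse :
    ∑ φ ∈ ((univ : Finset α) \ {i, j}).powerset,
        (∑ F ∈ divForestsRootedAt (insert i φ) ∩ divForestsFromTo i j, arcWt ε F)
          * lam ^ φ.card
      = ∑ F ∈ divForestsFromTo i j, arcWt ε F * lam ^ ((rootSet F).erase i).card := by
  have h1 : ∀ φ : Finset α, divForestsRootedAt (insert i φ) ∩ divForestsFromTo i j
      = (divForestsFromTo i j).filter (fun F => rootSet F = insert i φ) := by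
    intro φ
    ext F
    simp only [mem_inter, mem_filter, divForestsRootedAt, divForestsFromTo, mem_univ,
      true_and]
    tauto
  have h2 : ∀ φ ∈ ((univ : Finset α) \ {i, j}).powerset,
      (∑ F ∈ divForestsRootedAt (insert i φ) ∩ divForestsFromTo i j, arcWt ε F)
          * lam ^ φ.card
      = ∑ F ∈ divForestsFromTo i j,
          (if rootSet F = insert i φ then arcWt ε F * lam ^ φ.card else 0) := by
    intro φ _
    rw [h1, Finset.sum_filter, Finset.sum_mul]
    apply Finset.sum_congr rfl
    intro F _
    split_ifs <;> simp
  rw [Finset.sum_congr rfl h2, Finset.sum_comm]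
  apply Finset.sum_congr rfl
  intro F hF
  obtain ⟨_, hforest, hroot, hpath⟩ := mem_filter.mp hF
  have hiroot : i ∈ rootSet F := mem_filter.mpr ⟨mem_univ _, hroot⟩
  have hφ0mem : (rootSet F).erase i ∈ ((univ : Finset α) \ {i, j}).powerset := by
    apply mem_powerset.mpr
    intro r hr
    obtain ⟨hri, hrmem⟩ := mem_erase.mp hr
    rw [mem_sdiff]
    refine ⟨mem_univ _, ?_⟩
    simp only [mem_insert, mem_singleton]
    push_neg
    refine ⟨hri, ?_⟩
    intro hrj
    subst hrj
    rcases Relation.ReflTransGen.cases_tail hpath with h | ⟨c, _, hc⟩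
    · exact hri h
    · exact (mem_filter.mp hrmem).2 c hc
  rw [Finset.sum_eq_single_of_mem _ hφ0mem]
  · rw [if_pos (Finset.insert_erase hiroot).symm]
  · intro φ hφ hφne
    rw [if_neg]
    intro hcontra
    apply hφne
    have hiφ : i ∉ φ := by
      intro hiφ
      have h := mem_powerset.mp hφ hiφ
      rw [mem_sdiff] at h
      exact h.2 (by simp)
    rw [hcontra, Finset.erase_insert hiφ]


end
end ForestAux


/-- **Lemma 5** (forest expansion of the cofactors of the Laplacian characteristic
matrix). For `W_λ = λI + L(Γ)` the cofactor of the `(i,j)` entry satisfies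
`W_λ^{ij} = ∑_{φ ⊆ V∖{i,j}} ε(𝔉_{φ∪{i}}^{i→j}) λ^{|φ|}` for every real `λ`. -/
theorem charmatrix_cofactor_eq_forests (n : ℕ) (ε : Fin (n + 1) → Fin (n + 1) → ℝ)
    (hdiag : ∀ a, ε a a = 0) (i j : Fin (n + 1)) (lam : ℝ) :
    cofactor (lam • (1 : Matrix (Fin (n + 1)) (Fin (n + 1)) ℝ) + kirchhoff ε) i j
      = ∑ φ ∈ ((Finset.univ : Finset (Fin (n + 1))) \ {i, j}).powerset,
          (∑ F ∈ divForestsRootedAt (insert i φ) ∩ divForestsFromTo i j, arcWt ε F)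
            * lam ^ φ.card := by
  rw [← ForestAux.cofactor_eq_det_updateRow']
  rw [ForestAux.det_expansion]
  rw [ForestAux.expansion_to_forests]
  exact (ForestAux.rhs_collapse ε lam i j).symm
end
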